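/- arXiv:2012.11306 — 8 statements merged into one kernel-verified Lean document; each statement's English description precedes it below -/
import Mathlib

section
/- Let q be a prime power. Then #M(𝔽_q) = q³ + q² + M̃₂, i.e. the number of 𝔽_q-points of the threefold M equals q³ + q² plus the extended second moment of the family y² = P(x)k + Q(x). (Theorem 2.2 of the paper.) -/
open Finset

noncomputable def chiF (F : Type*) [Field F] [Fintype F] [DecidableEq F] (c : F) : ℤ :=
  ((univ.filter (fun y : F => y ^ 2 = c)).card : ℤ) - 1

section aux
variable (F : Type*) [Field F] [Fintype F] [DecidableEq F]

lemma chiF_eq_char (hF : ringChar F ≠ 2) (c : F) : chiF F c = quadraticChar F c := by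
  have := quadraticChar_card_sqrts hF c
  rw [Set.toFinset_setOf] at this
  simp [chiF, this]

lemma chiF_char2 (hF : ringChar F = 2) (c : F) : chiF F c = 0 := by
  have h2 : (2 : F) = 0 := by
    rw [show (2 : F) = ((2 : ℕ) : F) by push_cast; ring, ← hF]
    exact ringChar.Nat.cast_ringChar
  have inj : Function.Injective (fun y : F => y ^ 2) := by
    intro x y h
    simp only at h
    have hz : (x - y) ^ 2 = 0 := by linear_combination h + (y ^ 2 - x * y) * h2
    have := pow_eq_zero_iff (n := 2) (by norm_num) |>.mp hz
    exact sub_eq_zero.mp this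
  have surj := (Finite.injective_iff_surjective).mp inj
  obtain ⟨y, hy⟩ := surj c
  have : (univ.filter (fun y : F => y ^ 2 = c)) = {y} := by
    ext z
    simp only [mem_filter, mem_univ, true_and, mem_singleton]
    exact ⟨fun hz => inj (hz.trans hy.symm), fun hz => hz ▸ hy⟩
  simp [chiF, this]

lemma chiF_mul (a b : F) : chiF F (a * b) = chiF F a * chiF F b := by
  by_cases hF : ringChar F = 2
  · simp [chiF_char2 F hF]
  · simp [chiF_eq_char F hF, map_mul]

lemma sum_ite_sq (c : F) : ∑ y : F, (if c = y ^ 2 then (1 : ℤ) else 0) = 1 + chiF F c := by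
  rw [Finset.sum_boole]
  have : (univ.filter (fun y : F => c = y ^ 2)) = (univ.filter (fun y : F => y ^ 2 = c)) := by
    simp [eq_comm]
  rw [this]
  simp [chiF]

lemma sum_ite_sq' (c : F) : ∑ y : F, (if y ^ 2 = c then (1 : ℤ) else 0) = 1 + chiF F c := by
  rw [← sum_ite_sq F c]
  simp [eq_comm]

lemma cardsum {α : Type*} [Fintype α] [DecidableEq α] (p : α → Prop) [DecidablePred p] :
    (((univ : Finset α).filter p).card : ℤ) = ∑ v : α, (if p v then (1 : ℤ) else 0) := by
  rw [Finset.card_filter]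
  push_cast
  rfl

end aux

/-- **Theorem 2.2.** For a finite field `𝔽_q` (`q` a prime power) and a pencil of cubics
`y² = P(x)k + Q(x)` with `deg P, deg Q ≤ 3`, the number of `𝔽_q`-points of the
Kummer threefold `M` equals `q³ + q² + M̃₂`, where `M̃₂` is the extended second
moment of the family. -/
theorem point_count_of_threefold_eq_second_moment
    (F : Type*) [Field F] [Fintype F] [DecidableEq F]
    (q : ℕ) (hq : q = Fintype.card F)
    (a₀ a₁ a₂ a₃ b₀ b₁ b₂ b₃ : F)
    (P Q : F → F)
    (hP : ∀ x, P x = a₃ * x ^ 3 + a₂ * x ^ 2 + a₁ * x + a₀)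
    (hQ : ∀ x, Q x = b₃ * x ^ 3 + b₂ * x ^ 2 + b₁ * x + b₀)
    (a_ : F → ℤ)
    (ha : ∀ k, a_ k =
      (q : ℤ) - ((univ : Finset (F × F)).filter
        (fun xy => xy.2 ^ 2 = P xy.1 * k + Q xy.1)).card)
    (aInf : ℤ)
    (haInf : aInf =
      (q : ℤ) - ((univ : Finset (F × F)).filter
        (fun xy => xy.2 ^ 2 = P xy.1)).card)
    (M₂ : ℤ) (hM₂ : M₂ = (∑ k : F, (a_ k) ^ 2) + aInf ^ 2)
    (MCount : ℕ)
    (hMCount : MCount =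
      ((univ : Finset (F × F × F × F)).filter
        (fun v => (P v.1 * v.2.2.1 + Q v.1) * (P v.2.1 * v.2.2.1 + Q v.2.1)
          = v.2.2.2 ^ 2)).card
      + ((univ : Finset (F × F × F)).filter
        (fun v => P v.1 * P v.2.1 = v.2.2 ^ 2)).card) :
    (MCount : ℤ) = (q : ℤ) ^ 3 + (q : ℤ) ^ 2 + M₂ := by
  have hcard : (Fintype.card F : ℤ) = (q : ℤ) := by exact_mod_cast hq.symm
  -- card as int sum of indicators
  -- a_ k in terms of chi sums
  have ha' : ∀ k, a_ k = - ∑ x : F, chiF F (P x * k + Q x) := by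
    intro k
    rw [ha k, cardsum]
    rw [Fintype.sum_prod_type]
    simp only [sum_ite_sq' F]
    rw [Finset.sum_add_distrib]
    simp [hcard]
  have haInf' : aInf = - ∑ x : F, chiF F (P x) := by
    rw [haInf, cardsum]
    rw [Fintype.sum_prod_type]
    simp only [sum_ite_sq' F]
    rw [Finset.sum_add_distrib]
    simp [hcard]
  rw [hMCount]
  push_cast
  rw [cardsum, cardsum]
  rw [Fintype.sum_prod_type, Fintype.sum_prod_type]
  simp only [Fintype.sum_prod_type]
  simp only [sum_ite_sq F]
  simp only [Finset.sum_add_distrib, Finset.sum_const, Finset.card_univ, nsmul_eq_mul, mul_one,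
    chiF_mul F]
  -- now handle the chi double/triple sums
  have key1 : (∑ x₁ : F, ∑ x₂ : F, ∑ k : F,
      chiF F (P x₁ * k + Q x₁) * chiF F (P x₂ * k + Q x₂)) = ∑ k : F, (a_ k) ^ 2 := by
    have step : (∑ x₁ : F, ∑ x₂ : F, ∑ k : F,
        chiF F (P x₁ * k + Q x₁) * chiF F (P x₂ * k + Q x₂))
        = ∑ k : F, ∑ x₁ : F, ∑ x₂ : F,
        chiF F (P x₁ * k + Q x₁) * chiF F (P x₂ * k + Q x₂) := by
      rw [Finset.sum_congr rfl (fun (x₁ : F) _ => Finset.sum_comm)]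
      exact Finset.sum_comm
    rw [step]
    refine Finset.sum_congr rfl (fun k _ => ?_)
    rw [ha' k, ← Finset.sum_mul_sum]
    ring
  have key2 : (∑ x₁ : F, ∑ x₂ : F, chiF F (P x₁) * chiF F (P x₂)) = aInf ^ 2 := by
    rw [← Finset.sum_mul_sum, haInf']
    ring
  rw [key1, key2, hM₂, hcard]
  ring
end

section
/- Let q be an odd prime power. Then #M(𝔽_q) = q³ + q² − q·#Δ(𝔽_q) + q·#C(𝔽_q) + q·(Σ_{x ∈ 𝔽_q, P(x)=0} φ_q(Q(x)))². (First formula of Theorem 2.3 of the paper.) -/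
open Finset

section Helpers
variable {F : Type*} [Field F] [Fintype F] [DecidableEq F]

private lemma card_filter_int {α : Type*} [Fintype α]
    (p : α → Prop) [DecidablePred p] :
    (((univ : Finset α).filter p).card : ℤ) = ∑ a : α, if p a then (1:ℤ) else 0 := by
  rw [Finset.card_filter]
  push_cast
  rfl

private lemma sqrt_count (hF : ringChar F ≠ 2) (a : F) :
    (∑ y : F, if a = y ^ 2 then (1:ℤ) else 0) = quadraticChar F a + 1 := by
  have h := quadraticChar_card_sqrts hF a
  rw [Set.toFinset_setOf] at h
  rw [← h, card_filter_int]
  exact Finset.sum_congr rfl fun y _ => if_congr eq_comm rfl rfl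

private lemma sum_linear (hF : ringChar F ≠ 2) {p : F} (hp : p ≠ 0) (c : F) :
    ∑ k : F, quadraticChar F (p * k + c) = 0 := by
  rw [← quadraticChar_sum_zero hF]
  exact Fintype.sum_bijective _ (((Equiv.mulLeft₀ p hp).trans (Equiv.addRight c)).bijective)
    _ _ (fun k => rfl)

private lemma sum_shift (hF : ringChar F ≠ 2) {c : F} (hc : c ≠ 0) :
    ∑ k : F, quadraticChar F (k * (k + c)) = -1 := by
  have h0 : ∑ k : F, quadraticChar F (k * (k + c))
      = ∑ k ∈ (univ : Finset F).erase 0, quadraticChar F (k * (k + c)) := by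
    rw [Finset.sum_erase]
    simp [quadraticChar_zero]
  have h1 : ∀ k ∈ (univ : Finset F).erase 0,
      quadraticChar F (k * (k + c)) = quadraticChar F (1 + c / k) := by
    intro k hk
    have hk0 : k ≠ 0 := Finset.ne_of_mem_erase hk
    have : k * (k + c) = k ^ 2 * (1 + c / k) := by field_simp
    rw [this, map_mul, quadraticChar_sq_one' hk0, one_mul]
  rw [h0, Finset.sum_congr rfl h1]
  have h2 : ∑ k ∈ (univ : Finset F).erase 0, quadraticChar F (1 + c / k)
      = ∑ t ∈ (univ : Finset F).erase 1, quadraticChar F t := by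
    apply Finset.sum_nbij' (fun k => 1 + c / k) (fun t => c / (t - 1))
    · intro k hk
      have hk0 : k ≠ 0 := Finset.ne_of_mem_erase hk
      simp only [Finset.mem_erase, Finset.mem_univ, and_true]
      intro h
      apply hk0
      have : c / k = 0 := by linear_combination h
      rcases div_eq_zero_iff.mp this with h' | h'
      · exact absurd h' hc
      · exact h'
    · intro t ht
      have ht1 : t ≠ 1 := Finset.ne_of_mem_erase ht
      simp only [Finset.mem_erase, Finset.mem_univ, and_true]
      exact div_ne_zero hc (sub_ne_zero_of_ne ht1)
    · intro k hk
      have hk0 : k ≠ 0 := Finset.ne_of_mem_erase hk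
      field_simp
      rw [add_sub_cancel_left, div_self hc]
    · intro t ht
      have ht1 : t ≠ 1 := Finset.ne_of_mem_erase ht
      have : t - 1 ≠ 0 := sub_ne_zero_of_ne ht1
      field_simp
      ring
    · intro k _; rfl
  rw [h2]
  have h3 := quadraticChar_sum_zero (F := F) hF
  have h4 : ∑ t ∈ (univ : Finset F).erase 1, quadraticChar F t
      = (∑ t : F, quadraticChar F t) - quadraticChar F 1 := by
    rw [← Finset.sum_erase_add (univ : Finset F) _ (Finset.mem_univ 1)]
    ring
  rw [h4, h3]
  norm_num

private lemma sum_two_roots (hF : ringChar F ≠ 2) (a b : F) :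
    ∑ k : F, quadraticChar F ((k + a) * (k + b))
      = if b - a = 0 then (Fintype.card F : ℤ) - 1 else -1 := by
  have key : ∑ k : F, quadraticChar F ((k + a) * (k + b))
      = ∑ m : F, quadraticChar F (m * (m + (b - a))) := by
    refine Fintype.sum_bijective (fun k => k + a) (Equiv.addRight a).bijective _ _ (fun k => ?_)
    congr 1
    ring
  rw [key]
  by_cases hc : b - a = 0
  · rw [if_pos hc]
    have : ∀ m : F, quadraticChar F (m * (m + (b - a))) = if m = 0 then 0 else 1 := by
      intro m
      by_cases hm : m = 0
      · simp [hm, quadraticChar_zero]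
      · rw [hc, add_zero, ← pow_two, quadraticChar_sq_one' hm, if_neg hm]
    rw [Finset.sum_congr rfl fun m _ => this m]
    have h5 : (∑ m : F, if m = 0 then (0:ℤ) else 1)
        = ∑ m : F, ((1:ℤ) - if m = 0 then 1 else 0) :=
      Finset.sum_congr rfl (fun m _ => by split_ifs <;> ring)
    rw [h5, Finset.sum_sub_distrib, Finset.sum_const,
      Finset.sum_ite_eq' univ (0:F) (fun _ => (1:ℤ))]
    simp [Finset.card_univ]
  · rw [if_neg hc]
    exact sum_shift hF hc

private lemma pair_sum (hF : ringChar F ≠ 2) (p₁ q₁ p₂ q₂ : F) :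
    (∑ k : F, quadraticChar F ((p₁ * k + q₁) * (p₂ * k + q₂))) + quadraticChar F (p₁ * p₂)
      = (Fintype.card F : ℤ) *
        ((if p₁ * q₂ - p₂ * q₁ = 0 then quadraticChar F (p₁ * p₂) else 0)
          + (if p₁ = 0 ∧ p₂ = 0 then quadraticChar F q₁ * quadraticChar F q₂ else 0)) := by
  by_cases h₁ : p₁ = 0
  · by_cases h₂ : p₂ = 0
    · subst h₁; subst h₂
      simp only [zero_mul, zero_add, mul_zero, zero_sub, neg_zero, if_pos rfl,
        and_self, if_pos, quadraticChar_zero, ← map_mul]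
      rw [Finset.sum_const, Finset.card_univ]
      push_cast
      ring
    · subst h₁
      have hz : quadraticChar F ((0:F) * p₂) = 0 := by rw [zero_mul, quadraticChar_zero]
      have hsum : ∑ k : F, quadraticChar F ((0 * k + q₁) * (p₂ * k + q₂)) = 0 := by
        have : ∀ k : F, quadraticChar F ((0 * k + q₁) * (p₂ * k + q₂))
            = quadraticChar F q₁ * quadraticChar F (p₂ * k + q₂) := by
          intro k; rw [zero_mul, zero_add, map_mul]
        rw [Finset.sum_congr rfl fun k _ => this k, ← Finset.mul_sum,
          sum_linear hF h₂, mul_zero]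
      rw [hsum, hz, zero_add]
      split_ifs <;> simp_all
  · by_cases h₂ : p₂ = 0
    · subst h₂
      have hz : quadraticChar F (p₁ * (0:F)) = 0 := by rw [mul_zero, quadraticChar_zero]
      have hsum : ∑ k : F, quadraticChar F ((p₁ * k + q₁) * (0 * k + q₂)) = 0 := by
        have : ∀ k : F, quadraticChar F ((p₁ * k + q₁) * (0 * k + q₂))
            = quadraticChar F q₂ * quadraticChar F (p₁ * k + q₁) := by
          intro k; rw [zero_mul, zero_add, map_mul, mul_comm]
        rw [Finset.sum_congr rfl fun k _ => this k, ← Finset.mul_sum,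
          sum_linear hF h₁, mul_zero]
      rw [hsum, hz, zero_add]
      split_ifs <;> simp_all
    · -- both nonzero
      have key : ∀ k : F, quadraticChar F ((p₁ * k + q₁) * (p₂ * k + q₂))
          = quadraticChar F (p₁ * p₂) * quadraticChar F ((k + q₁ / p₁) * (k + q₂ / p₂)) := by
        intro k
        rw [← map_mul]
        congr 1
        field_simp
      rw [Finset.sum_congr rfl fun k _ => key k, ← Finset.mul_sum, sum_two_roots hF]
      rw [if_neg (fun (h : p₁ = 0 ∧ p₂ = 0) => h₁ h.1), add_zero]
      have hiff : q₂ / p₂ - q₁ / p₁ = 0 ↔ p₁ * q₂ - p₂ * q₁ = 0 := by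
        rw [sub_eq_zero, sub_eq_zero, div_eq_div_iff h₂ h₁]
        constructor <;> intro h <;> linear_combination h
      by_cases hd : p₁ * q₂ - p₂ * q₁ = 0
      · rw [if_pos (hiff.mpr hd), if_pos hd]; ring
      · rw [if_neg (fun (h : q₂ / p₂ - q₁ / p₁ = 0) => hd (hiff.mp h)), if_neg hd]; ring

end Helpers

open Finset

/-- **Theorem 2.3, first formula.** For an odd prime power `q`,
`#M(𝔽_q) = q³ + q² − q·#Δ(𝔽_q) + q·#C(𝔽_q) + q·(Σ_{P(x)=0} φ_q(Q(x)))²`. -/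
theorem point_count_of_threefold_via_curves
    (F : Type*) [Field F] [Fintype F] [DecidableEq F]
    (q : ℕ) (hq : q = Fintype.card F) (hodd : Odd q)
    (a₀ a₁ a₂ a₃ b₀ b₁ b₂ b₃ : F)
    (P Q : F → F)
    (hP : ∀ x, P x = a₃ * x ^ 3 + a₂ * x ^ 2 + a₁ * x + a₀)
    (hQ : ∀ x, Q x = b₃ * x ^ 3 + b₂ * x ^ 2 + b₁ * x + b₀)
    (Δ : F → F → F) (hΔ : ∀ x₁ x₂, Δ x₁ x₂ = P x₁ * Q x₂ - P x₂ * Q x₁)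
    (ΔCount : ℕ)
    (hΔCount : ΔCount =
      ((univ : Finset (F × F)).filter (fun v => Δ v.1 v.2 = 0)).card)
    (CCount : ℕ)
    (hCCount : CCount =
      ((univ : Finset (F × F × F)).filter
        (fun v => Δ v.1 v.2.1 = 0 ∧ P v.1 * P v.2.1 = v.2.2 ^ 2)).card)
    (MCount : ℕ)
    (hMCount : MCount =
      ((univ : Finset (F × F × F × F)).filter
        (fun v => (P v.1 * v.2.2.1 + Q v.1) * (P v.2.1 * v.2.2.1 + Q v.2.1)
          = v.2.2.2 ^ 2)).card
      + ((univ : Finset (F × F × F)).filter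
        (fun v => P v.1 * P v.2.1 = v.2.2 ^ 2)).card) :
    (MCount : ℤ) = (q : ℤ) ^ 3 + (q : ℤ) ^ 2 - (q : ℤ) * ΔCount + (q : ℤ) * CCount
      + (q : ℤ) * (∑ x ∈ (univ : Finset F).filter (fun x => P x = 0),
          quadraticChar F (Q x)) ^ 2 := by
  have hF : ringChar F ≠ 2 := by
    intro h
    have h2 := FiniteField.even_card_iff_char_two.mp h
    rw [← hq] at h2
    rw [Nat.odd_iff] at hodd
    omega
  have hcard : (Fintype.card F : ℤ) = (q : ℤ) := by rw [hq]
  set χ := quadraticChar F with hχ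
  -- per-pair key identity
  have key : ∀ x₁ x₂ : F,
      (∑ k : F, χ ((P x₁ * k + Q x₁) * (P x₂ * k + Q x₂))) + χ (P x₁ * P x₂)
        = (q : ℤ) * ((if Δ x₁ x₂ = 0 then χ (P x₁ * P x₂) else 0)
            + (if P x₁ = 0 ∧ P x₂ = 0 then χ (Q x₁) * χ (Q x₂) else 0)) := by
    intro x₁ x₂
    rw [← hcard, hΔ x₁ x₂]
    exact pair_sum hF (P x₁) (Q x₁) (P x₂) (Q x₂)
  -- first summand of MCount
  have hM1 : ((((univ : Finset (F × F × F × F)).filter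
        (fun v => (P v.1 * v.2.2.1 + Q v.1) * (P v.2.1 * v.2.2.1 + Q v.2.1)
          = v.2.2.2 ^ 2)).card : ℤ))
      = ∑ x₁ : F, ∑ x₂ : F,
          ((∑ k : F, χ ((P x₁ * k + Q x₁) * (P x₂ * k + Q x₂))) + (q : ℤ)) := by
    rw [card_filter_int]
    simp only [Fintype.sum_prod_type]
    refine Finset.sum_congr rfl fun x₁ _ => Finset.sum_congr rfl fun x₂ _ => ?_
    have : ∀ k : F, (∑ y : F,
        if (P x₁ * k + Q x₁) * (P x₂ * k + Q x₂) = y ^ 2 then (1:ℤ) else 0)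
        = χ ((P x₁ * k + Q x₁) * (P x₂ * k + Q x₂)) + 1 := fun k => sqrt_count hF _
    rw [Finset.sum_congr rfl fun k _ => this k, Finset.sum_add_distrib,
      Finset.sum_const, Finset.card_univ, nsmul_eq_mul, mul_one, hcard]
  -- second summand of MCount
  have hM2 : ((((univ : Finset (F × F × F)).filter
        (fun v => P v.1 * P v.2.1 = v.2.2 ^ 2)).card : ℤ))
      = ∑ x₁ : F, ∑ x₂ : F, (χ (P x₁ * P x₂) + 1) := by
    rw [card_filter_int]
    simp only [Fintype.sum_prod_type]
    exact Finset.sum_congr rfl fun x₁ _ => Finset.sum_congr rfl fun x₂ _ => sqrt_count hF _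
  -- CCount
  have hC : (CCount : ℤ)
      = ∑ x₁ : F, ∑ x₂ : F, (if Δ x₁ x₂ = 0 then χ (P x₁ * P x₂) + 1 else 0) := by
    rw [hCCount, card_filter_int]
    simp only [Fintype.sum_prod_type]
    refine Finset.sum_congr rfl fun x₁ _ => Finset.sum_congr rfl fun x₂ _ => ?_
    by_cases hd : Δ x₁ x₂ = 0
    · rw [if_pos hd, ← sqrt_count hF (P x₁ * P x₂)]
      exact Finset.sum_congr rfl fun y _ => by simp [hd]
    · simp [hd]
  -- ΔCount
  have hD : (ΔCount : ℤ)
      = ∑ x₁ : F, ∑ x₂ : F, (if Δ x₁ x₂ = 0 then (1:ℤ) else 0) := by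
    rw [hΔCount, card_filter_int]
    simp only [Fintype.sum_prod_type]
  -- the square term
  set E : ℤ := ∑ x ∈ (univ : Finset F).filter (fun x => P x = 0), χ (Q x) with hE
  have hE' : E = ∑ x : F, (if P x = 0 then χ (Q x) else 0) := by
    rw [hE, Finset.sum_filter]
  have hB : (∑ x₁ : F, ∑ x₂ : F,
      (if P x₁ = 0 ∧ P x₂ = 0 then χ (Q x₁) * χ (Q x₂) else 0)) = E ^ 2 := by
    have step : ∀ x₁ x₂ : F,
        (if P x₁ = 0 ∧ P x₂ = 0 then χ (Q x₁) * χ (Q x₂) else 0)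
          = (if P x₁ = 0 then χ (Q x₁) else 0) * (if P x₂ = 0 then χ (Q x₂) else 0) := by
      intro x₁ x₂
      by_cases h1 : P x₁ = 0 <;> by_cases h2 : P x₂ = 0 <;> simp [h1, h2]
    simp_rw [step]
    rw [← Finset.sum_mul_sum, ← hE', sq]
  -- assemble
  have hA : (∑ x₁ : F, ∑ x₂ : F, (if Δ x₁ x₂ = 0 then χ (P x₁ * P x₂) else 0))
      = (CCount : ℤ) - (ΔCount : ℤ) := by
    rw [hC, hD, ← Finset.sum_sub_distrib]
    refine Finset.sum_congr rfl fun x₁ _ => ?_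
    rw [← Finset.sum_sub_distrib]
    refine Finset.sum_congr rfl fun x₂ _ => ?_
    by_cases hd : Δ x₁ x₂ = 0 <;> simp [hd]
  have hMfinal : (MCount : ℤ)
      = ∑ x₁ : F, ∑ x₂ : F,
          (((∑ k : F, χ ((P x₁ * k + Q x₁) * (P x₂ * k + Q x₂))) + χ (P x₁ * P x₂))
            + ((q : ℤ) + 1)) := by
    rw [hMCount]
    push_cast
    rw [hM1, hM2, ← Finset.sum_add_distrib]
    refine Finset.sum_congr rfl fun x₁ _ => ?_
    rw [← Finset.sum_add_distrib]
    refine Finset.sum_congr rfl fun x₂ _ => ?_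
    ring
  rw [hMfinal]
  have expand : ∀ x₁ x₂ : F,
      (((∑ k : F, χ ((P x₁ * k + Q x₁) * (P x₂ * k + Q x₂))) + χ (P x₁ * P x₂))
        + ((q : ℤ) + 1))
      = (q : ℤ) * (if Δ x₁ x₂ = 0 then χ (P x₁ * P x₂) else 0)
        + (q : ℤ) * (if P x₁ = 0 ∧ P x₂ = 0 then χ (Q x₁) * χ (Q x₂) else 0)
        + ((q : ℤ) + 1) := by
    intro x₁ x₂
    rw [key x₁ x₂]
    ring
  simp_rw [expand]
  rw [Finset.sum_congr rfl (fun (x₁ : F) _ => by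
    rw [Finset.sum_add_distrib, Finset.sum_add_distrib, ← Finset.mul_sum, ← Finset.mul_sum,
      Finset.sum_const, Finset.card_univ] :
    ∀ x₁ ∈ (univ : Finset F), _ = _)]
  rw [Finset.sum_add_distrib, Finset.sum_add_distrib, ← Finset.mul_sum, ← Finset.mul_sum,
    Finset.sum_const, Finset.card_univ, hA, hB]
  push_cast [← hcard]
  ring
end

section
/- Let q be an odd prime power, P, Q ∈ 𝔽_q[x] of degree at most 3, and (x₁,x₂) ∈ 𝔽_q². Set N(x₁,x₂) = #{(k,y) ∈ 𝔽_q² : (P(x₁)k + Q(x₁))(P(x₂)k + Q(x₂)) = y²}. (a) If Δ(x₁,x₂) ≠ 0 then N(x₁,x₂) = q − φ_q(P(x₁)P(x₂)). (b) If Δ(x₁,x₂) = 0 and (P(x₁), P(x₂)) ≠ (0,0) then N(x₁,x₂) = q + (q−1)·φ_q(P(x₁)P(x₂)). (Fiber counts for the conic bundle π : M → 𝔸², from the proof of Theorem 2.3 of the paper.) -/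
open Finset

section QCHelpers

variable {F : Type*} [Field F] [Fintype F] [DecidableEq F]

private lemma qc_sum_linear (hF : ringChar F ≠ 2) {a : F} (b : F) (ha : a ≠ 0) :
    ∑ x : F, quadraticChar F (a * x + b) = 0 := by
  calc ∑ x : F, quadraticChar F (a * x + b)
      = ∑ t : F, quadraticChar F t :=
        Equiv.sum_comp ((Equiv.mulLeft₀ a ha).trans (Equiv.addRight b))
          (fun t => quadraticChar F t)
    _ = 0 := quadraticChar_sum_zero hF

private lemma qc_sum_sq {c : F} (hc : c ≠ 0) (d : F) :
    ∑ x : F, quadraticChar F (c * (x + d) ^ 2)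
      = ((Fintype.card F : ℤ) - 1) * quadraticChar F c := by
  have h0 : ∑ x : F, quadraticChar F (c * (x + d) ^ 2)
      = ∑ x : F, quadraticChar F (c * x ^ 2) :=
    Equiv.sum_comp (Equiv.addRight d) (fun x => quadraticChar F (c * x ^ 2))
  rw [h0, ← Finset.sum_erase_add _ _ (Finset.mem_univ (0 : F))]
  have h1 : ∀ x ∈ Finset.univ.erase (0 : F),
      quadraticChar F (c * x ^ 2) = quadraticChar F c := by
    intro x hx
    have hx0 : x ≠ 0 := (Finset.mem_erase.mp hx).1
    rw [map_mul, quadraticChar_sq_one' hx0, mul_one]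
  rw [Finset.sum_congr rfl h1, Finset.sum_const,
    Finset.card_erase_of_mem (Finset.mem_univ _), Finset.card_univ]
  have hcard : 1 ≤ Fintype.card F := Fintype.card_pos
  simp only [zero_pow, mul_zero, quadraticChar_zero, add_zero, nsmul_eq_mul]
  push_cast [Nat.cast_sub hcard]
  rw [show c * (0:F) ^ 2 = 0 by ring, quadraticChar_zero]
  ring

private lemma qc_sum_mul_add (hF : ringChar F ≠ 2) {b : F} (hb : b ≠ 0) :
    ∑ x : F, quadraticChar F (x * (x + b)) = -1 := by
  have h0 : ∑ x : F, quadraticChar F (x * (x + b))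
      = ∑ x ∈ Finset.univ.erase (0 : F), quadraticChar F (x * (x + b)) := by
    rw [← Finset.sum_erase_add _ _ (Finset.mem_univ (0 : F))]
    simp
  have h1 : ∀ x ∈ Finset.univ.erase (0 : F),
      quadraticChar F (x * (x + b)) = quadraticChar F (1 + b * x⁻¹) := by
    intro x hx
    have hx0 : x ≠ 0 := (Finset.mem_erase.mp hx).1
    have hxx : x * (x + b) = x ^ 2 * (1 + b * x⁻¹) := by
      field_simp
    rw [hxx, map_mul, quadraticChar_sq_one' hx0, one_mul]
  have h2 : ∑ x ∈ Finset.univ.erase (0 : F), quadraticChar F (1 + b * x⁻¹)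
      = ∑ t ∈ Finset.univ.erase (1 : F), quadraticChar F t := by
    refine Finset.sum_nbij' (fun x => 1 + b * x⁻¹) (fun t => b / (t - 1))
      ?_ ?_ ?_ ?_ ?_
    · intro x hx
      have hx0 : x ≠ 0 := (Finset.mem_erase.mp hx).1
      simp only [Finset.mem_erase, Finset.mem_univ, and_true]
      intro h
      have : b * x⁻¹ = 0 := by linear_combination h
      rcases mul_eq_zero.mp this with h' | h'
      · exact hb h'
      · exact hx0 (inv_eq_zero.mp h')
    · intro t ht
      have ht1 : t ≠ 1 := (Finset.mem_erase.mp ht).1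
      simp only [Finset.mem_erase, Finset.mem_univ, and_true]
      exact div_ne_zero hb (sub_ne_zero.mpr ht1)
    · intro x hx
      have hx0 : x ≠ 0 := (Finset.mem_erase.mp hx).1
      field_simp
      simp [hb]
    · intro t ht
      have ht1 : t ≠ 1 := (Finset.mem_erase.mp ht).1
      have : t - 1 ≠ 0 := sub_ne_zero.mpr ht1
      field_simp
      ring
    · intro x _; rfl
  have h3 : ∑ t ∈ Finset.univ.erase (1 : F), quadraticChar F t = -1 := by
    have h4 := Finset.sum_erase_add Finset.univ (fun t => quadraticChar F t)
      (Finset.mem_univ (1 : F))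
    rw [quadraticChar_sum_zero hF] at h4
    have h5 : quadraticChar F 1 = 1 := map_one _
    simp only [h5] at h4
    omega
  rw [h0, Finset.sum_congr rfl h1, h2, h3]

private lemma qc_sum_quad_ne (hF : ringChar F ≠ 2) {p₁ p₂ q₁ q₂ : F}
    (hp₁ : p₁ ≠ 0) (hp₂ : p₂ ≠ 0) (hD : p₁ * q₂ - p₂ * q₁ ≠ 0) :
    ∑ k : F, quadraticChar F ((p₁ * k + q₁) * (p₂ * k + q₂))
      = -quadraticChar F (p₁ * p₂) := by
  set r : F := q₁ / p₁ with hr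
  set b : F := q₂ / p₂ - q₁ / p₁ with hbdef
  have hb : b ≠ 0 := by
    rw [hbdef]
    intro h
    apply hD
    have h' : q₂ / p₂ = q₁ / p₁ := by linear_combination h
    field_simp at h'
    linear_combination h'
  have hterm : ∀ k : F, (p₁ * k + q₁) * (p₂ * k + q₂)
      = (p₁ * p₂) * ((k + r) * ((k + r) + b)) := by
    intro k
    rw [hr, hbdef]
    field_simp
    ring
  calc ∑ k : F, quadraticChar F ((p₁ * k + q₁) * (p₂ * k + q₂))
      = ∑ k : F, quadraticChar F (p₁ * p₂) *
          quadraticChar F ((k + r) * ((k + r) + b)) := by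
        refine Finset.sum_congr rfl fun k _ => ?_
        rw [hterm k, map_mul]
    _ = quadraticChar F (p₁ * p₂) *
          ∑ k : F, quadraticChar F ((k + r) * ((k + r) + b)) := by
        rw [Finset.mul_sum]
    _ = quadraticChar F (p₁ * p₂) * ∑ x : F, quadraticChar F (x * (x + b)) := by
        congr 1
        exact Equiv.sum_comp (Equiv.addRight r) (fun x => quadraticChar F (x * (x + b)))
    _ = -quadraticChar F (p₁ * p₂) := by rw [qc_sum_mul_add hF hb]; ring

private lemma qc_sum_quad_eq {p₁ p₂ q₁ q₂ : F}
    (hp₁ : p₁ ≠ 0) (hp₂ : p₂ ≠ 0) (hD : p₁ * q₂ - p₂ * q₁ = 0) :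
    ∑ k : F, quadraticChar F ((p₁ * k + q₁) * (p₂ * k + q₂))
      = ((Fintype.card F : ℤ) - 1) * quadraticChar F (p₁ * p₂) := by
  have hterm : ∀ k : F, (p₁ * k + q₁) * (p₂ * k + q₂)
      = (p₁ * p₂) * ((k + q₁ / p₁) ^ 2) := by
    intro k
    field_simp
    ring_nf
    linear_combination (p₁ * k + q₁) * hD
  calc ∑ k : F, quadraticChar F ((p₁ * k + q₁) * (p₂ * k + q₂))
      = ∑ k : F, quadraticChar F ((p₁ * p₂) * ((k + q₁ / p₁) ^ 2)) := by
        exact Finset.sum_congr rfl fun k _ => by rw [hterm k]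
    _ = ((Fintype.card F : ℤ) - 1) * quadraticChar F (p₁ * p₂) :=
        qc_sum_sq (mul_ne_zero hp₁ hp₂) _

private lemma qc_sum_deg_one (hF : ringChar F ≠ 2) {p₁ p₂ q₁ q₂ : F}
    (hp₁ : p₁ = 0) (hp₂ : p₂ ≠ 0) :
    ∑ k : F, quadraticChar F ((p₁ * k + q₁) * (p₂ * k + q₂)) = 0 := by
  subst hp₁
  by_cases hq₁ : q₁ = 0
  · simp [hq₁]
  · have h1 : ∀ k : F, (0 * k + q₁) * (p₂ * k + q₂) = (q₁ * p₂) * k + q₁ * q₂ := by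
      intro k; ring
    calc ∑ k : F, quadraticChar F ((0 * k + q₁) * (p₂ * k + q₂))
        = ∑ k : F, quadraticChar F ((q₁ * p₂) * k + q₁ * q₂) :=
          Finset.sum_congr rfl fun k _ => by rw [h1 k]
      _ = 0 := qc_sum_linear hF _ (mul_ne_zero hq₁ hp₂)

private lemma qc_sum_deg_one' (hF : ringChar F ≠ 2) {p₁ p₂ q₁ q₂ : F}
    (hp₁ : p₁ ≠ 0) (hp₂ : p₂ = 0) :
    ∑ k : F, quadraticChar F ((p₁ * k + q₁) * (p₂ * k + q₂)) = 0 := by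
  have := qc_sum_deg_one (p₁ := p₂) (p₂ := p₁) (q₁ := q₂) (q₂ := q₁) hF hp₂ hp₁
  calc ∑ k : F, quadraticChar F ((p₁ * k + q₁) * (p₂ * k + q₂))
      = ∑ k : F, quadraticChar F ((p₂ * k + q₂) * (p₁ * k + q₁)) :=
        Finset.sum_congr rfl fun k _ => by rw [mul_comm]
    _ = 0 := this

end QCHelpers

/-- **Fiber counts for the conic bundle `π : M → 𝔸²`** (from the proof of
Theorem 2.3): for `(x₁, x₂) ∈ 𝔽_q²` and
`N(x₁,x₂) = #{(k,y) : (P(x₁)k + Q(x₁))(P(x₂)k + Q(x₂)) = y²}`,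
(a) if `Δ(x₁,x₂) ≠ 0` then `N = q − φ_q(P(x₁)P(x₂))`;
(b) if `Δ(x₁,x₂) = 0` and `(P(x₁),P(x₂)) ≠ (0,0)` then
`N = q + (q−1)·φ_q(P(x₁)P(x₂))`. -/
theorem conic_fiber_count
    (F : Type*) [Field F] [Fintype F] [DecidableEq F]
    (q : ℕ) (hq : q = Fintype.card F) (hodd : Odd q)
    (a₀ a₁ a₂ a₃ b₀ b₁ b₂ b₃ : F)
    (P Q : F → F)
    (hP : ∀ x, P x = a₃ * x ^ 3 + a₂ * x ^ 2 + a₁ * x + a₀)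
    (hQ : ∀ x, Q x = b₃ * x ^ 3 + b₂ * x ^ 2 + b₁ * x + b₀)
    (Δ : F → F → F) (hΔ : ∀ x₁ x₂, Δ x₁ x₂ = P x₁ * Q x₂ - P x₂ * Q x₁)
    (x₁ x₂ : F) (N : ℕ)
    (hN : N = ((univ : Finset (F × F)).filter
      (fun ky => (P x₁ * ky.1 + Q x₁) * (P x₂ * ky.1 + Q x₂) = ky.2 ^ 2)).card) :
    (Δ x₁ x₂ ≠ 0 → (N : ℤ) = (q : ℤ) - quadraticChar F (P x₁ * P x₂)) ∧
    (Δ x₁ x₂ = 0 → ¬(P x₁ = 0 ∧ P x₂ = 0) →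
      (N : ℤ) = (q : ℤ) + ((q : ℤ) - 1) * quadraticChar F (P x₁ * P x₂)) := by
  have hF2 : ringChar F ≠ 2 := by
    intro h
    have h2 := FiniteField.even_card_of_char_two h
    rw [← hq] at h2
    rw [Nat.odd_iff] at hodd
    omega
  -- number of square roots
  have hkey : ∀ a : F, (((univ : Finset F).filter (fun y : F => a = y ^ 2)).card : ℤ)
      = quadraticChar F a + 1 := by
    intro a
    rw [← quadraticChar_card_sqrts hF2 a]
    congr 1
    rw [Set.toFinset_setOf]
    congr 1
    ext y
    simp only [Finset.mem_filter, Finset.mem_univ, true_and]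
    exact eq_comm
  -- N as a character sum
  have h1 : N = ∑ k : F, ((univ : Finset F).filter
      (fun y : F => (P x₁ * k + Q x₁) * (P x₂ * k + Q x₂) = y ^ 2)).card := by
    rw [hN, Finset.card_filter, Fintype.sum_prod_type]
    exact Finset.sum_congr rfl fun k _ => (Finset.card_filter _ _).symm
  have hNsum : (N : ℤ) = (q : ℤ)
      + ∑ k : F, quadraticChar F ((P x₁ * k + Q x₁) * (P x₂ * k + Q x₂)) := by
    rw [h1]
    push_cast
    rw [Finset.sum_congr rfl fun k _ => hkey ((P x₁ * k + Q x₁) * (P x₂ * k + Q x₂))]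
    rw [Finset.sum_add_distrib, Finset.sum_const, Finset.card_univ, hq]
    push_cast
    ring
  have hΔ' : Δ x₁ x₂ = P x₁ * Q x₂ - P x₂ * Q x₁ := hΔ x₁ x₂
  constructor
  · intro hΔne
    rw [hΔ'] at hΔne
    by_cases hp₁ : P x₁ = 0
    · by_cases hp₂ : P x₂ = 0
      · exact absurd (by rw [hp₁, hp₂]; ring) hΔne
      · rw [hNsum, qc_sum_deg_one hF2 hp₁ hp₂, hp₁, zero_mul, quadraticChar_zero]
        push_cast
        ring
    · by_cases hp₂ : P x₂ = 0
      · rw [hNsum, qc_sum_deg_one' hF2 hp₁ hp₂, hp₂, mul_zero, quadraticChar_zero]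
        push_cast
        ring
      · rw [hNsum, qc_sum_quad_ne hF2 hp₁ hp₂ hΔne]
        ring
  · intro hΔ0 hne
    rw [hΔ'] at hΔ0
    by_cases hp₁ : P x₁ = 0
    · have hp₂ : P x₂ ≠ 0 := fun h => hne ⟨hp₁, h⟩
      rw [hNsum, qc_sum_deg_one hF2 hp₁ hp₂, hp₁, zero_mul, quadraticChar_zero]
      push_cast
      ring
    · by_cases hp₂ : P x₂ = 0
      · rw [hNsum, qc_sum_deg_one' hF2 hp₁ hp₂, hp₂, mul_zero, quadraticChar_zero]
        push_cast
        ring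
      · rw [hNsum, qc_sum_quad_eq hp₁ hp₂ hΔ0, hq]
end

section
/- Let q be a prime power and P ∈ 𝔽_q[x] a polynomial of degree at most 3. Then #{(x₁,x₂,y) ∈ 𝔽_q³ : P(x₁)P(x₂) = y²} = q² + a_∞², where a_∞ = q − #{(x,y) ∈ 𝔽_q² : y² = P(x)}. (The point count of the fiber M_∞ of the Kummer threefold, established in the proof of Theorem 2.2 of the paper.) -/
open Finset

/-- **Point count of the fiber `M_∞`** (from the proof of Theorem 2.2): for a prime
power `q` and `P ∈ 𝔽_q[x]` of degree at most `3`,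
`#{(x₁,x₂,y) ∈ 𝔽_q³ : P(x₁)P(x₂) = y²} = q² + a_∞²` where
`a_∞ = q − #{(x,y) : y² = P(x)}`. -/
theorem point_count_M_infinity
    (F : Type*) [Field F] [Fintype F] [DecidableEq F]
    (q : ℕ) (hq : q = Fintype.card F)
    (a₀ a₁ a₂ a₃ : F)
    (P : F → F)
    (hP : ∀ x, P x = a₃ * x ^ 3 + a₂ * x ^ 2 + a₁ * x + a₀)
    (aInf : ℤ)
    (haInf : aInf =
      (q : ℤ) - ((univ : Finset (F × F)).filter
        (fun xy => xy.2 ^ 2 = P xy.1)).card) :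
    (((univ : Finset (F × F × F)).filter
        (fun v => P v.1 * P v.2.1 = v.2.2 ^ 2)).card : ℤ)
      = (q : ℤ) ^ 2 + aInf ^ 2 := by
  classical
  have h1 : ((univ : Finset (F × F)).filter (fun xy => xy.2 ^ 2 = P xy.1)).card
      = ∑ x : F, ((univ : Finset F).filter fun y => y ^ 2 = P x).card := by
    rw [Finset.card_filter, Fintype.sum_prod_type]
    simp only [Finset.card_filter]
  have h2 : ((univ : Finset (F × F × F)).filter
      (fun v => P v.1 * P v.2.1 = v.2.2 ^ 2)).card
      = ∑ x₁ : F, ∑ x₂ : F,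
          ((univ : Finset F).filter fun y => y ^ 2 = P x₁ * P x₂).card := by
    rw [Finset.card_filter, Fintype.sum_prod_type]
    refine Finset.sum_congr rfl fun x₁ _ => ?_
    rw [Fintype.sum_prod_type]
    refine Finset.sum_congr rfl fun x₂ _ => ?_
    rw [Finset.card_filter]
    exact Finset.sum_congr rfl fun y _ => by simp [eq_comm]
  by_cases hF : ringChar F = 2
  · haveI : CharP F 2 := hF ▸ ringChar.charP F
    have hinj : Function.Injective (fun y : F => y ^ 2) := by
      intro y z h
      simp only at h
      have h0 : (y - z) * (y + z) = 0 := by linear_combination h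
      rcases mul_eq_zero.mp h0 with h' | h'
      · exact sub_eq_zero.mp h'
      · have : y = -z := eq_neg_of_add_eq_zero_left h'
        rwa [CharTwo.neg_eq] at this
    have hone : ∀ c : F, ((univ : Finset F).filter fun y => y ^ 2 = c).card = 1 := by
      intro c
      obtain ⟨y, hy⟩ := Finite.surjective_of_injective hinj c
      rw [Finset.card_eq_one]
      refine ⟨y, ?_⟩
      ext z
      simp only [Finset.mem_filter, Finset.mem_univ, true_and, Finset.mem_singleton]
      constructor
      · intro hz; exact hinj (hz.trans hy.symm)
      · rintro rfl; exact hy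
    have hS : ((((univ : Finset (F × F)).filter
        (fun xy => xy.2 ^ 2 = P xy.1)).card : ℤ)) = q := by
      rw [h1]; simp [hone, hq, Finset.card_univ]
    have haInf' : aInf = 0 := by rw [haInf, hS]; ring
    have hM : (((univ : Finset (F × F × F)).filter
        (fun v => P v.1 * P v.2.1 = v.2.2 ^ 2)).card : ℤ) = (q : ℤ) ^ 2 := by
      rw [h2]; simp [hone, hq, Finset.card_univ]; ring
    rw [hM, haInf']; ring
  · have key : ∀ c : F, (((univ : Finset F).filter fun y => y ^ 2 = c).card : ℤ)
        = quadraticChar F c + 1 := by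
      intro c
      rw [← quadraticChar_card_sqrts hF c]
      congr 1
      rw [Set.toFinset_setOf]
    set T : ℤ := ∑ x : F, (quadraticChar F (P x) : ℤ) with hT
    have hS : ((((univ : Finset (F × F)).filter
        (fun xy => xy.2 ^ 2 = P xy.1)).card : ℤ)) = T + q := by
      rw [h1]
      push_cast
      rw [hT, hq]
      simp [key, Finset.sum_add_distrib, Finset.card_univ]
    have haInf' : aInf = -T := by rw [haInf, hS]; ring
    have hM : (((univ : Finset (F × F × F)).filter
        (fun v => P v.1 * P v.2.1 = v.2.2 ^ 2)).card : ℤ) = T ^ 2 + q ^ 2 := by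
      rw [h2]
      push_cast
      have hkey2 : ∀ x₁ x₂ : F, (((univ : Finset F).filter
          fun y => y ^ 2 = P x₁ * P x₂).card : ℤ)
          = (quadraticChar F (P x₁) : ℤ) * quadraticChar F (P x₂) + 1 := by
        intro x₁ x₂
        rw [key, map_mul]
      simp_rw [hkey2, Finset.sum_add_distrib, Finset.sum_const, Finset.card_univ,
        ← Finset.mul_sum, ← Finset.sum_mul]
      rw [← hT, hq]
      push_cast
      ring
    rw [hM, haInf']
    ring
end

section
/- Let K be a field of characteristic ≠ 2 with algebraic closure K̄, and let P(x) = a₃x³ + a₂x² + a₁x + a₀, Q(x) = b₃x³ + b₂x² + b₁x + b₀ ∈ K[x] be generic, i.e. μ_{2,3} ≠ 0, μ_{1,3}² − 4μ_{0,3}μ_{2,3} ≠ 0, and Δ̃, ∂Δ̃/∂x₁, ∂Δ̃/∂x₂ have no common zero in K̄². Then the polynomial Δ̃(x₁,x₂) is irreducible in K̄[x₁,x₂]. (Proposition 3.2 of the paper: Δ̃ is geometrically irreducible and geometrically reduced.) -/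
section CoreDev
open Polynomial

section helpers
variable {k : Type*} [Field k]

lemma quad_root [IsAlgClosed k] (c₀ c₁ c₂ : k) (h : c₂ ≠ 0) :
    ∃ u : k, c₀ + c₁ * u + c₂ * u ^ 2 = 0 := by
  obtain ⟨u, hu⟩ := IsAlgClosed.exists_root (C c₂ * X ^ 2 + C c₁ * X + C c₀)
    (by rw [Polynomial.degree_quadratic h]; exact (by decide))
  refine ⟨u, ?_⟩
  have := hu
  simp [Polynomial.IsRoot] at this
  linear_combination this

lemma root_of_pos [IsAlgClosed k] (f : k[X]) (h : 0 < f.natDegree) : ∃ v, f.eval v = 0 := by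
  obtain ⟨v, hv⟩ := IsAlgClosed.exists_root f
    (ne_of_gt (Polynomial.natDegree_pos_iff_degree_pos.mp h))
  exact ⟨v, hv⟩

lemma disc_zero {γ₀ γ₁ γ₂ v : k} (h1 : γ₀ + γ₁ * v + γ₂ * v ^ 2 = 0)
    (h2 : γ₁ + 2 * γ₂ * v = 0) : γ₁ ^ 2 - 4 * γ₀ * γ₂ = 0 := by
  linear_combination (γ₁ + 2 * γ₂ * v) * h2 - 4 * γ₂ * h1

end helpers

/-- The quadratic polynomial `a + b X + c X²`. -/
noncomputable def quadP {k : Type*} [CommSemiring k] (a b c : k) : k[X] :=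
  C a + C b * X + C c * X ^ 2

section quadP
variable {k : Type*} [CommRing k] (a b c v : k)

lemma quadP_eval : (quadP a b c).eval v = a + b * v + c * v ^ 2 := by
  simp [quadP]

lemma quadP_deriv_eval : ((quadP a b c).derivative).eval v = b + 2 * c * v := by
  simp [quadP]; ring

lemma quadP_coeff0 : (quadP a b c).coeff 0 = a := by
  simp only [quadP, coeff_add, coeff_C_mul, coeff_C, coeff_X, coeff_X_pow]; norm_num

lemma quadP_coeff1 : (quadP a b c).coeff 1 = b := by
  simp only [quadP, coeff_add, coeff_C_mul, coeff_C, coeff_X, coeff_X_pow]; norm_num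

lemma quadP_coeff2 : (quadP a b c).coeff 2 = c := by
  simp only [quadP, coeff_add, coeff_C_mul, coeff_C, coeff_X, coeff_X_pow]; norm_num

lemma expand4 (α₀ α₁ α₂ β₀ β₁ β₂ γ₀ γ₁ γ₂ : k) :
    ((quadP β₀ β₁ β₂) ^ 2
      - 4 * (quadP α₀ α₁ α₂ * quadP γ₀ γ₁ γ₂)).coeff 4 = β₂ ^ 2 - 4 * α₂ * γ₂ := by
  have h : (quadP β₀ β₁ β₂) ^ 2 - 4 * (quadP α₀ α₁ α₂ * quadP γ₀ γ₁ γ₂)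
      = C (β₀ ^ 2 - 4 * α₀ * γ₀) + C (2 * β₀ * β₁ - 4 * (α₀ * γ₁ + α₁ * γ₀)) * X
        + C (β₁ ^ 2 + 2 * β₀ * β₂ - 4 * (α₀ * γ₂ + α₁ * γ₁ + α₂ * γ₀)) * X ^ 2
        + C (2 * β₁ * β₂ - 4 * (α₁ * γ₂ + α₂ * γ₁)) * X ^ 3
        + C (β₂ ^ 2 - 4 * α₂ * γ₂) * X ^ 4 := by
    simp only [quadP, C_mul, C_add, C_sub, map_ofNat, C_pow]
    ring
  rw [h]
  simp only [Polynomial.coeff_add, Polynomial.coeff_C_mul, Polynomial.coeff_X_pow,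
    Polynomial.coeff_C, Polynomial.coeff_X]
  norm_num
end quadP


section cases
variable {k : Type*} [Field k] [IsAlgClosed k]
variable {α₀ α₁ α₂ β₀ β₁ β₂ γ₀ γ₁ γ₂ : k}

def SingFree (α₀ α₁ α₂ β₀ β₁ β₂ γ₀ γ₁ γ₂ : k) : Prop :=
  ∀ u v : k, ¬((α₀ + α₁ * v + α₂ * v ^ 2) + (β₀ + β₁ * v + β₂ * v ^ 2) * u
        + (γ₀ + γ₁ * v + γ₂ * v ^ 2) * u ^ 2 = 0 ∧
      (β₀ + β₁ * v + β₂ * v ^ 2) + 2 * (γ₀ + γ₁ * v + γ₂ * v ^ 2) * u = 0 ∧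
      (α₁ + 2 * α₂ * v) + (β₁ + 2 * β₂ * v) * u + (γ₁ + 2 * γ₂ * v) * u ^ 2 = 0)

lemma case_const (hdC : γ₁ ^ 2 - 4 * γ₀ * γ₂ ≠ 0)
    (hsing : SingFree α₀ α₁ α₂ β₀ β₁ β₂ γ₀ γ₁ γ₂)
    (f g₀ g₁ g₂ : k[X]) (hf : 0 < f.natDegree)
    (cA : quadP α₀ α₁ α₂ = f * g₀) (cB : quadP β₀ β₁ β₂ = f * g₁)
    (cC : quadP γ₀ γ₁ γ₂ = f * g₂) : False := by
  obtain ⟨v, hv⟩ := root_of_pos f hf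
  have eA : α₀ + α₁ * v + α₂ * v ^ 2 = f.eval v * g₀.eval v := by
    have h := congrArg (Polynomial.eval v) cA
    rwa [quadP_eval, eval_mul] at h
  have eB : β₀ + β₁ * v + β₂ * v ^ 2 = f.eval v * g₁.eval v := by
    have h := congrArg (Polynomial.eval v) cB
    rwa [quadP_eval, eval_mul] at h
  have eC : γ₀ + γ₁ * v + γ₂ * v ^ 2 = f.eval v * g₂.eval v := by
    have h := congrArg (Polynomial.eval v) cC
    rwa [quadP_eval, eval_mul] at h
  have dA : α₁ + 2 * α₂ * v
      = f.derivative.eval v * g₀.eval v + f.eval v * g₀.derivative.eval v := by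
    have h := congrArg (fun p => Polynomial.eval v (Polynomial.derivative p)) cA
    simp only [Polynomial.derivative_mul, Polynomial.eval_add, Polynomial.eval_mul] at h
    rwa [quadP_deriv_eval] at h
  have dB : β₁ + 2 * β₂ * v
      = f.derivative.eval v * g₁.eval v + f.eval v * g₁.derivative.eval v := by
    have h := congrArg (fun p => Polynomial.eval v (Polynomial.derivative p)) cB
    simp only [Polynomial.derivative_mul, Polynomial.eval_add, Polynomial.eval_mul] at h
    rwa [quadP_deriv_eval] at h
  have dC : γ₁ + 2 * γ₂ * v
      = f.derivative.eval v * g₂.eval v + f.eval v * g₂.derivative.eval v := by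
    have h := congrArg (fun p => Polynomial.eval v (Polynomial.derivative p)) cC
    simp only [Polynomial.derivative_mul, Polynomial.eval_add, Polynomial.eval_mul] at h
    rwa [quadP_deriv_eval] at h
  by_cases hg2 : g₂.eval v = 0
  · exact hdC (disc_zero (by rw [eC, hv, zero_mul]) (by rw [dC, hg2, hv]; ring))
  · by_cases hf' : f.derivative.eval v = 0
    · exact hsing 0 v ⟨by linear_combination eA + g₀.eval v * hv,
        by linear_combination eB + g₁.eval v * hv,
        by linear_combination dA + g₀.eval v * hf' + g₀.derivative.eval v * hv⟩
    · obtain ⟨u, hu⟩ := quad_root (g₀.eval v) (g₁.eval v) (g₂.eval v) hg2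
      exact hsing u v
        ⟨by linear_combination eA + u * eB + u ^ 2 * eC
            + (g₀.eval v + g₁.eval v * u + g₂.eval v * u ^ 2) * hv,
         by linear_combination eB + 2 * u * eC + (g₁.eval v + 2 * g₂.eval v * u) * hv,
         by linear_combination dA + u * dB + u ^ 2 * dC + f.derivative.eval v * hu
            + (g₀.derivative.eval v + g₁.derivative.eval v * u
              + g₂.derivative.eval v * u ^ 2) * hv⟩

end cases
lemma case_lin {k : Type*} [Field k] [IsAlgClosed k]
    {α₀ α₁ α₂ β₀ β₁ β₂ γ₀ γ₁ γ₂ : k}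
    (hd : β₂ ^ 2 - 4 * α₂ * γ₂ ≠ 0) (hdC : γ₁ ^ 2 - 4 * γ₀ * γ₂ ≠ 0)
    (hsing : SingFree α₀ α₁ α₂ β₀ β₁ β₂ γ₀ γ₁ γ₂)
    (f₀ f₁ g₀ g₁ : k[X])
    (cA : quadP α₀ α₁ α₂ = f₀ * g₀) (cB : quadP β₀ β₁ β₂ = f₀ * g₁ + f₁ * g₀)
    (cC : quadP γ₀ γ₁ γ₂ = f₁ * g₁) : False := by
  have key : ∀ u v : k, f₀.eval v + f₁.eval v * u = 0 →
      g₀.eval v + g₁.eval v * u = 0 → False := by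
    intro u v hF hG
    have eA : α₀ + α₁ * v + α₂ * v ^ 2 = f₀.eval v * g₀.eval v := by
      have h := congrArg (Polynomial.eval v) cA
      rwa [quadP_eval, eval_mul] at h
    have eB : β₀ + β₁ * v + β₂ * v ^ 2 = f₀.eval v * g₁.eval v + f₁.eval v * g₀.eval v := by
      have h := congrArg (Polynomial.eval v) cB
      rwa [quadP_eval, eval_add, eval_mul, eval_mul] at h
    have eC : γ₀ + γ₁ * v + γ₂ * v ^ 2 = f₁.eval v * g₁.eval v := by
      have h := congrArg (Polynomial.eval v) cC
      rwa [quadP_eval, eval_mul] at h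
    have dA : α₁ + 2 * α₂ * v
        = f₀.derivative.eval v * g₀.eval v + f₀.eval v * g₀.derivative.eval v := by
      have h := congrArg (fun p => Polynomial.eval v (Polynomial.derivative p)) cA
      simp only [Polynomial.derivative_mul, Polynomial.eval_add, Polynomial.eval_mul] at h
      rwa [quadP_deriv_eval] at h
    have dB : β₁ + 2 * β₂ * v
        = (f₀.derivative.eval v * g₁.eval v + f₀.eval v * g₁.derivative.eval v)
          + (f₁.derivative.eval v * g₀.eval v + f₁.eval v * g₀.derivative.eval v) := by
      have h := congrArg (fun p => Polynomial.eval v (Polynomial.derivative p)) cB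
      simp only [Polynomial.derivative_add, Polynomial.derivative_mul, Polynomial.eval_add,
        Polynomial.eval_mul] at h
      rwa [quadP_deriv_eval] at h
    have dC : γ₁ + 2 * γ₂ * v
        = f₁.derivative.eval v * g₁.eval v + f₁.eval v * g₁.derivative.eval v := by
      have h := congrArg (fun p => Polynomial.eval v (Polynomial.derivative p)) cC
      simp only [Polynomial.derivative_mul, Polynomial.eval_add, Polynomial.eval_mul] at h
      rwa [quadP_deriv_eval] at h
    exact hsing u v
      ⟨by linear_combination eA + u * eB + u ^ 2 * eC
          + (g₀.eval v + g₁.eval v * u) * hF,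
       by linear_combination eB + 2 * u * eC + g₁.eval v * hF + f₁.eval v * hG,
       by linear_combination dA + u * dB + u ^ 2 * dC
          + (g₀.derivative.eval v + g₁.derivative.eval v * u) * hF
          + (f₀.derivative.eval v + f₁.derivative.eval v * u) * hG⟩
  have hdelta : (quadP β₀ β₁ β₂) ^ 2 - 4 * (quadP α₀ α₁ α₂ * quadP γ₀ γ₁ γ₂)
      = (f₁ * g₀ - f₀ * g₁) ^ 2 := by
    rw [cA, cB, cC]; ring
  by_cases hRdeg : (f₁ * g₀ - f₀ * g₁).natDegree = 0
  · obtain ⟨r, hr⟩ := Polynomial.natDegree_eq_zero.mp hRdeg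
    apply hd
    have h4 := congrArg (fun p => Polynomial.coeff p 4) hdelta
    rw [expand4, ← hr, ← C_pow, Polynomial.coeff_C] at h4
    simpa using h4
  · obtain ⟨v, hv⟩ := root_of_pos _ (Nat.pos_of_ne_zero hRdeg)
    rw [Polynomial.eval_sub, Polynomial.eval_mul, Polynomial.eval_mul] at hv
    by_cases hf1 : f₁.eval v = 0
    · by_cases hg1 : g₁.eval v = 0
      · refine hdC (disc_zero (v := v) ?_ ?_)
        · have h := congrArg (Polynomial.eval v) cC
          rw [quadP_eval, eval_mul] at h
          rw [h, hf1, zero_mul]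
        · have h := congrArg (fun p => Polynomial.eval v (Polynomial.derivative p)) cC
          simp only [Polynomial.derivative_mul, Polynomial.eval_add, Polynomial.eval_mul] at h
          rw [quadP_deriv_eval] at h
          rw [h, hf1, hg1]; ring
      · have hf0 : f₀.eval v = 0 := by
          have h : f₀.eval v * g₁.eval v = 0 := by
            linear_combination -hv + g₀.eval v * hf1
          exact (mul_eq_zero.mp h).resolve_right hg1
        exact key (-(g₀.eval v) / g₁.eval v) v (by rw [hf0, hf1]; ring) (by field_simp; ring)
    · refine key (-(f₀.eval v) / f₁.eval v) v (by field_simp; ring) ?_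
      field_simp
      linear_combination hv
theorem core_irreducible {k : Type*} [Field k] [IsAlgClosed k]
    {α₀ α₁ α₂ β₀ β₁ β₂ γ₀ γ₁ γ₂ : k}
    (hγ₂ : γ₂ ≠ 0) (hd : β₂ ^ 2 - 4 * α₂ * γ₂ ≠ 0) (hdC : γ₁ ^ 2 - 4 * γ₀ * γ₂ ≠ 0)
    (hsing : SingFree α₀ α₁ α₂ β₀ β₁ β₂ γ₀ γ₁ γ₂) :
    Irreducible (Polynomial.C (quadP α₀ α₁ α₂) + Polynomial.C (quadP β₀ β₁ β₂) * Polynomial.X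
      + Polynomial.C (quadP γ₀ γ₁ γ₂) * Polynomial.X ^ 2) := by
  set P2 : Polynomial (Polynomial k) :=
    Polynomial.C (quadP α₀ α₁ α₂) + Polynomial.C (quadP β₀ β₁ β₂) * Polynomial.X
      + Polynomial.C (quadP γ₀ γ₁ γ₂) * Polynomial.X ^ 2 with hP2
  have hCp : quadP γ₀ γ₁ γ₂ ≠ 0 := by
    intro h
    exact hγ₂ (by rw [← quadP_coeff2 γ₀ γ₁ γ₂, h, Polynomial.coeff_zero])
  have hP2deg : P2.natDegree = 2 := by
    have h : P2 = Polynomial.C (quadP γ₀ γ₁ γ₂) * Polynomial.X ^ 2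
        + Polynomial.C (quadP β₀ β₁ β₂) * Polynomial.X + Polynomial.C (quadP α₀ α₁ α₂) := by
      rw [hP2]; ring
    rw [h]
    exact Polynomial.natDegree_quadratic (by simpa using hCp)
  constructor
  · intro h
    obtain ⟨r, -, hr⟩ := Polynomial.isUnit_iff.mp h
    rw [← hr] at hP2deg
    simp at hP2deg
  · intro F G hFG
    by_contra hcon
    push_neg at hcon
    obtain ⟨hF, hG⟩ := hcon
    have hF0 : F ≠ 0 := by
      rintro rfl
      rw [zero_mul] at hFG
      rw [hFG] at hP2deg
      simp at hP2deg
    have hG0 : G ≠ 0 := by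
      rintro rfl
      rw [mul_zero] at hFG
      rw [hFG] at hP2deg
      simp at hP2deg
    have hsum : F.natDegree + G.natDegree = 2 := by
      have h := Polynomial.natDegree_mul hF0 hG0
      rw [← hFG, hP2deg] at h
      exact h.symm
    -- coefficients of P2
    have pc0 : P2.coeff 0 = quadP α₀ α₁ α₂ := by
      rw [hP2]
      simp only [Polynomial.coeff_add, Polynomial.coeff_C_mul, Polynomial.coeff_C,
        Polynomial.coeff_X, Polynomial.coeff_X_pow]
      norm_num
    have pc1 : P2.coeff 1 = quadP β₀ β₁ β₂ := by
      rw [hP2]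
      simp only [Polynomial.coeff_add, Polynomial.coeff_C_mul, Polynomial.coeff_C,
        Polynomial.coeff_X, Polynomial.coeff_X_pow]
      norm_num
    have pc2 : P2.coeff 2 = quadP γ₀ γ₁ γ₂ := by
      rw [hP2]
      simp only [Polynomial.coeff_add, Polynomial.coeff_C_mul, Polynomial.coeff_C,
        Polynomial.coeff_X, Polynomial.coeff_X_pow]
      norm_num
    -- unit from constant polynomial of degree 0
    have unit_of : ∀ H : Polynomial (Polynomial k), H ≠ 0 → H.natDegree = 0 →
        (∀ c : k[X], Polynomial.C c = H → 0 < c.natDegree → False) → IsUnit H := by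
      intro H hH0 hHdeg hno
      obtain ⟨c, hc⟩ := Polynomial.natDegree_eq_zero.mp hHdeg
      have hc0 : c ≠ 0 := by rintro rfl; rw [← hc] at hH0; simp at hH0
      have hcd : c.natDegree = 0 := by
        by_contra h
        exact hno c hc (Nat.pos_of_ne_zero h)
      obtain ⟨a, ha⟩ := Polynomial.natDegree_eq_zero.mp hcd
      have ha0 : a ≠ 0 := by rintro rfl; rw [← ha] at hc0; simp at hc0
      rw [← hc, ← ha]
      exact (Polynomial.isUnit_C.mpr (Polynomial.isUnit_C.mpr (isUnit_iff_ne_zero.mpr ha0)))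
    rcases (by omega : F.natDegree = 0 ∨ G.natDegree = 0 ∨
        (F.natDegree = 1 ∧ G.natDegree = 1)) with h0 | h0 | ⟨hF1, hG1⟩
    · apply hF
      refine unit_of F hF0 h0 (fun f hf hfpos => ?_)
      refine case_const hdC hsing f (G.coeff 0) (G.coeff 1) (G.coeff 2) hfpos ?_ ?_ ?_
      · rw [← pc0, hFG, ← hf, Polynomial.coeff_C_mul]
      · rw [← pc1, hFG, ← hf, Polynomial.coeff_C_mul]
      · rw [← pc2, hFG, ← hf, Polynomial.coeff_C_mul]
    · apply hG
      refine unit_of G hG0 h0 (fun f hf hfpos => ?_)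
      refine case_const hdC hsing f (F.coeff 0) (F.coeff 1) (F.coeff 2) hfpos ?_ ?_ ?_
      · rw [← pc0, hFG, ← hf, Polynomial.coeff_mul_C, mul_comm]
      · rw [← pc1, hFG, ← hf, Polynomial.coeff_mul_C, mul_comm]
      · rw [← pc2, hFG, ← hf, Polynomial.coeff_mul_C, mul_comm]
    · have hFeq := Polynomial.eq_X_add_C_of_natDegree_le_one (le_of_eq hF1)
      have hGeq := Polynomial.eq_X_add_C_of_natDegree_le_one (le_of_eq hG1)
      have hprod : F * G = Polynomial.C (F.coeff 0 * G.coeff 0)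
          + Polynomial.C (F.coeff 0 * G.coeff 1 + F.coeff 1 * G.coeff 0) * Polynomial.X
          + Polynomial.C (F.coeff 1 * G.coeff 1) * Polynomial.X ^ 2 := by
        conv_lhs => rw [hFeq, hGeq]
        simp only [Polynomial.C_mul, Polynomial.C_add]
        ring
      refine case_lin hd hdC hsing (F.coeff 0) (F.coeff 1) (G.coeff 0) (G.coeff 1) ?_ ?_ ?_
      · rw [← pc0, hFG, hprod]
        simp only [Polynomial.coeff_add, Polynomial.coeff_C_mul, Polynomial.coeff_C,
          Polynomial.coeff_X, Polynomial.coeff_X_pow]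
        norm_num
      · rw [← pc1, hFG, hprod]
        simp only [Polynomial.coeff_add, Polynomial.coeff_C_mul, Polynomial.coeff_C,
          Polynomial.coeff_X, Polynomial.coeff_X_pow]
        norm_num
      · rw [← pc2, hFG, hprod]
        simp only [Polynomial.coeff_add, Polynomial.coeff_C_mul, Polynomial.coeff_C,
          Polynomial.coeff_X, Polynomial.coeff_X_pow]
        norm_num

end CoreDev

open MvPolynomial

/-- **Proposition 3.2.** Let `K` be a field of characteristic `≠ 2` and let
`P, Q ∈ K[x]` be generic cubics, i.e. `μ₂₃ ≠ 0`, `μ₁₃² − 4μ₀₃μ₂₃ ≠ 0` and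
`Δ̃, ∂Δ̃/∂x₁, ∂Δ̃/∂x₂` have no common zero in `K̄²`. Then `Δ̃` is irreducible
as an element of `K̄[x₁,x₂]` (it is geometrically irreducible and reduced). -/
theorem deltaTilde_geometrically_irreducible
    (K : Type*) [Field K] (hchar : (2 : K) ≠ 0)
    (a₀ a₁ a₂ a₃ b₀ b₁ b₂ b₃ : K)
    (μ : Fin 4 → Fin 4 → K)
    (hμ : ∀ i j, μ i j = ![a₀, a₁, a₂, a₃] i * ![b₀, b₁, b₂, b₃] j
      - ![a₀, a₁, a₂, a₃] j * ![b₀, b₁, b₂, b₃] i)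
    (hμ23 : μ 2 3 ≠ 0)
    (hdisc : μ 1 3 ^ 2 - 4 * μ 0 3 * μ 2 3 ≠ 0)
    (D : MvPolynomial (Fin 2) (AlgebraicClosure K))
    (hD : D = (fun c => C (algebraMap K (AlgebraicClosure K) c)) (μ 1 0)
      + (fun c => C (algebraMap K (AlgebraicClosure K) c)) (μ 2 0) * X 1
      + (fun c => C (algebraMap K (AlgebraicClosure K) c)) (μ 3 0) * X 1 ^ 2
      + ((fun c => C (algebraMap K (AlgebraicClosure K) c)) (μ 2 0)
        + (fun c => C (algebraMap K (AlgebraicClosure K) c)) (μ 3 0 + μ 2 1) * X 1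
        + (fun c => C (algebraMap K (AlgebraicClosure K) c)) (μ 3 1) * X 1 ^ 2) * X 0
      + ((fun c => C (algebraMap K (AlgebraicClosure K) c)) (μ 3 0)
        + (fun c => C (algebraMap K (AlgebraicClosure K) c)) (μ 3 1) * X 1
        + (fun c => C (algebraMap K (AlgebraicClosure K) c)) (μ 3 2) * X 1 ^ 2) * X 0 ^ 2)
    (hgen : ∀ p : Fin 2 → AlgebraicClosure K,
      ¬(eval p D = 0 ∧ eval p (pderiv 0 D) = 0 ∧ eval p (pderiv 1 D) = 0)) :
    Irreducible D := by
  classical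
  set k := AlgebraicClosure K with hk
  let φ : K →+* k := algebraMap K k
  have hinj : Function.Injective φ := φ.injective
  -- scalar facts
  have h32 : μ 3 2 ≠ 0 := by
    have e32 : μ 3 2 = -(μ 2 3) := by rw [hμ 3 2, hμ 2 3]; ring
    rw [e32]; exact neg_ne_zero.mpr hμ23
  have hdd : μ 3 1 ^ 2 - 4 * μ 3 0 * μ 3 2 ≠ 0 := by
    have : μ 3 1 ^ 2 - 4 * μ 3 0 * μ 3 2 = μ 1 3 ^ 2 - 4 * μ 0 3 * μ 2 3 := by
      rw [hμ 3 1, hμ 3 0, hμ 3 2, hμ 1 3, hμ 0 3, hμ 2 3]; ring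
    rw [this]; exact hdisc
  set α₀ := φ (μ 1 0) with hα₀
  set α₁ := φ (μ 2 0) with hα₁
  set α₂ := φ (μ 3 0) with hα₂
  set β₀ := φ (μ 2 0) with hβ₀
  set β₁ := φ (μ 3 0) + φ (μ 2 1) with hβ₁
  set β₂ := φ (μ 3 1) with hβ₂
  set γ₀ := φ (μ 3 0) with hγ₀
  set γ₁ := φ (μ 3 1) with hγ₁
  set γ₂ := φ (μ 3 2) with hγ₂'
  have hγ₂ : γ₂ ≠ 0 := fun h => h32 (hinj (by rw [← hγ₂'] at *; simpa [map_zero] using h))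
  have hd : β₂ ^ 2 - 4 * α₂ * γ₂ ≠ 0 := by
    intro h
    apply hdd
    apply hinj
    rw [map_sub, map_mul, map_mul, map_pow, map_ofNat, map_zero]
    exact h
  have hdC : γ₁ ^ 2 - 4 * γ₀ * γ₂ ≠ 0 := hd
  -- singularity bridge
  have hsing : SingFree α₀ α₁ α₂ β₀ β₁ β₂ γ₀ γ₁ γ₂ := by
    intro u v h
    obtain ⟨h1, h2, h3⟩ := h
    apply hgen ![u, v]
    subst hD
    refine ⟨?_, ?_, ?_⟩
    · simp only [map_add, map_mul, map_pow, MvPolynomial.eval_C, MvPolynomial.eval_X,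
        Matrix.cons_val_zero, Matrix.cons_val_one, Matrix.head_cons]
      linear_combination h1
    · simp only [map_add, MvPolynomial.pderiv_mul, MvPolynomial.pderiv_C,
        MvPolynomial.pderiv_X_self, MvPolynomial.pderiv_X_of_ne (by decide : (1 : Fin 2) ≠ 0),
        pow_two, map_mul, MvPolynomial.eval_C, MvPolynomial.eval_X, Matrix.cons_val_zero, Matrix.cons_val_one, Matrix.head_cons, map_zero, map_one]
      linear_combination h2
    · simp only [map_add, MvPolynomial.pderiv_mul, MvPolynomial.pderiv_C,
        MvPolynomial.pderiv_X_self, MvPolynomial.pderiv_X_of_ne (by decide : (0 : Fin 2) ≠ 1),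
        pow_two, map_mul, MvPolynomial.eval_C, MvPolynomial.eval_X, Matrix.cons_val_zero, Matrix.cons_val_one, Matrix.head_cons, map_zero, map_one]
      linear_combination h3
  -- transfer along the algebra equivalence to `k[Y][X]`
  let e1 : MvPolynomial (Fin 1) k ≃ₐ[k] Polynomial k :=
    (MvPolynomial.finSuccEquiv k 0).trans
      (Polynomial.mapAlgEquiv (MvPolynomial.isEmptyAlgEquiv k (Fin 0)))
  let e : MvPolynomial (Fin 2) k ≃ₐ[k] Polynomial (Polynomial k) :=
    (MvPolynomial.finSuccEquiv k 1).trans (Polynomial.mapAlgEquiv e1)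
  have eC : ∀ c : k, e (MvPolynomial.C c) = Polynomial.C (Polynomial.C c) := by
    intro c
    rw [show (MvPolynomial.C c : MvPolynomial (Fin 2) k) = algebraMap k _ c from rfl,
      AlgEquiv.commutes]
    rfl
  have eX0 : e (MvPolynomial.X 0) = Polynomial.X := by
    simp only [e, e1, AlgEquiv.trans_apply, MvPolynomial.finSuccEquiv_X_zero,
      Polynomial.coe_mapAlgEquiv]
    simp
  have eX1 : e (MvPolynomial.X 1) = Polynomial.C Polynomial.X := by
    rw [show (1 : Fin 2) = Fin.succ 0 from rfl]
    simp only [e, e1, AlgEquiv.trans_apply, MvPolynomial.finSuccEquiv_X_succ,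
      Polynomial.coe_mapAlgEquiv, Polynomial.map_C, MvPolynomial.finSuccEquiv_X_zero]
    simp [MvPolynomial.finSuccEquiv_X_zero]
  have hED : e D = Polynomial.C (quadP α₀ α₁ α₂) + Polynomial.C (quadP β₀ β₁ β₂) * Polynomial.X
      + Polynomial.C (quadP γ₀ γ₁ γ₂) * Polynomial.X ^ 2 := by
    rw [hD]
    simp only [map_add, map_mul, map_pow, eC, eX0, eX1]
    simp only [quadP, Polynomial.C_add, Polynomial.C_mul, Polynomial.C_pow, map_add]
    simp only [hα₀, hα₁, hβ₀, hα₂, hγ₀, hβ₁, hβ₂, hγ₁, hγ₂', Polynomial.C_add, map_add]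
    rfl
  have hirr := core_irreducible (k := k) hγ₂ hd hdC hsing
  rw [← hED] at hirr
  exact (MulEquiv.irreducible_iff e).mp hirr
end

section
/- Let K be a field of characteristic ≠ 2 with algebraic closure K̄, and let P, Q ∈ K[x] (cubics as below) be generic, i.e. μ_{2,3} ≠ 0, μ_{1,3}² − 4μ_{0,3}μ_{2,3} ≠ 0, and Δ̃, ∂Δ̃/∂x₁, ∂Δ̃/∂x₂ have no common zero in K̄². Let Δ̃ʰ(x₁,x₂,z) = z⁴·Δ̃(x₁/z, x₂/z) be the degree-4 homogenization of Δ̃. Then a nonzero triple (u,v,w) ∈ K̄³ satisfies Δ̃ʰ(u,v,w) = ∂Δ̃ʰ/∂x₁(u,v,w) = ∂Δ̃ʰ/∂x₂(u,v,w) = ∂Δ̃ʰ/∂z(u,v,w) = 0 if and only if (u,v,w) is a scalar multiple of (1,0,0) or of (0,1,0). In other words, the singular points of the projective closure of Δ̃ are exactly [1:0:0] and [0:1:0]. (Part of Lemma 3.3 of the paper.) -/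
open MvPolynomial

set_option maxHeartbeats 2000000 in
/-- **Part of Lemma 3.3.** Under the genericity assumptions, the singular points of
the projective closure of `Δ̃` (cut out by the degree-4 homogenization `Δ̃ʰ` of `Δ̃`
together with its partial derivatives) are exactly `[1:0:0]` and `[0:1:0]`. -/
theorem singular_points_of_projective_closure
    (K : Type*) [Field K] (hchar : (2 : K) ≠ 0)
    (a₀ a₁ a₂ a₃ b₀ b₁ b₂ b₃ : K)
    (μ : Fin 4 → Fin 4 → K)
    (hμ : ∀ i j, μ i j = ![a₀, a₁, a₂, a₃] i * ![b₀, b₁, b₂, b₃] j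
      - ![a₀, a₁, a₂, a₃] j * ![b₀, b₁, b₂, b₃] i)
    (hμ23 : μ 2 3 ≠ 0)
    (hdisc : μ 1 3 ^ 2 - 4 * μ 0 3 * μ 2 3 ≠ 0)
    (φ : K → MvPolynomial (Fin 2) (AlgebraicClosure K))
    (hφ : ∀ c, φ c = C (algebraMap K (AlgebraicClosure K) c))
    (D : MvPolynomial (Fin 2) (AlgebraicClosure K))
    (hD : D = φ (μ 1 0) + φ (μ 2 0) * X 1 + φ (μ 3 0) * X 1 ^ 2
      + (φ (μ 2 0) + φ (μ 3 0 + μ 2 1) * X 1 + φ (μ 3 1) * X 1 ^ 2) * X 0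
      + (φ (μ 3 0) + φ (μ 3 1) * X 1 + φ (μ 3 2) * X 1 ^ 2) * X 0 ^ 2)
    (hgen : ∀ p : Fin 2 → AlgebraicClosure K,
      ¬(eval p D = 0 ∧ eval p (pderiv 0 D) = 0 ∧ eval p (pderiv 1 D) = 0))
    (ψ : K → MvPolynomial (Fin 3) (AlgebraicClosure K))
    (hψ : ∀ c, ψ c = C (algebraMap K (AlgebraicClosure K) c))
    (Dh : MvPolynomial (Fin 3) (AlgebraicClosure K))
    -- `Dh(x₁,x₂,z) = z⁴ · Δ̃(x₁/z, x₂/z)`, the degree-4 homogenization of `Δ̃`: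
    (hDh : Dh = ψ (μ 1 0) * X 2 ^ 4 + ψ (μ 2 0) * X 1 * X 2 ^ 3
      + ψ (μ 3 0) * X 1 ^ 2 * X 2 ^ 2
      + ψ (μ 2 0) * X 0 * X 2 ^ 3 + ψ (μ 3 0 + μ 2 1) * X 0 * X 1 * X 2 ^ 2
      + ψ (μ 3 1) * X 0 * X 1 ^ 2 * X 2
      + ψ (μ 3 0) * X 0 ^ 2 * X 2 ^ 2 + ψ (μ 3 1) * X 0 ^ 2 * X 1 * X 2
      + ψ (μ 3 2) * X 0 ^ 2 * X 1 ^ 2) :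
    ∀ u v w : AlgebraicClosure K, (u, v, w) ≠ (0, 0, 0) →
      ((eval ![u, v, w] Dh = 0 ∧ eval ![u, v, w] (pderiv 0 Dh) = 0
          ∧ eval ![u, v, w] (pderiv 1 Dh) = 0 ∧ eval ![u, v, w] (pderiv 2 Dh) = 0)
        ↔ (∃ c : AlgebraicClosure K,
            (u, v, w) = (c, 0, 0) ∨ (u, v, w) = (0, c, 0))) := by
  intro u v w hne
  set A := algebraMap K (AlgebraicClosure K) with hAdef
  have hAinj : Function.Injective A := A.injective
  have h32ne : A (μ 3 2) ≠ 0 := by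
    have h32 : μ 3 2 = -(μ 2 3) := by rw [hμ, hμ]; ring
    intro h
    exact hμ23 (by have := hAinj (h.trans (map_zero A).symm); rw [h32] at this; simpa using this)
  have e0 : eval ![u, v, w] Dh
      = A (μ 1 0)*w^4 + A (μ 2 0)*v*w^3 + A (μ 3 0)*v^2*w^2 + A (μ 2 0)*u*w^3
        + (A (μ 3 0)+A (μ 2 1))*u*v*w^2 + A (μ 3 1)*u*v^2*w + A (μ 3 0)*u^2*w^2
        + A (μ 3 1)*u^2*v*w + A (μ 3 2)*u^2*v^2 := by
    simp [hDh, hψ, map_add]; try ring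
  have e1 : eval ![u, v, w] (pderiv 0 Dh)
      = A (μ 2 0)*w^3 + (A (μ 3 0)+A (μ 2 1))*v*w^2 + A (μ 3 1)*v^2*w
        + 2*A (μ 3 0)*u*w^2 + 2*A (μ 3 1)*u*v*w + 2*A (μ 3 2)*u*v^2 := by
    simp [hDh, hψ, pderiv_mul, pderiv_pow, pderiv_X, Pi.single_apply, map_add]; try ring
  have e2 : eval ![u, v, w] (pderiv 1 Dh)
      = A (μ 2 0)*w^3 + 2*A (μ 3 0)*v*w^2 + (A (μ 3 0)+A (μ 2 1))*u*w^2
        + 2*A (μ 3 1)*u*v*w + A (μ 3 1)*u^2*w + 2*A (μ 3 2)*u^2*v := by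
    simp [hDh, hψ, pderiv_mul, pderiv_pow, pderiv_X, Pi.single_apply, map_add]; try ring
  have e3 : eval ![u, v, w] (pderiv 2 Dh)
      = 4*A (μ 1 0)*w^3 + 3*A (μ 2 0)*v*w^2 + 2*A (μ 3 0)*v^2*w + 3*A (μ 2 0)*u*w^2
        + 2*(A (μ 3 0)+A (μ 2 1))*u*v*w + A (μ 3 1)*u*v^2 + 2*A (μ 3 0)*u^2*w
        + A (μ 3 1)*u^2*v := by
    simp [hDh, hψ, pderiv_mul, pderiv_pow, pderiv_X, Pi.single_apply, map_add]; try ring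
  constructor
  · rintro ⟨h0, h1, h2, h3⟩
    rw [e0] at h0; rw [e1] at h1; rw [e2] at h2
    have hw0 : w = 0 := by
      by_contra hw
      obtain ⟨p, rfl⟩ : ∃ p, u = p * w := ⟨u / w, (div_mul_cancel₀ u hw).symm⟩
      obtain ⟨q, rfl⟩ : ∃ q, v = q * w := ⟨v / w, (div_mul_cancel₀ v hw).symm⟩
      apply hgen ![p, q]
      have eD : eval ![p, q] D
          = A (μ 1 0) + A (μ 2 0)*q + A (μ 3 0)*q^2
            + (A (μ 2 0) + (A (μ 3 0)+A (μ 2 1))*q + A (μ 3 1)*q^2)*p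
            + (A (μ 3 0) + A (μ 3 1)*q + A (μ 3 2)*q^2)*p^2 := by
        simp [hD, hφ, map_add]; try ring
      have eD0 : eval ![p, q] (pderiv 0 D)
          = (A (μ 2 0) + (A (μ 3 0)+A (μ 2 1))*q + A (μ 3 1)*q^2)
            + 2*(A (μ 3 0) + A (μ 3 1)*q + A (μ 3 2)*q^2)*p := by
        simp [hD, hφ, pderiv_mul, pderiv_pow, pderiv_X, Pi.single_apply, map_add]; try ring
      have eD1 : eval ![p, q] (pderiv 1 D)
          = A (μ 2 0) + 2*A (μ 3 0)*q
            + ((A (μ 3 0)+A (μ 2 1)) + 2*A (μ 3 1)*q)*p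
            + (A (μ 3 1) + 2*A (μ 3 2)*q)*p^2 := by
        simp [hD, hφ, pderiv_mul, pderiv_pow, pderiv_X, Pi.single_apply, map_add]; try ring
      refine ⟨?_, ?_, ?_⟩
      · rw [eD]
        have hz : (A (μ 1 0) + A (μ 2 0)*q + A (μ 3 0)*q^2
            + (A (μ 2 0) + (A (μ 3 0)+A (μ 2 1))*q + A (μ 3 1)*q^2)*p
            + (A (μ 3 0) + A (μ 3 1)*q + A (μ 3 2)*q^2)*p^2) * w^4 = 0 := by
          linear_combination h0
        exact (mul_eq_zero.mp hz).resolve_right (pow_ne_zero 4 hw)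
      · rw [eD0]
        have hz : ((A (μ 2 0) + (A (μ 3 0)+A (μ 2 1))*q + A (μ 3 1)*q^2)
            + 2*(A (μ 3 0) + A (μ 3 1)*q + A (μ 3 2)*q^2)*p) * w^3 = 0 := by
          linear_combination h1
        exact (mul_eq_zero.mp hz).resolve_right (pow_ne_zero 3 hw)
      · rw [eD1]
        have hz : (A (μ 2 0) + 2*A (μ 3 0)*q
            + ((A (μ 3 0)+A (μ 2 1)) + 2*A (μ 3 1)*q)*p
            + (A (μ 3 1) + 2*A (μ 3 2)*q)*p^2) * w^3 = 0 := by
          linear_combination h2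
        exact (mul_eq_zero.mp hz).resolve_right (pow_ne_zero 3 hw)
    subst hw0
    have hsq : A (μ 3 2) * (u * v) ^ 2 = 0 := by linear_combination h0
    have huv : u * v = 0 := by
      have h2z := (mul_eq_zero.mp hsq).resolve_left h32ne
      exact pow_eq_zero_iff (n := 2) (by norm_num) |>.mp h2z
    rcases mul_eq_zero.mp huv with hu | hv
    · exact ⟨v, Or.inr (by simp [hu])⟩
    · exact ⟨u, Or.inl (by simp [hv])⟩
  · rintro ⟨c, hc | hc⟩ <;> simp only [Prod.mk.injEq] at hc <;>
      obtain ⟨rfl, rfl, rfl⟩ := hc <;>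
      exact ⟨by rw [e0]; ring, by rw [e1]; ring, by rw [e2]; ring, by rw [e3]; ring⟩
end

section
/- In the polynomial ring ℤ[a₀,a₁,a₂,a₃,b₀,b₁,b₂,b₃], the resultant with respect to x of S̃(x) (degree 3) and T(x) (degree 2) satisfies Res_x(S̃(x), T(x)) = −μ_{2,3}³ · Res_x(P(x),Q(x))², where Res_x(P,Q) is the resultant of the cubics P and Q. (Identity (3.2) in the proof of Proposition 3.4 of the paper.) -/
set_option maxHeartbeats 4000000
set_option maxRecDepth 100000
set_option linter.unreachableTactic false
set_option linter.unusedTactic false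
set_option linter.unnecessarySeqFocus false
open Matrix

private theorem finv2 {n : ℕ} : ((2 : Fin (n+3)) : ℕ) = 2 := rfl
private theorem finv3 {n : ℕ} : ((3 : Fin (n+4)) : ℕ) = 3 := rfl
private theorem finv4 {n : ℕ} : ((4 : Fin (n+5)) : ℕ) = 4 := rfl
private theorem finv5 {n : ℕ} : ((5 : Fin (n+6)) : ℕ) = 5 := rfl

private theorem finmk2 {n : ℕ} (h : 2 < n + 3) : (⟨2, h⟩ : Fin (n+3)) = 2 := rfl
private theorem finmk3 {n : ℕ} (h : 3 < n + 4) : (⟨3, h⟩ : Fin (n+4)) = 3 := rfl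
private theorem finmk4 {n : ℕ} (h : 4 < n + 5) : (⟨4, h⟩ : Fin (n+5)) = 4 := rfl
private theorem finmk5 {n : ℕ} (h : 5 < n + 6) : (⟨5, h⟩ : Fin (n+6)) = 5 := rfl

private theorem my_det_fin_4 {R : Type*} [CommRing R] (A : Matrix (Fin 4) (Fin 4) R) :
    A.det = A 0 0 * A 1 1 * A 2 2 * A 3 3 - A 0 0 * A 1 1 * A 2 3 * A 3 2 - A 0 0 * A 1 2 * A 2 1 * A 3 3 + A 0 0 * A 1 2 * A 2 3 * A 3 1 + A 0 0 * A 1 3 * A 2 1 * A 3 2 - A 0 0 * A 1 3 * A 2 2 * A 3 1 - A 0 1 * A 1 0 * A 2 2 * A 3 3 + A 0 1 * A 1 0 * A 2 3 * A 3 2 + A 0 1 * A 1 2 * A 2 0 * A 3 3 - A 0 1 * A 1 2 * A 2 3 * A 3 0 - A 0 1 * A 1 3 * A 2 0 * A 3 2 + A 0 1 * A 1 3 * A 2 2 * A 3 0 + A 0 2 * A 1 0 * A 2 1 * A 3 3 - A 0 2 * A 1 0 * A 2 3 * A 3 1 - A 0 2 * A 1 1 * A 2 0 * A 3 3 + A 0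 2 * A 1 1 * A 2 3 * A 3 0 + A 0 2 * A 1 3 * A 2 0 * A 3 1 - A 0 2 * A 1 3 * A 2 1 * A 3 0 - A 0 3 * A 1 0 * A 2 1 * A 3 2 + A 0 3 * A 1 0 * A 2 2 * A 3 1 + A 0 3 * A 1 1 * A 2 0 * A 3 2 - A 0 3 * A 1 1 * A 2 2 * A 3 0 - A 0 3 * A 1 2 * A 2 0 * A 3 1 + A 0 3 * A 1 2 * A 2 1 * A 3 0 := by
  rw [Matrix.det_succ_row_zero]
  simp only [Fin.sum_univ_succ, Fin.sum_univ_zero, Matrix.det_fin_three, Matrix.submatrix_apply,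
    Fin.succAbove, Fin.castSucc, Fin.castAdd, Fin.castLE, Fin.lt_def, Fin.val_zero,
    Fin.val_succ, Fin.succ]
  norm_num [finmk2, finmk3, finmk4, finmk5, Fin.lt_def, finv2, finv3, finv4, finv5]
  ring

private theorem my_det_fin_5 {R : Type*} [CommRing R] (A : Matrix (Fin 5) (Fin 5) R) :
    A.det = A 0 0 * A 1 1 * A 2 2 * A 3 3 * A 4 4 - A 0 0 * A 1 1 * A 2 2 * A 3 4 * A 4 3 - A 0 0 * A 1 1 * A 2 3 * A 3 2 * A 4 4 + A 0 0 * A 1 1 * A 2 3 * A 3 4 * A 4 2 + A 0 0 * A 1 1 * A 2 4 * A 3 2 * A 4 3 - A 0 0 * A 1 1 * A 2 4 * A 3 3 * A 4 2 - A 0 0 * A 1 2 * A 2 1 * A 3 3 * A 4 4 + A 0 0 * A 1 2 * A 2 1 * A 3 4 * A 4 3 + A 0 0 * A 1 2 * A 2 3 * A 3 1 * A 4 4 - A 0 0 * A 1 2 * A 2 3 * A 3 4 * A 4 1 - A 0 0 * A 1 2 * A 2 4 * A 3 1 * A 4 3 + A 0 0 * A 1 2 * A 2 4 * A 3 3 *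 A 4 1 + A 0 0 * A 1 3 * A 2 1 * A 3 2 * A 4 4 - A 0 0 * A 1 3 * A 2 1 * A 3 4 * A 4 2 - A 0 0 * A 1 3 * A 2 2 * A 3 1 * A 4 4 + A 0 0 * A 1 3 * A 2 2 * A 3 4 * A 4 1 + A 0 0 * A 1 3 * A 2 4 * A 3 1 * A 4 2 - A 0 0 * A 1 3 * A 2 4 * A 3 2 * A 4 1 - A 0 0 * A 1 4 * A 2 1 * A 3 2 * A 4 3 + A 0 0 * A 1 4 * A 2 1 * A 3 3 * A 4 2 + A 0 0 * A 1 4 * A 2 2 * A 3 1 * A 4 3 - A 0 0 * A 1 4 * A 2 2 * A 3 3 * A 4 1 - A 0 0 * A 1 4 * A 2 3 * A 3 1 * A 4 2 + A 0 0 * A 1 4 * A 2 3 * A 3 2 * A 4 1 - A 0 1 * A 1 0 * A 2 2 * A 3 3 * A 4 4 + A 0 1 * A 1 0 * A 2 2 * A 3 4 * A 4 3 + A 0 1 * A 1 0 * A 2 3 * A 3 2 * A 4 4 - A 0 1 * A 1 0 * A 2 3 * A 3 4 * A 4 2 - A 0 1 * A 1 0 * A 2 4 * A 3 2 * A 4 3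 + A 0 1 * A 1 0 * A 2 4 * A 3 3 * A 4 2 + A 0 1 * A 1 2 * A 2 0 * A 3 3 * A 4 4 - A 0 1 * A 1 2 * A 2 0 * A 3 4 * A 4 3 - A 0 1 * A 1 2 * A 2 3 * A 3 0 * A 4 4 + A 0 1 * A 1 2 * A 2 3 * A 3 4 * A 4 0 + A 0 1 * A 1 2 * A 2 4 * A 3 0 * A 4 3 - A 0 1 * A 1 2 * A 2 4 * A 3 3 * A 4 0 - A 0 1 * A 1 3 * A 2 0 * A 3 2 * A 4 4 + A 0 1 * A 1 3 * A 2 0 * A 3 4 * A 4 2 + A 0 1 * A 1 3 * A 2 2 * A 3 0 * A 4 4 - A 0 1 * A 1 3 * A 2 2 * A 3 4 * A 4 0 - A 0 1 * A 1 3 * A 2 4 * A 3 0 * A 4 2 + A 0 1 * A 1 3 * A 2 4 * A 3 2 * A 4 0 + A 0 1 * A 1 4 * A 2 0 * A 3 2 * A 4 3 - A 0 1 * A 1 4 * A 2 0 * A 3 3 * A 4 2 - A 0 1 * A 1 4 * A 2 2 * A 3 0 * A 4 3 + A 0 1 * A 1 4 * A 2 2 * A 3 3 * A 4 0 + A 0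 1 * A 1 4 * A 2 3 * A 3 0 * A 4 2 - A 0 1 * A 1 4 * A 2 3 * A 3 2 * A 4 0 + A 0 2 * A 1 0 * A 2 1 * A 3 3 * A 4 4 - A 0 2 * A 1 0 * A 2 1 * A 3 4 * A 4 3 - A 0 2 * A 1 0 * A 2 3 * A 3 1 * A 4 4 + A 0 2 * A 1 0 * A 2 3 * A 3 4 * A 4 1 + A 0 2 * A 1 0 * A 2 4 * A 3 1 * A 4 3 - A 0 2 * A 1 0 * A 2 4 * A 3 3 * A 4 1 - A 0 2 * A 1 1 * A 2 0 * A 3 3 * A 4 4 + A 0 2 * A 1 1 * A 2 0 * A 3 4 * A 4 3 + A 0 2 * A 1 1 * A 2 3 * A 3 0 * A 4 4 - A 0 2 * A 1 1 * A 2 3 * A 3 4 * A 4 0 - A 0 2 * A 1 1 * A 2 4 * A 3 0 * A 4 3 + A 0 2 * A 1 1 * A 2 4 * A 3 3 * A 4 0 + A 0 2 * A 1 3 * A 2 0 * A 3 1 * A 4 4 - A 0 2 * A 1 3 * A 2 0 * A 3 4 * A 4 1 - A 0 2 * A 1 3 * A 2 1 * A 3 0 * A 4 4 + A 0 2 * A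 1 3 * A 2 1 * A 3 4 * A 4 0 + A 0 2 * A 1 3 * A 2 4 * A 3 0 * A 4 1 - A 0 2 * A 1 3 * A 2 4 * A 3 1 * A 4 0 - A 0 2 * A 1 4 * A 2 0 * A 3 1 * A 4 3 + A 0 2 * A 1 4 * A 2 0 * A 3 3 * A 4 1 + A 0 2 * A 1 4 * A 2 1 * A 3 0 * A 4 3 - A 0 2 * A 1 4 * A 2 1 * A 3 3 * A 4 0 - A 0 2 * A 1 4 * A 2 3 * A 3 0 * A 4 1 + A 0 2 * A 1 4 * A 2 3 * A 3 1 * A 4 0 - A 0 3 * A 1 0 * A 2 1 * A 3 2 * A 4 4 + A 0 3 * A 1 0 * A 2 1 * A 3 4 * A 4 2 + A 0 3 * A 1 0 * A 2 2 * A 3 1 * A 4 4 - A 0 3 * A 1 0 * A 2 2 * A 3 4 * A 4 1 - A 0 3 * A 1 0 * A 2 4 * A 3 1 * A 4 2 + A 0 3 * A 1 0 * A 2 4 * A 3 2 * A 4 1 + A 0 3 * A 1 1 * A 2 0 * A 3 2 * A 4 4 - A 0 3 * A 1 1 * A 2 0 * A 3 4 * A 4 2 - A 0 3 * A 1 1 *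 A 2 2 * A 3 0 * A 4 4 + A 0 3 * A 1 1 * A 2 2 * A 3 4 * A 4 0 + A 0 3 * A 1 1 * A 2 4 * A 3 0 * A 4 2 - A 0 3 * A 1 1 * A 2 4 * A 3 2 * A 4 0 - A 0 3 * A 1 2 * A 2 0 * A 3 1 * A 4 4 + A 0 3 * A 1 2 * A 2 0 * A 3 4 * A 4 1 + A 0 3 * A 1 2 * A 2 1 * A 3 0 * A 4 4 - A 0 3 * A 1 2 * A 2 1 * A 3 4 * A 4 0 - A 0 3 * A 1 2 * A 2 4 * A 3 0 * A 4 1 + A 0 3 * A 1 2 * A 2 4 * A 3 1 * A 4 0 + A 0 3 * A 1 4 * A 2 0 * A 3 1 * A 4 2 - A 0 3 * A 1 4 * A 2 0 * A 3 2 * A 4 1 - A 0 3 * A 1 4 * A 2 1 * A 3 0 * A 4 2 + A 0 3 * A 1 4 * A 2 1 * A 3 2 * A 4 0 + A 0 3 * A 1 4 * A 2 2 * A 3 0 * A 4 1 - A 0 3 * A 1 4 * A 2 2 * A 3 1 * A 4 0 + A 0 4 * A 1 0 * A 2 1 * A 3 2 * A 4 3 - A 0 4 * A 1 0 * A 2 1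 * A 3 3 * A 4 2 - A 0 4 * A 1 0 * A 2 2 * A 3 1 * A 4 3 + A 0 4 * A 1 0 * A 2 2 * A 3 3 * A 4 1 + A 0 4 * A 1 0 * A 2 3 * A 3 1 * A 4 2 - A 0 4 * A 1 0 * A 2 3 * A 3 2 * A 4 1 - A 0 4 * A 1 1 * A 2 0 * A 3 2 * A 4 3 + A 0 4 * A 1 1 * A 2 0 * A 3 3 * A 4 2 + A 0 4 * A 1 1 * A 2 2 * A 3 0 * A 4 3 - A 0 4 * A 1 1 * A 2 2 * A 3 3 * A 4 0 - A 0 4 * A 1 1 * A 2 3 * A 3 0 * A 4 2 + A 0 4 * A 1 1 * A 2 3 * A 3 2 * A 4 0 + A 0 4 * A 1 2 * A 2 0 * A 3 1 * A 4 3 - A 0 4 * A 1 2 * A 2 0 * A 3 3 * A 4 1 - A 0 4 * A 1 2 * A 2 1 * A 3 0 * A 4 3 + A 0 4 * A 1 2 * A 2 1 * A 3 3 * A 4 0 + A 0 4 * A 1 2 * A 2 3 * A 3 0 * A 4 1 - A 0 4 * A 1 2 * A 2 3 * A 3 1 * A 4 0 - A 0 4 * A 1 3 * A 2 0 * A 3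 1 * A 4 2 + A 0 4 * A 1 3 * A 2 0 * A 3 2 * A 4 1 + A 0 4 * A 1 3 * A 2 1 * A 3 0 * A 4 2 - A 0 4 * A 1 3 * A 2 1 * A 3 2 * A 4 0 - A 0 4 * A 1 3 * A 2 2 * A 3 0 * A 4 1 + A 0 4 * A 1 3 * A 2 2 * A 3 1 * A 4 0 := by
  rw [Matrix.det_succ_row_zero]
  simp (config := { decide := true }) only [Fin.sum_univ_succ, Fin.sum_univ_zero,
    my_det_fin_4, Matrix.submatrix_apply,
    Fin.succAbove, Fin.castSucc, Fin.castAdd, Fin.castLE, Fin.lt_def, Fin.val_zero,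
    Fin.val_succ, Fin.succ, Fin.mk_lt_mk, Fin.val_one]
  norm_num [finmk2, finmk3, finmk4, finmk5, Fin.lt_def, finv2, finv3, finv4, finv5]
  ring

private theorem my_det_fin_6 {R : Type*} [CommRing R] (A : Matrix (Fin 6) (Fin 6) R) :
    A.det = A 0 0 * A 1 1 * A 2 2 * A 3 3 * A 4 4 * A 5 5 - A 0 0 * A 1 1 * A 2 2 * A 3 3 * A 4 5 * A 5 4 - A 0 0 * A 1 1 * A 2 2 * A 3 4 * A 4 3 * A 5 5 + A 0 0 * A 1 1 * A 2 2 * A 3 4 * A 4 5 * A 5 3 + A 0 0 * A 1 1 * A 2 2 * A 3 5 * A 4 3 * A 5 4 - A 0 0 * A 1 1 * A 2 2 * A 3 5 * A 4 4 * A 5 3 - A 0 0 * A 1 1 * A 2 3 * A 3 2 * A 4 4 * A 5 5 + A 0 0 * A 1 1 * A 2 3 * A 3 2 * A 4 5 * A 5 4 + A 0 0 * A 1 1 * A 2 3 * A 3 4 * A 4 2 * A 5 5 - A 0 0 * A 1 1 * A 2 3 * A 3 4 * A 4 5 * A 5 2 - A 0 0 * A 1 1 * A 2 3 * A 3 5 *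 A 4 2 * A 5 4 + A 0 0 * A 1 1 * A 2 3 * A 3 5 * A 4 4 * A 5 2 + A 0 0 * A 1 1 * A 2 4 * A 3 2 * A 4 3 * A 5 5 - A 0 0 * A 1 1 * A 2 4 * A 3 2 * A 4 5 * A 5 3 - A 0 0 * A 1 1 * A 2 4 * A 3 3 * A 4 2 * A 5 5 + A 0 0 * A 1 1 * A 2 4 * A 3 3 * A 4 5 * A 5 2 + A 0 0 * A 1 1 * A 2 4 * A 3 5 * A 4 2 * A 5 3 - A 0 0 * A 1 1 * A 2 4 * A 3 5 * A 4 3 * A 5 2 - A 0 0 * A 1 1 * A 2 5 * A 3 2 * A 4 3 * A 5 4 + A 0 0 * A 1 1 * A 2 5 * A 3 2 * A 4 4 * A 5 3 + A 0 0 * A 1 1 * A 2 5 * A 3 3 * A 4 2 * A 5 4 - A 0 0 * A 1 1 * A 2 5 * A 3 3 * A 4 4 * A 5 2 - A 0 0 * A 1 1 * A 2 5 * A 3 4 * A 4 2 * A 5 3 + A 0 0 * A 1 1 * A 2 5 * A 3 4 * A 4 3 * A 5 2 - A 0 0 * A 1 2 * A 2 1 * A 3 3 * A 4 4 * A 5 5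 + A 0 0 * A 1 2 * A 2 1 * A 3 3 * A 4 5 * A 5 4 + A 0 0 * A 1 2 * A 2 1 * A 3 4 * A 4 3 * A 5 5 - A 0 0 * A 1 2 * A 2 1 * A 3 4 * A 4 5 * A 5 3 - A 0 0 * A 1 2 * A 2 1 * A 3 5 * A 4 3 * A 5 4 + A 0 0 * A 1 2 * A 2 1 * A 3 5 * A 4 4 * A 5 3 + A 0 0 * A 1 2 * A 2 3 * A 3 1 * A 4 4 * A 5 5 - A 0 0 * A 1 2 * A 2 3 * A 3 1 * A 4 5 * A 5 4 - A 0 0 * A 1 2 * A 2 3 * A 3 4 * A 4 1 * A 5 5 + A 0 0 * A 1 2 * A 2 3 * A 3 4 * A 4 5 * A 5 1 + A 0 0 * A 1 2 * A 2 3 * A 3 5 * A 4 1 * A 5 4 - A 0 0 * A 1 2 * A 2 3 * A 3 5 * A 4 4 * A 5 1 - A 0 0 * A 1 2 * A 2 4 * A 3 1 * A 4 3 * A 5 5 + A 0 0 * A 1 2 * A 2 4 * A 3 1 * A 4 5 * A 5 3 + A 0 0 * A 1 2 * A 2 4 * A 3 3 * A 4 1 * A 5 5 - A 0 0 * A 1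 2 * A 2 4 * A 3 3 * A 4 5 * A 5 1 - A 0 0 * A 1 2 * A 2 4 * A 3 5 * A 4 1 * A 5 3 + A 0 0 * A 1 2 * A 2 4 * A 3 5 * A 4 3 * A 5 1 + A 0 0 * A 1 2 * A 2 5 * A 3 1 * A 4 3 * A 5 4 - A 0 0 * A 1 2 * A 2 5 * A 3 1 * A 4 4 * A 5 3 - A 0 0 * A 1 2 * A 2 5 * A 3 3 * A 4 1 * A 5 4 + A 0 0 * A 1 2 * A 2 5 * A 3 3 * A 4 4 * A 5 1 + A 0 0 * A 1 2 * A 2 5 * A 3 4 * A 4 1 * A 5 3 - A 0 0 * A 1 2 * A 2 5 * A 3 4 * A 4 3 * A 5 1 + A 0 0 * A 1 3 * A 2 1 * A 3 2 * A 4 4 * A 5 5 - A 0 0 * A 1 3 * A 2 1 * A 3 2 * A 4 5 * A 5 4 - A 0 0 * A 1 3 * A 2 1 * A 3 4 * A 4 2 * A 5 5 + A 0 0 * A 1 3 * A 2 1 * A 3 4 * A 4 5 * A 5 2 + A 0 0 * A 1 3 * A 2 1 * A 3 5 * A 4 2 * A 5 4 - A 0 0 * A 1 3 * A 2 1 * A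 3 5 * A 4 4 * A 5 2 - A 0 0 * A 1 3 * A 2 2 * A 3 1 * A 4 4 * A 5 5 + A 0 0 * A 1 3 * A 2 2 * A 3 1 * A 4 5 * A 5 4 + A 0 0 * A 1 3 * A 2 2 * A 3 4 * A 4 1 * A 5 5 - A 0 0 * A 1 3 * A 2 2 * A 3 4 * A 4 5 * A 5 1 - A 0 0 * A 1 3 * A 2 2 * A 3 5 * A 4 1 * A 5 4 + A 0 0 * A 1 3 * A 2 2 * A 3 5 * A 4 4 * A 5 1 + A 0 0 * A 1 3 * A 2 4 * A 3 1 * A 4 2 * A 5 5 - A 0 0 * A 1 3 * A 2 4 * A 3 1 * A 4 5 * A 5 2 - A 0 0 * A 1 3 * A 2 4 * A 3 2 * A 4 1 * A 5 5 + A 0 0 * A 1 3 * A 2 4 * A 3 2 * A 4 5 * A 5 1 + A 0 0 * A 1 3 * A 2 4 * A 3 5 * A 4 1 * A 5 2 - A 0 0 * A 1 3 * A 2 4 * A 3 5 * A 4 2 * A 5 1 - A 0 0 * A 1 3 * A 2 5 * A 3 1 * A 4 2 * A 5 4 + A 0 0 * A 1 3 * A 2 5 * A 3 1 * A 4 4 *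 A 5 2 + A 0 0 * A 1 3 * A 2 5 * A 3 2 * A 4 1 * A 5 4 - A 0 0 * A 1 3 * A 2 5 * A 3 2 * A 4 4 * A 5 1 - A 0 0 * A 1 3 * A 2 5 * A 3 4 * A 4 1 * A 5 2 + A 0 0 * A 1 3 * A 2 5 * A 3 4 * A 4 2 * A 5 1 - A 0 0 * A 1 4 * A 2 1 * A 3 2 * A 4 3 * A 5 5 + A 0 0 * A 1 4 * A 2 1 * A 3 2 * A 4 5 * A 5 3 + A 0 0 * A 1 4 * A 2 1 * A 3 3 * A 4 2 * A 5 5 - A 0 0 * A 1 4 * A 2 1 * A 3 3 * A 4 5 * A 5 2 - A 0 0 * A 1 4 * A 2 1 * A 3 5 * A 4 2 * A 5 3 + A 0 0 * A 1 4 * A 2 1 * A 3 5 * A 4 3 * A 5 2 + A 0 0 * A 1 4 * A 2 2 * A 3 1 * A 4 3 * A 5 5 - A 0 0 * A 1 4 * A 2 2 * A 3 1 * A 4 5 * A 5 3 - A 0 0 * A 1 4 * A 2 2 * A 3 3 * A 4 1 * A 5 5 + A 0 0 * A 1 4 * A 2 2 * A 3 3 * A 4 5 * A 5 1 + A 0 0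 * A 1 4 * A 2 2 * A 3 5 * A 4 1 * A 5 3 - A 0 0 * A 1 4 * A 2 2 * A 3 5 * A 4 3 * A 5 1 - A 0 0 * A 1 4 * A 2 3 * A 3 1 * A 4 2 * A 5 5 + A 0 0 * A 1 4 * A 2 3 * A 3 1 * A 4 5 * A 5 2 + A 0 0 * A 1 4 * A 2 3 * A 3 2 * A 4 1 * A 5 5 - A 0 0 * A 1 4 * A 2 3 * A 3 2 * A 4 5 * A 5 1 - A 0 0 * A 1 4 * A 2 3 * A 3 5 * A 4 1 * A 5 2 + A 0 0 * A 1 4 * A 2 3 * A 3 5 * A 4 2 * A 5 1 + A 0 0 * A 1 4 * A 2 5 * A 3 1 * A 4 2 * A 5 3 - A 0 0 * A 1 4 * A 2 5 * A 3 1 * A 4 3 * A 5 2 - A 0 0 * A 1 4 * A 2 5 * A 3 2 * A 4 1 * A 5 3 + A 0 0 * A 1 4 * A 2 5 * A 3 2 * A 4 3 * A 5 1 + A 0 0 * A 1 4 * A 2 5 * A 3 3 * A 4 1 * A 5 2 - A 0 0 * A 1 4 * A 2 5 * A 3 3 * A 4 2 * A 5 1 + A 0 0 * A 1 5 * A 2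 1 * A 3 2 * A 4 3 * A 5 4 - A 0 0 * A 1 5 * A 2 1 * A 3 2 * A 4 4 * A 5 3 - A 0 0 * A 1 5 * A 2 1 * A 3 3 * A 4 2 * A 5 4 + A 0 0 * A 1 5 * A 2 1 * A 3 3 * A 4 4 * A 5 2 + A 0 0 * A 1 5 * A 2 1 * A 3 4 * A 4 2 * A 5 3 - A 0 0 * A 1 5 * A 2 1 * A 3 4 * A 4 3 * A 5 2 - A 0 0 * A 1 5 * A 2 2 * A 3 1 * A 4 3 * A 5 4 + A 0 0 * A 1 5 * A 2 2 * A 3 1 * A 4 4 * A 5 3 + A 0 0 * A 1 5 * A 2 2 * A 3 3 * A 4 1 * A 5 4 - A 0 0 * A 1 5 * A 2 2 * A 3 3 * A 4 4 * A 5 1 - A 0 0 * A 1 5 * A 2 2 * A 3 4 * A 4 1 * A 5 3 + A 0 0 * A 1 5 * A 2 2 * A 3 4 * A 4 3 * A 5 1 + A 0 0 * A 1 5 * A 2 3 * A 3 1 * A 4 2 * A 5 4 - A 0 0 * A 1 5 * A 2 3 * A 3 1 * A 4 4 * A 5 2 - A 0 0 * A 1 5 * A 2 3 * A 3 2 * A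 4 1 * A 5 4 + A 0 0 * A 1 5 * A 2 3 * A 3 2 * A 4 4 * A 5 1 + A 0 0 * A 1 5 * A 2 3 * A 3 4 * A 4 1 * A 5 2 - A 0 0 * A 1 5 * A 2 3 * A 3 4 * A 4 2 * A 5 1 - A 0 0 * A 1 5 * A 2 4 * A 3 1 * A 4 2 * A 5 3 + A 0 0 * A 1 5 * A 2 4 * A 3 1 * A 4 3 * A 5 2 + A 0 0 * A 1 5 * A 2 4 * A 3 2 * A 4 1 * A 5 3 - A 0 0 * A 1 5 * A 2 4 * A 3 2 * A 4 3 * A 5 1 - A 0 0 * A 1 5 * A 2 4 * A 3 3 * A 4 1 * A 5 2 + A 0 0 * A 1 5 * A 2 4 * A 3 3 * A 4 2 * A 5 1 - A 0 1 * A 1 0 * A 2 2 * A 3 3 * A 4 4 * A 5 5 + A 0 1 * A 1 0 * A 2 2 * A 3 3 * A 4 5 * A 5 4 + A 0 1 * A 1 0 * A 2 2 * A 3 4 * A 4 3 * A 5 5 - A 0 1 * A 1 0 * A 2 2 * A 3 4 * A 4 5 * A 5 3 - A 0 1 * A 1 0 * A 2 2 * A 3 5 * A 4 3 * A 5 4 +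 A 0 1 * A 1 0 * A 2 2 * A 3 5 * A 4 4 * A 5 3 + A 0 1 * A 1 0 * A 2 3 * A 3 2 * A 4 4 * A 5 5 - A 0 1 * A 1 0 * A 2 3 * A 3 2 * A 4 5 * A 5 4 - A 0 1 * A 1 0 * A 2 3 * A 3 4 * A 4 2 * A 5 5 + A 0 1 * A 1 0 * A 2 3 * A 3 4 * A 4 5 * A 5 2 + A 0 1 * A 1 0 * A 2 3 * A 3 5 * A 4 2 * A 5 4 - A 0 1 * A 1 0 * A 2 3 * A 3 5 * A 4 4 * A 5 2 - A 0 1 * A 1 0 * A 2 4 * A 3 2 * A 4 3 * A 5 5 + A 0 1 * A 1 0 * A 2 4 * A 3 2 * A 4 5 * A 5 3 + A 0 1 * A 1 0 * A 2 4 * A 3 3 * A 4 2 * A 5 5 - A 0 1 * A 1 0 * A 2 4 * A 3 3 * A 4 5 * A 5 2 - A 0 1 * A 1 0 * A 2 4 * A 3 5 * A 4 2 * A 5 3 + A 0 1 * A 1 0 * A 2 4 * A 3 5 * A 4 3 * A 5 2 + A 0 1 * A 1 0 * A 2 5 * A 3 2 * A 4 3 * A 5 4 - A 0 1 * A 1 0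 * A 2 5 * A 3 2 * A 4 4 * A 5 3 - A 0 1 * A 1 0 * A 2 5 * A 3 3 * A 4 2 * A 5 4 + A 0 1 * A 1 0 * A 2 5 * A 3 3 * A 4 4 * A 5 2 + A 0 1 * A 1 0 * A 2 5 * A 3 4 * A 4 2 * A 5 3 - A 0 1 * A 1 0 * A 2 5 * A 3 4 * A 4 3 * A 5 2 + A 0 1 * A 1 2 * A 2 0 * A 3 3 * A 4 4 * A 5 5 - A 0 1 * A 1 2 * A 2 0 * A 3 3 * A 4 5 * A 5 4 - A 0 1 * A 1 2 * A 2 0 * A 3 4 * A 4 3 * A 5 5 + A 0 1 * A 1 2 * A 2 0 * A 3 4 * A 4 5 * A 5 3 + A 0 1 * A 1 2 * A 2 0 * A 3 5 * A 4 3 * A 5 4 - A 0 1 * A 1 2 * A 2 0 * A 3 5 * A 4 4 * A 5 3 - A 0 1 * A 1 2 * A 2 3 * A 3 0 * A 4 4 * A 5 5 + A 0 1 * A 1 2 * A 2 3 * A 3 0 * A 4 5 * A 5 4 + A 0 1 * A 1 2 * A 2 3 * A 3 4 * A 4 0 * A 5 5 - A 0 1 * A 1 2 * A 2 3 * A 3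 4 * A 4 5 * A 5 0 - A 0 1 * A 1 2 * A 2 3 * A 3 5 * A 4 0 * A 5 4 + A 0 1 * A 1 2 * A 2 3 * A 3 5 * A 4 4 * A 5 0 + A 0 1 * A 1 2 * A 2 4 * A 3 0 * A 4 3 * A 5 5 - A 0 1 * A 1 2 * A 2 4 * A 3 0 * A 4 5 * A 5 3 - A 0 1 * A 1 2 * A 2 4 * A 3 3 * A 4 0 * A 5 5 + A 0 1 * A 1 2 * A 2 4 * A 3 3 * A 4 5 * A 5 0 + A 0 1 * A 1 2 * A 2 4 * A 3 5 * A 4 0 * A 5 3 - A 0 1 * A 1 2 * A 2 4 * A 3 5 * A 4 3 * A 5 0 - A 0 1 * A 1 2 * A 2 5 * A 3 0 * A 4 3 * A 5 4 + A 0 1 * A 1 2 * A 2 5 * A 3 0 * A 4 4 * A 5 3 + A 0 1 * A 1 2 * A 2 5 * A 3 3 * A 4 0 * A 5 4 - A 0 1 * A 1 2 * A 2 5 * A 3 3 * A 4 4 * A 5 0 - A 0 1 * A 1 2 * A 2 5 * A 3 4 * A 4 0 * A 5 3 + A 0 1 * A 1 2 * A 2 5 * A 3 4 * A 4 3 * A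 5 0 - A 0 1 * A 1 3 * A 2 0 * A 3 2 * A 4 4 * A 5 5 + A 0 1 * A 1 3 * A 2 0 * A 3 2 * A 4 5 * A 5 4 + A 0 1 * A 1 3 * A 2 0 * A 3 4 * A 4 2 * A 5 5 - A 0 1 * A 1 3 * A 2 0 * A 3 4 * A 4 5 * A 5 2 - A 0 1 * A 1 3 * A 2 0 * A 3 5 * A 4 2 * A 5 4 + A 0 1 * A 1 3 * A 2 0 * A 3 5 * A 4 4 * A 5 2 + A 0 1 * A 1 3 * A 2 2 * A 3 0 * A 4 4 * A 5 5 - A 0 1 * A 1 3 * A 2 2 * A 3 0 * A 4 5 * A 5 4 - A 0 1 * A 1 3 * A 2 2 * A 3 4 * A 4 0 * A 5 5 + A 0 1 * A 1 3 * A 2 2 * A 3 4 * A 4 5 * A 5 0 + A 0 1 * A 1 3 * A 2 2 * A 3 5 * A 4 0 * A 5 4 - A 0 1 * A 1 3 * A 2 2 * A 3 5 * A 4 4 * A 5 0 - A 0 1 * A 1 3 * A 2 4 * A 3 0 * A 4 2 * A 5 5 + A 0 1 * A 1 3 * A 2 4 * A 3 0 * A 4 5 * A 5 2 + A 0 1 *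 A 1 3 * A 2 4 * A 3 2 * A 4 0 * A 5 5 - A 0 1 * A 1 3 * A 2 4 * A 3 2 * A 4 5 * A 5 0 - A 0 1 * A 1 3 * A 2 4 * A 3 5 * A 4 0 * A 5 2 + A 0 1 * A 1 3 * A 2 4 * A 3 5 * A 4 2 * A 5 0 + A 0 1 * A 1 3 * A 2 5 * A 3 0 * A 4 2 * A 5 4 - A 0 1 * A 1 3 * A 2 5 * A 3 0 * A 4 4 * A 5 2 - A 0 1 * A 1 3 * A 2 5 * A 3 2 * A 4 0 * A 5 4 + A 0 1 * A 1 3 * A 2 5 * A 3 2 * A 4 4 * A 5 0 + A 0 1 * A 1 3 * A 2 5 * A 3 4 * A 4 0 * A 5 2 - A 0 1 * A 1 3 * A 2 5 * A 3 4 * A 4 2 * A 5 0 + A 0 1 * A 1 4 * A 2 0 * A 3 2 * A 4 3 * A 5 5 - A 0 1 * A 1 4 * A 2 0 * A 3 2 * A 4 5 * A 5 3 - A 0 1 * A 1 4 * A 2 0 * A 3 3 * A 4 2 * A 5 5 + A 0 1 * A 1 4 * A 2 0 * A 3 3 * A 4 5 * A 5 2 + A 0 1 * A 1 4 * A 2 0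 * A 3 5 * A 4 2 * A 5 3 - A 0 1 * A 1 4 * A 2 0 * A 3 5 * A 4 3 * A 5 2 - A 0 1 * A 1 4 * A 2 2 * A 3 0 * A 4 3 * A 5 5 + A 0 1 * A 1 4 * A 2 2 * A 3 0 * A 4 5 * A 5 3 + A 0 1 * A 1 4 * A 2 2 * A 3 3 * A 4 0 * A 5 5 - A 0 1 * A 1 4 * A 2 2 * A 3 3 * A 4 5 * A 5 0 - A 0 1 * A 1 4 * A 2 2 * A 3 5 * A 4 0 * A 5 3 + A 0 1 * A 1 4 * A 2 2 * A 3 5 * A 4 3 * A 5 0 + A 0 1 * A 1 4 * A 2 3 * A 3 0 * A 4 2 * A 5 5 - A 0 1 * A 1 4 * A 2 3 * A 3 0 * A 4 5 * A 5 2 - A 0 1 * A 1 4 * A 2 3 * A 3 2 * A 4 0 * A 5 5 + A 0 1 * A 1 4 * A 2 3 * A 3 2 * A 4 5 * A 5 0 + A 0 1 * A 1 4 * A 2 3 * A 3 5 * A 4 0 * A 5 2 - A 0 1 * A 1 4 * A 2 3 * A 3 5 * A 4 2 * A 5 0 - A 0 1 * A 1 4 * A 2 5 * A 3 0 * A 4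 2 * A 5 3 + A 0 1 * A 1 4 * A 2 5 * A 3 0 * A 4 3 * A 5 2 + A 0 1 * A 1 4 * A 2 5 * A 3 2 * A 4 0 * A 5 3 - A 0 1 * A 1 4 * A 2 5 * A 3 2 * A 4 3 * A 5 0 - A 0 1 * A 1 4 * A 2 5 * A 3 3 * A 4 0 * A 5 2 + A 0 1 * A 1 4 * A 2 5 * A 3 3 * A 4 2 * A 5 0 - A 0 1 * A 1 5 * A 2 0 * A 3 2 * A 4 3 * A 5 4 + A 0 1 * A 1 5 * A 2 0 * A 3 2 * A 4 4 * A 5 3 + A 0 1 * A 1 5 * A 2 0 * A 3 3 * A 4 2 * A 5 4 - A 0 1 * A 1 5 * A 2 0 * A 3 3 * A 4 4 * A 5 2 - A 0 1 * A 1 5 * A 2 0 * A 3 4 * A 4 2 * A 5 3 + A 0 1 * A 1 5 * A 2 0 * A 3 4 * A 4 3 * A 5 2 + A 0 1 * A 1 5 * A 2 2 * A 3 0 * A 4 3 * A 5 4 - A 0 1 * A 1 5 * A 2 2 * A 3 0 * A 4 4 * A 5 3 - A 0 1 * A 1 5 * A 2 2 * A 3 3 * A 4 0 * A 5 4 + A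 0 1 * A 1 5 * A 2 2 * A 3 3 * A 4 4 * A 5 0 + A 0 1 * A 1 5 * A 2 2 * A 3 4 * A 4 0 * A 5 3 - A 0 1 * A 1 5 * A 2 2 * A 3 4 * A 4 3 * A 5 0 - A 0 1 * A 1 5 * A 2 3 * A 3 0 * A 4 2 * A 5 4 + A 0 1 * A 1 5 * A 2 3 * A 3 0 * A 4 4 * A 5 2 + A 0 1 * A 1 5 * A 2 3 * A 3 2 * A 4 0 * A 5 4 - A 0 1 * A 1 5 * A 2 3 * A 3 2 * A 4 4 * A 5 0 - A 0 1 * A 1 5 * A 2 3 * A 3 4 * A 4 0 * A 5 2 + A 0 1 * A 1 5 * A 2 3 * A 3 4 * A 4 2 * A 5 0 + A 0 1 * A 1 5 * A 2 4 * A 3 0 * A 4 2 * A 5 3 - A 0 1 * A 1 5 * A 2 4 * A 3 0 * A 4 3 * A 5 2 - A 0 1 * A 1 5 * A 2 4 * A 3 2 * A 4 0 * A 5 3 + A 0 1 * A 1 5 * A 2 4 * A 3 2 * A 4 3 * A 5 0 + A 0 1 * A 1 5 * A 2 4 * A 3 3 * A 4 0 * A 5 2 - A 0 1 * A 1 5 *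 A 2 4 * A 3 3 * A 4 2 * A 5 0 + A 0 2 * A 1 0 * A 2 1 * A 3 3 * A 4 4 * A 5 5 - A 0 2 * A 1 0 * A 2 1 * A 3 3 * A 4 5 * A 5 4 - A 0 2 * A 1 0 * A 2 1 * A 3 4 * A 4 3 * A 5 5 + A 0 2 * A 1 0 * A 2 1 * A 3 4 * A 4 5 * A 5 3 + A 0 2 * A 1 0 * A 2 1 * A 3 5 * A 4 3 * A 5 4 - A 0 2 * A 1 0 * A 2 1 * A 3 5 * A 4 4 * A 5 3 - A 0 2 * A 1 0 * A 2 3 * A 3 1 * A 4 4 * A 5 5 + A 0 2 * A 1 0 * A 2 3 * A 3 1 * A 4 5 * A 5 4 + A 0 2 * A 1 0 * A 2 3 * A 3 4 * A 4 1 * A 5 5 - A 0 2 * A 1 0 * A 2 3 * A 3 4 * A 4 5 * A 5 1 - A 0 2 * A 1 0 * A 2 3 * A 3 5 * A 4 1 * A 5 4 + A 0 2 * A 1 0 * A 2 3 * A 3 5 * A 4 4 * A 5 1 + A 0 2 * A 1 0 * A 2 4 * A 3 1 * A 4 3 * A 5 5 - A 0 2 * A 1 0 * A 2 4 * A 3 1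 * A 4 5 * A 5 3 - A 0 2 * A 1 0 * A 2 4 * A 3 3 * A 4 1 * A 5 5 + A 0 2 * A 1 0 * A 2 4 * A 3 3 * A 4 5 * A 5 1 + A 0 2 * A 1 0 * A 2 4 * A 3 5 * A 4 1 * A 5 3 - A 0 2 * A 1 0 * A 2 4 * A 3 5 * A 4 3 * A 5 1 - A 0 2 * A 1 0 * A 2 5 * A 3 1 * A 4 3 * A 5 4 + A 0 2 * A 1 0 * A 2 5 * A 3 1 * A 4 4 * A 5 3 + A 0 2 * A 1 0 * A 2 5 * A 3 3 * A 4 1 * A 5 4 - A 0 2 * A 1 0 * A 2 5 * A 3 3 * A 4 4 * A 5 1 - A 0 2 * A 1 0 * A 2 5 * A 3 4 * A 4 1 * A 5 3 + A 0 2 * A 1 0 * A 2 5 * A 3 4 * A 4 3 * A 5 1 - A 0 2 * A 1 1 * A 2 0 * A 3 3 * A 4 4 * A 5 5 + A 0 2 * A 1 1 * A 2 0 * A 3 3 * A 4 5 * A 5 4 + A 0 2 * A 1 1 * A 2 0 * A 3 4 * A 4 3 * A 5 5 - A 0 2 * A 1 1 * A 2 0 * A 3 4 * A 4 5 * A 5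 3 - A 0 2 * A 1 1 * A 2 0 * A 3 5 * A 4 3 * A 5 4 + A 0 2 * A 1 1 * A 2 0 * A 3 5 * A 4 4 * A 5 3 + A 0 2 * A 1 1 * A 2 3 * A 3 0 * A 4 4 * A 5 5 - A 0 2 * A 1 1 * A 2 3 * A 3 0 * A 4 5 * A 5 4 - A 0 2 * A 1 1 * A 2 3 * A 3 4 * A 4 0 * A 5 5 + A 0 2 * A 1 1 * A 2 3 * A 3 4 * A 4 5 * A 5 0 + A 0 2 * A 1 1 * A 2 3 * A 3 5 * A 4 0 * A 5 4 - A 0 2 * A 1 1 * A 2 3 * A 3 5 * A 4 4 * A 5 0 - A 0 2 * A 1 1 * A 2 4 * A 3 0 * A 4 3 * A 5 5 + A 0 2 * A 1 1 * A 2 4 * A 3 0 * A 4 5 * A 5 3 + A 0 2 * A 1 1 * A 2 4 * A 3 3 * A 4 0 * A 5 5 - A 0 2 * A 1 1 * A 2 4 * A 3 3 * A 4 5 * A 5 0 - A 0 2 * A 1 1 * A 2 4 * A 3 5 * A 4 0 * A 5 3 + A 0 2 * A 1 1 * A 2 4 * A 3 5 * A 4 3 * A 5 0 + A 0 2 * A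 1 1 * A 2 5 * A 3 0 * A 4 3 * A 5 4 - A 0 2 * A 1 1 * A 2 5 * A 3 0 * A 4 4 * A 5 3 - A 0 2 * A 1 1 * A 2 5 * A 3 3 * A 4 0 * A 5 4 + A 0 2 * A 1 1 * A 2 5 * A 3 3 * A 4 4 * A 5 0 + A 0 2 * A 1 1 * A 2 5 * A 3 4 * A 4 0 * A 5 3 - A 0 2 * A 1 1 * A 2 5 * A 3 4 * A 4 3 * A 5 0 + A 0 2 * A 1 3 * A 2 0 * A 3 1 * A 4 4 * A 5 5 - A 0 2 * A 1 3 * A 2 0 * A 3 1 * A 4 5 * A 5 4 - A 0 2 * A 1 3 * A 2 0 * A 3 4 * A 4 1 * A 5 5 + A 0 2 * A 1 3 * A 2 0 * A 3 4 * A 4 5 * A 5 1 + A 0 2 * A 1 3 * A 2 0 * A 3 5 * A 4 1 * A 5 4 - A 0 2 * A 1 3 * A 2 0 * A 3 5 * A 4 4 * A 5 1 - A 0 2 * A 1 3 * A 2 1 * A 3 0 * A 4 4 * A 5 5 + A 0 2 * A 1 3 * A 2 1 * A 3 0 * A 4 5 * A 5 4 + A 0 2 * A 1 3 * A 2 1 *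 A 3 4 * A 4 0 * A 5 5 - A 0 2 * A 1 3 * A 2 1 * A 3 4 * A 4 5 * A 5 0 - A 0 2 * A 1 3 * A 2 1 * A 3 5 * A 4 0 * A 5 4 + A 0 2 * A 1 3 * A 2 1 * A 3 5 * A 4 4 * A 5 0 + A 0 2 * A 1 3 * A 2 4 * A 3 0 * A 4 1 * A 5 5 - A 0 2 * A 1 3 * A 2 4 * A 3 0 * A 4 5 * A 5 1 - A 0 2 * A 1 3 * A 2 4 * A 3 1 * A 4 0 * A 5 5 + A 0 2 * A 1 3 * A 2 4 * A 3 1 * A 4 5 * A 5 0 + A 0 2 * A 1 3 * A 2 4 * A 3 5 * A 4 0 * A 5 1 - A 0 2 * A 1 3 * A 2 4 * A 3 5 * A 4 1 * A 5 0 - A 0 2 * A 1 3 * A 2 5 * A 3 0 * A 4 1 * A 5 4 + A 0 2 * A 1 3 * A 2 5 * A 3 0 * A 4 4 * A 5 1 + A 0 2 * A 1 3 * A 2 5 * A 3 1 * A 4 0 * A 5 4 - A 0 2 * A 1 3 * A 2 5 * A 3 1 * A 4 4 * A 5 0 - A 0 2 * A 1 3 * A 2 5 * A 3 4 * A 4 0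 * A 5 1 + A 0 2 * A 1 3 * A 2 5 * A 3 4 * A 4 1 * A 5 0 - A 0 2 * A 1 4 * A 2 0 * A 3 1 * A 4 3 * A 5 5 + A 0 2 * A 1 4 * A 2 0 * A 3 1 * A 4 5 * A 5 3 + A 0 2 * A 1 4 * A 2 0 * A 3 3 * A 4 1 * A 5 5 - A 0 2 * A 1 4 * A 2 0 * A 3 3 * A 4 5 * A 5 1 - A 0 2 * A 1 4 * A 2 0 * A 3 5 * A 4 1 * A 5 3 + A 0 2 * A 1 4 * A 2 0 * A 3 5 * A 4 3 * A 5 1 + A 0 2 * A 1 4 * A 2 1 * A 3 0 * A 4 3 * A 5 5 - A 0 2 * A 1 4 * A 2 1 * A 3 0 * A 4 5 * A 5 3 - A 0 2 * A 1 4 * A 2 1 * A 3 3 * A 4 0 * A 5 5 + A 0 2 * A 1 4 * A 2 1 * A 3 3 * A 4 5 * A 5 0 + A 0 2 * A 1 4 * A 2 1 * A 3 5 * A 4 0 * A 5 3 - A 0 2 * A 1 4 * A 2 1 * A 3 5 * A 4 3 * A 5 0 - A 0 2 * A 1 4 * A 2 3 * A 3 0 * A 4 1 * A 5 5 + A 0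 2 * A 1 4 * A 2 3 * A 3 0 * A 4 5 * A 5 1 + A 0 2 * A 1 4 * A 2 3 * A 3 1 * A 4 0 * A 5 5 - A 0 2 * A 1 4 * A 2 3 * A 3 1 * A 4 5 * A 5 0 - A 0 2 * A 1 4 * A 2 3 * A 3 5 * A 4 0 * A 5 1 + A 0 2 * A 1 4 * A 2 3 * A 3 5 * A 4 1 * A 5 0 + A 0 2 * A 1 4 * A 2 5 * A 3 0 * A 4 1 * A 5 3 - A 0 2 * A 1 4 * A 2 5 * A 3 0 * A 4 3 * A 5 1 - A 0 2 * A 1 4 * A 2 5 * A 3 1 * A 4 0 * A 5 3 + A 0 2 * A 1 4 * A 2 5 * A 3 1 * A 4 3 * A 5 0 + A 0 2 * A 1 4 * A 2 5 * A 3 3 * A 4 0 * A 5 1 - A 0 2 * A 1 4 * A 2 5 * A 3 3 * A 4 1 * A 5 0 + A 0 2 * A 1 5 * A 2 0 * A 3 1 * A 4 3 * A 5 4 - A 0 2 * A 1 5 * A 2 0 * A 3 1 * A 4 4 * A 5 3 - A 0 2 * A 1 5 * A 2 0 * A 3 3 * A 4 1 * A 5 4 + A 0 2 * A 1 5 * A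 2 0 * A 3 3 * A 4 4 * A 5 1 + A 0 2 * A 1 5 * A 2 0 * A 3 4 * A 4 1 * A 5 3 - A 0 2 * A 1 5 * A 2 0 * A 3 4 * A 4 3 * A 5 1 - A 0 2 * A 1 5 * A 2 1 * A 3 0 * A 4 3 * A 5 4 + A 0 2 * A 1 5 * A 2 1 * A 3 0 * A 4 4 * A 5 3 + A 0 2 * A 1 5 * A 2 1 * A 3 3 * A 4 0 * A 5 4 - A 0 2 * A 1 5 * A 2 1 * A 3 3 * A 4 4 * A 5 0 - A 0 2 * A 1 5 * A 2 1 * A 3 4 * A 4 0 * A 5 3 + A 0 2 * A 1 5 * A 2 1 * A 3 4 * A 4 3 * A 5 0 + A 0 2 * A 1 5 * A 2 3 * A 3 0 * A 4 1 * A 5 4 - A 0 2 * A 1 5 * A 2 3 * A 3 0 * A 4 4 * A 5 1 - A 0 2 * A 1 5 * A 2 3 * A 3 1 * A 4 0 * A 5 4 + A 0 2 * A 1 5 * A 2 3 * A 3 1 * A 4 4 * A 5 0 + A 0 2 * A 1 5 * A 2 3 * A 3 4 * A 4 0 * A 5 1 - A 0 2 * A 1 5 * A 2 3 * A 3 4 *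 A 4 1 * A 5 0 - A 0 2 * A 1 5 * A 2 4 * A 3 0 * A 4 1 * A 5 3 + A 0 2 * A 1 5 * A 2 4 * A 3 0 * A 4 3 * A 5 1 + A 0 2 * A 1 5 * A 2 4 * A 3 1 * A 4 0 * A 5 3 - A 0 2 * A 1 5 * A 2 4 * A 3 1 * A 4 3 * A 5 0 - A 0 2 * A 1 5 * A 2 4 * A 3 3 * A 4 0 * A 5 1 + A 0 2 * A 1 5 * A 2 4 * A 3 3 * A 4 1 * A 5 0 - A 0 3 * A 1 0 * A 2 1 * A 3 2 * A 4 4 * A 5 5 + A 0 3 * A 1 0 * A 2 1 * A 3 2 * A 4 5 * A 5 4 + A 0 3 * A 1 0 * A 2 1 * A 3 4 * A 4 2 * A 5 5 - A 0 3 * A 1 0 * A 2 1 * A 3 4 * A 4 5 * A 5 2 - A 0 3 * A 1 0 * A 2 1 * A 3 5 * A 4 2 * A 5 4 + A 0 3 * A 1 0 * A 2 1 * A 3 5 * A 4 4 * A 5 2 + A 0 3 * A 1 0 * A 2 2 * A 3 1 * A 4 4 * A 5 5 - A 0 3 * A 1 0 * A 2 2 * A 3 1 * A 4 5 * A 5 4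 - A 0 3 * A 1 0 * A 2 2 * A 3 4 * A 4 1 * A 5 5 + A 0 3 * A 1 0 * A 2 2 * A 3 4 * A 4 5 * A 5 1 + A 0 3 * A 1 0 * A 2 2 * A 3 5 * A 4 1 * A 5 4 - A 0 3 * A 1 0 * A 2 2 * A 3 5 * A 4 4 * A 5 1 - A 0 3 * A 1 0 * A 2 4 * A 3 1 * A 4 2 * A 5 5 + A 0 3 * A 1 0 * A 2 4 * A 3 1 * A 4 5 * A 5 2 + A 0 3 * A 1 0 * A 2 4 * A 3 2 * A 4 1 * A 5 5 - A 0 3 * A 1 0 * A 2 4 * A 3 2 * A 4 5 * A 5 1 - A 0 3 * A 1 0 * A 2 4 * A 3 5 * A 4 1 * A 5 2 + A 0 3 * A 1 0 * A 2 4 * A 3 5 * A 4 2 * A 5 1 + A 0 3 * A 1 0 * A 2 5 * A 3 1 * A 4 2 * A 5 4 - A 0 3 * A 1 0 * A 2 5 * A 3 1 * A 4 4 * A 5 2 - A 0 3 * A 1 0 * A 2 5 * A 3 2 * A 4 1 * A 5 4 + A 0 3 * A 1 0 * A 2 5 * A 3 2 * A 4 4 * A 5 1 + A 0 3 * A 1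 0 * A 2 5 * A 3 4 * A 4 1 * A 5 2 - A 0 3 * A 1 0 * A 2 5 * A 3 4 * A 4 2 * A 5 1 + A 0 3 * A 1 1 * A 2 0 * A 3 2 * A 4 4 * A 5 5 - A 0 3 * A 1 1 * A 2 0 * A 3 2 * A 4 5 * A 5 4 - A 0 3 * A 1 1 * A 2 0 * A 3 4 * A 4 2 * A 5 5 + A 0 3 * A 1 1 * A 2 0 * A 3 4 * A 4 5 * A 5 2 + A 0 3 * A 1 1 * A 2 0 * A 3 5 * A 4 2 * A 5 4 - A 0 3 * A 1 1 * A 2 0 * A 3 5 * A 4 4 * A 5 2 - A 0 3 * A 1 1 * A 2 2 * A 3 0 * A 4 4 * A 5 5 + A 0 3 * A 1 1 * A 2 2 * A 3 0 * A 4 5 * A 5 4 + A 0 3 * A 1 1 * A 2 2 * A 3 4 * A 4 0 * A 5 5 - A 0 3 * A 1 1 * A 2 2 * A 3 4 * A 4 5 * A 5 0 - A 0 3 * A 1 1 * A 2 2 * A 3 5 * A 4 0 * A 5 4 + A 0 3 * A 1 1 * A 2 2 * A 3 5 * A 4 4 * A 5 0 + A 0 3 * A 1 1 * A 2 4 * A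 3 0 * A 4 2 * A 5 5 - A 0 3 * A 1 1 * A 2 4 * A 3 0 * A 4 5 * A 5 2 - A 0 3 * A 1 1 * A 2 4 * A 3 2 * A 4 0 * A 5 5 + A 0 3 * A 1 1 * A 2 4 * A 3 2 * A 4 5 * A 5 0 + A 0 3 * A 1 1 * A 2 4 * A 3 5 * A 4 0 * A 5 2 - A 0 3 * A 1 1 * A 2 4 * A 3 5 * A 4 2 * A 5 0 - A 0 3 * A 1 1 * A 2 5 * A 3 0 * A 4 2 * A 5 4 + A 0 3 * A 1 1 * A 2 5 * A 3 0 * A 4 4 * A 5 2 + A 0 3 * A 1 1 * A 2 5 * A 3 2 * A 4 0 * A 5 4 - A 0 3 * A 1 1 * A 2 5 * A 3 2 * A 4 4 * A 5 0 - A 0 3 * A 1 1 * A 2 5 * A 3 4 * A 4 0 * A 5 2 + A 0 3 * A 1 1 * A 2 5 * A 3 4 * A 4 2 * A 5 0 - A 0 3 * A 1 2 * A 2 0 * A 3 1 * A 4 4 * A 5 5 + A 0 3 * A 1 2 * A 2 0 * A 3 1 * A 4 5 * A 5 4 + A 0 3 * A 1 2 * A 2 0 * A 3 4 * A 4 1 *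 A 5 5 - A 0 3 * A 1 2 * A 2 0 * A 3 4 * A 4 5 * A 5 1 - A 0 3 * A 1 2 * A 2 0 * A 3 5 * A 4 1 * A 5 4 + A 0 3 * A 1 2 * A 2 0 * A 3 5 * A 4 4 * A 5 1 + A 0 3 * A 1 2 * A 2 1 * A 3 0 * A 4 4 * A 5 5 - A 0 3 * A 1 2 * A 2 1 * A 3 0 * A 4 5 * A 5 4 - A 0 3 * A 1 2 * A 2 1 * A 3 4 * A 4 0 * A 5 5 + A 0 3 * A 1 2 * A 2 1 * A 3 4 * A 4 5 * A 5 0 + A 0 3 * A 1 2 * A 2 1 * A 3 5 * A 4 0 * A 5 4 - A 0 3 * A 1 2 * A 2 1 * A 3 5 * A 4 4 * A 5 0 - A 0 3 * A 1 2 * A 2 4 * A 3 0 * A 4 1 * A 5 5 + A 0 3 * A 1 2 * A 2 4 * A 3 0 * A 4 5 * A 5 1 + A 0 3 * A 1 2 * A 2 4 * A 3 1 * A 4 0 * A 5 5 - A 0 3 * A 1 2 * A 2 4 * A 3 1 * A 4 5 * A 5 0 - A 0 3 * A 1 2 * A 2 4 * A 3 5 * A 4 0 * A 5 1 + A 0 3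 * A 1 2 * A 2 4 * A 3 5 * A 4 1 * A 5 0 + A 0 3 * A 1 2 * A 2 5 * A 3 0 * A 4 1 * A 5 4 - A 0 3 * A 1 2 * A 2 5 * A 3 0 * A 4 4 * A 5 1 - A 0 3 * A 1 2 * A 2 5 * A 3 1 * A 4 0 * A 5 4 + A 0 3 * A 1 2 * A 2 5 * A 3 1 * A 4 4 * A 5 0 + A 0 3 * A 1 2 * A 2 5 * A 3 4 * A 4 0 * A 5 1 - A 0 3 * A 1 2 * A 2 5 * A 3 4 * A 4 1 * A 5 0 + A 0 3 * A 1 4 * A 2 0 * A 3 1 * A 4 2 * A 5 5 - A 0 3 * A 1 4 * A 2 0 * A 3 1 * A 4 5 * A 5 2 - A 0 3 * A 1 4 * A 2 0 * A 3 2 * A 4 1 * A 5 5 + A 0 3 * A 1 4 * A 2 0 * A 3 2 * A 4 5 * A 5 1 + A 0 3 * A 1 4 * A 2 0 * A 3 5 * A 4 1 * A 5 2 - A 0 3 * A 1 4 * A 2 0 * A 3 5 * A 4 2 * A 5 1 - A 0 3 * A 1 4 * A 2 1 * A 3 0 * A 4 2 * A 5 5 + A 0 3 * A 1 4 * A 2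 1 * A 3 0 * A 4 5 * A 5 2 + A 0 3 * A 1 4 * A 2 1 * A 3 2 * A 4 0 * A 5 5 - A 0 3 * A 1 4 * A 2 1 * A 3 2 * A 4 5 * A 5 0 - A 0 3 * A 1 4 * A 2 1 * A 3 5 * A 4 0 * A 5 2 + A 0 3 * A 1 4 * A 2 1 * A 3 5 * A 4 2 * A 5 0 + A 0 3 * A 1 4 * A 2 2 * A 3 0 * A 4 1 * A 5 5 - A 0 3 * A 1 4 * A 2 2 * A 3 0 * A 4 5 * A 5 1 - A 0 3 * A 1 4 * A 2 2 * A 3 1 * A 4 0 * A 5 5 + A 0 3 * A 1 4 * A 2 2 * A 3 1 * A 4 5 * A 5 0 + A 0 3 * A 1 4 * A 2 2 * A 3 5 * A 4 0 * A 5 1 - A 0 3 * A 1 4 * A 2 2 * A 3 5 * A 4 1 * A 5 0 - A 0 3 * A 1 4 * A 2 5 * A 3 0 * A 4 1 * A 5 2 + A 0 3 * A 1 4 * A 2 5 * A 3 0 * A 4 2 * A 5 1 + A 0 3 * A 1 4 * A 2 5 * A 3 1 * A 4 0 * A 5 2 - A 0 3 * A 1 4 * A 2 5 * A 3 1 * A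 4 2 * A 5 0 - A 0 3 * A 1 4 * A 2 5 * A 3 2 * A 4 0 * A 5 1 + A 0 3 * A 1 4 * A 2 5 * A 3 2 * A 4 1 * A 5 0 - A 0 3 * A 1 5 * A 2 0 * A 3 1 * A 4 2 * A 5 4 + A 0 3 * A 1 5 * A 2 0 * A 3 1 * A 4 4 * A 5 2 + A 0 3 * A 1 5 * A 2 0 * A 3 2 * A 4 1 * A 5 4 - A 0 3 * A 1 5 * A 2 0 * A 3 2 * A 4 4 * A 5 1 - A 0 3 * A 1 5 * A 2 0 * A 3 4 * A 4 1 * A 5 2 + A 0 3 * A 1 5 * A 2 0 * A 3 4 * A 4 2 * A 5 1 + A 0 3 * A 1 5 * A 2 1 * A 3 0 * A 4 2 * A 5 4 - A 0 3 * A 1 5 * A 2 1 * A 3 0 * A 4 4 * A 5 2 - A 0 3 * A 1 5 * A 2 1 * A 3 2 * A 4 0 * A 5 4 + A 0 3 * A 1 5 * A 2 1 * A 3 2 * A 4 4 * A 5 0 + A 0 3 * A 1 5 * A 2 1 * A 3 4 * A 4 0 * A 5 2 - A 0 3 * A 1 5 * A 2 1 * A 3 4 * A 4 2 * A 5 0 -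 A 0 3 * A 1 5 * A 2 2 * A 3 0 * A 4 1 * A 5 4 + A 0 3 * A 1 5 * A 2 2 * A 3 0 * A 4 4 * A 5 1 + A 0 3 * A 1 5 * A 2 2 * A 3 1 * A 4 0 * A 5 4 - A 0 3 * A 1 5 * A 2 2 * A 3 1 * A 4 4 * A 5 0 - A 0 3 * A 1 5 * A 2 2 * A 3 4 * A 4 0 * A 5 1 + A 0 3 * A 1 5 * A 2 2 * A 3 4 * A 4 1 * A 5 0 + A 0 3 * A 1 5 * A 2 4 * A 3 0 * A 4 1 * A 5 2 - A 0 3 * A 1 5 * A 2 4 * A 3 0 * A 4 2 * A 5 1 - A 0 3 * A 1 5 * A 2 4 * A 3 1 * A 4 0 * A 5 2 + A 0 3 * A 1 5 * A 2 4 * A 3 1 * A 4 2 * A 5 0 + A 0 3 * A 1 5 * A 2 4 * A 3 2 * A 4 0 * A 5 1 - A 0 3 * A 1 5 * A 2 4 * A 3 2 * A 4 1 * A 5 0 + A 0 4 * A 1 0 * A 2 1 * A 3 2 * A 4 3 * A 5 5 - A 0 4 * A 1 0 * A 2 1 * A 3 2 * A 4 5 * A 5 3 - A 0 4 * A 1 0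 * A 2 1 * A 3 3 * A 4 2 * A 5 5 + A 0 4 * A 1 0 * A 2 1 * A 3 3 * A 4 5 * A 5 2 + A 0 4 * A 1 0 * A 2 1 * A 3 5 * A 4 2 * A 5 3 - A 0 4 * A 1 0 * A 2 1 * A 3 5 * A 4 3 * A 5 2 - A 0 4 * A 1 0 * A 2 2 * A 3 1 * A 4 3 * A 5 5 + A 0 4 * A 1 0 * A 2 2 * A 3 1 * A 4 5 * A 5 3 + A 0 4 * A 1 0 * A 2 2 * A 3 3 * A 4 1 * A 5 5 - A 0 4 * A 1 0 * A 2 2 * A 3 3 * A 4 5 * A 5 1 - A 0 4 * A 1 0 * A 2 2 * A 3 5 * A 4 1 * A 5 3 + A 0 4 * A 1 0 * A 2 2 * A 3 5 * A 4 3 * A 5 1 + A 0 4 * A 1 0 * A 2 3 * A 3 1 * A 4 2 * A 5 5 - A 0 4 * A 1 0 * A 2 3 * A 3 1 * A 4 5 * A 5 2 - A 0 4 * A 1 0 * A 2 3 * A 3 2 * A 4 1 * A 5 5 + A 0 4 * A 1 0 * A 2 3 * A 3 2 * A 4 5 * A 5 1 + A 0 4 * A 1 0 * A 2 3 * A 3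 5 * A 4 1 * A 5 2 - A 0 4 * A 1 0 * A 2 3 * A 3 5 * A 4 2 * A 5 1 - A 0 4 * A 1 0 * A 2 5 * A 3 1 * A 4 2 * A 5 3 + A 0 4 * A 1 0 * A 2 5 * A 3 1 * A 4 3 * A 5 2 + A 0 4 * A 1 0 * A 2 5 * A 3 2 * A 4 1 * A 5 3 - A 0 4 * A 1 0 * A 2 5 * A 3 2 * A 4 3 * A 5 1 - A 0 4 * A 1 0 * A 2 5 * A 3 3 * A 4 1 * A 5 2 + A 0 4 * A 1 0 * A 2 5 * A 3 3 * A 4 2 * A 5 1 - A 0 4 * A 1 1 * A 2 0 * A 3 2 * A 4 3 * A 5 5 + A 0 4 * A 1 1 * A 2 0 * A 3 2 * A 4 5 * A 5 3 + A 0 4 * A 1 1 * A 2 0 * A 3 3 * A 4 2 * A 5 5 - A 0 4 * A 1 1 * A 2 0 * A 3 3 * A 4 5 * A 5 2 - A 0 4 * A 1 1 * A 2 0 * A 3 5 * A 4 2 * A 5 3 + A 0 4 * A 1 1 * A 2 0 * A 3 5 * A 4 3 * A 5 2 + A 0 4 * A 1 1 * A 2 2 * A 3 0 * A 4 3 * A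 5 5 - A 0 4 * A 1 1 * A 2 2 * A 3 0 * A 4 5 * A 5 3 - A 0 4 * A 1 1 * A 2 2 * A 3 3 * A 4 0 * A 5 5 + A 0 4 * A 1 1 * A 2 2 * A 3 3 * A 4 5 * A 5 0 + A 0 4 * A 1 1 * A 2 2 * A 3 5 * A 4 0 * A 5 3 - A 0 4 * A 1 1 * A 2 2 * A 3 5 * A 4 3 * A 5 0 - A 0 4 * A 1 1 * A 2 3 * A 3 0 * A 4 2 * A 5 5 + A 0 4 * A 1 1 * A 2 3 * A 3 0 * A 4 5 * A 5 2 + A 0 4 * A 1 1 * A 2 3 * A 3 2 * A 4 0 * A 5 5 - A 0 4 * A 1 1 * A 2 3 * A 3 2 * A 4 5 * A 5 0 - A 0 4 * A 1 1 * A 2 3 * A 3 5 * A 4 0 * A 5 2 + A 0 4 * A 1 1 * A 2 3 * A 3 5 * A 4 2 * A 5 0 + A 0 4 * A 1 1 * A 2 5 * A 3 0 * A 4 2 * A 5 3 - A 0 4 * A 1 1 * A 2 5 * A 3 0 * A 4 3 * A 5 2 - A 0 4 * A 1 1 * A 2 5 * A 3 2 * A 4 0 * A 5 3 + A 0 4 *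 A 1 1 * A 2 5 * A 3 2 * A 4 3 * A 5 0 + A 0 4 * A 1 1 * A 2 5 * A 3 3 * A 4 0 * A 5 2 - A 0 4 * A 1 1 * A 2 5 * A 3 3 * A 4 2 * A 5 0 + A 0 4 * A 1 2 * A 2 0 * A 3 1 * A 4 3 * A 5 5 - A 0 4 * A 1 2 * A 2 0 * A 3 1 * A 4 5 * A 5 3 - A 0 4 * A 1 2 * A 2 0 * A 3 3 * A 4 1 * A 5 5 + A 0 4 * A 1 2 * A 2 0 * A 3 3 * A 4 5 * A 5 1 + A 0 4 * A 1 2 * A 2 0 * A 3 5 * A 4 1 * A 5 3 - A 0 4 * A 1 2 * A 2 0 * A 3 5 * A 4 3 * A 5 1 - A 0 4 * A 1 2 * A 2 1 * A 3 0 * A 4 3 * A 5 5 + A 0 4 * A 1 2 * A 2 1 * A 3 0 * A 4 5 * A 5 3 + A 0 4 * A 1 2 * A 2 1 * A 3 3 * A 4 0 * A 5 5 - A 0 4 * A 1 2 * A 2 1 * A 3 3 * A 4 5 * A 5 0 - A 0 4 * A 1 2 * A 2 1 * A 3 5 * A 4 0 * A 5 3 + A 0 4 * A 1 2 * A 2 1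 * A 3 5 * A 4 3 * A 5 0 + A 0 4 * A 1 2 * A 2 3 * A 3 0 * A 4 1 * A 5 5 - A 0 4 * A 1 2 * A 2 3 * A 3 0 * A 4 5 * A 5 1 - A 0 4 * A 1 2 * A 2 3 * A 3 1 * A 4 0 * A 5 5 + A 0 4 * A 1 2 * A 2 3 * A 3 1 * A 4 5 * A 5 0 + A 0 4 * A 1 2 * A 2 3 * A 3 5 * A 4 0 * A 5 1 - A 0 4 * A 1 2 * A 2 3 * A 3 5 * A 4 1 * A 5 0 - A 0 4 * A 1 2 * A 2 5 * A 3 0 * A 4 1 * A 5 3 + A 0 4 * A 1 2 * A 2 5 * A 3 0 * A 4 3 * A 5 1 + A 0 4 * A 1 2 * A 2 5 * A 3 1 * A 4 0 * A 5 3 - A 0 4 * A 1 2 * A 2 5 * A 3 1 * A 4 3 * A 5 0 - A 0 4 * A 1 2 * A 2 5 * A 3 3 * A 4 0 * A 5 1 + A 0 4 * A 1 2 * A 2 5 * A 3 3 * A 4 1 * A 5 0 - A 0 4 * A 1 3 * A 2 0 * A 3 1 * A 4 2 * A 5 5 + A 0 4 * A 1 3 * A 2 0 * A 3 1 * A 4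 5 * A 5 2 + A 0 4 * A 1 3 * A 2 0 * A 3 2 * A 4 1 * A 5 5 - A 0 4 * A 1 3 * A 2 0 * A 3 2 * A 4 5 * A 5 1 - A 0 4 * A 1 3 * A 2 0 * A 3 5 * A 4 1 * A 5 2 + A 0 4 * A 1 3 * A 2 0 * A 3 5 * A 4 2 * A 5 1 + A 0 4 * A 1 3 * A 2 1 * A 3 0 * A 4 2 * A 5 5 - A 0 4 * A 1 3 * A 2 1 * A 3 0 * A 4 5 * A 5 2 - A 0 4 * A 1 3 * A 2 1 * A 3 2 * A 4 0 * A 5 5 + A 0 4 * A 1 3 * A 2 1 * A 3 2 * A 4 5 * A 5 0 + A 0 4 * A 1 3 * A 2 1 * A 3 5 * A 4 0 * A 5 2 - A 0 4 * A 1 3 * A 2 1 * A 3 5 * A 4 2 * A 5 0 - A 0 4 * A 1 3 * A 2 2 * A 3 0 * A 4 1 * A 5 5 + A 0 4 * A 1 3 * A 2 2 * A 3 0 * A 4 5 * A 5 1 + A 0 4 * A 1 3 * A 2 2 * A 3 1 * A 4 0 * A 5 5 - A 0 4 * A 1 3 * A 2 2 * A 3 1 * A 4 5 * A 5 0 - A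 0 4 * A 1 3 * A 2 2 * A 3 5 * A 4 0 * A 5 1 + A 0 4 * A 1 3 * A 2 2 * A 3 5 * A 4 1 * A 5 0 + A 0 4 * A 1 3 * A 2 5 * A 3 0 * A 4 1 * A 5 2 - A 0 4 * A 1 3 * A 2 5 * A 3 0 * A 4 2 * A 5 1 - A 0 4 * A 1 3 * A 2 5 * A 3 1 * A 4 0 * A 5 2 + A 0 4 * A 1 3 * A 2 5 * A 3 1 * A 4 2 * A 5 0 + A 0 4 * A 1 3 * A 2 5 * A 3 2 * A 4 0 * A 5 1 - A 0 4 * A 1 3 * A 2 5 * A 3 2 * A 4 1 * A 5 0 + A 0 4 * A 1 5 * A 2 0 * A 3 1 * A 4 2 * A 5 3 - A 0 4 * A 1 5 * A 2 0 * A 3 1 * A 4 3 * A 5 2 - A 0 4 * A 1 5 * A 2 0 * A 3 2 * A 4 1 * A 5 3 + A 0 4 * A 1 5 * A 2 0 * A 3 2 * A 4 3 * A 5 1 + A 0 4 * A 1 5 * A 2 0 * A 3 3 * A 4 1 * A 5 2 - A 0 4 * A 1 5 * A 2 0 * A 3 3 * A 4 2 * A 5 1 - A 0 4 * A 1 5 *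 A 2 1 * A 3 0 * A 4 2 * A 5 3 + A 0 4 * A 1 5 * A 2 1 * A 3 0 * A 4 3 * A 5 2 + A 0 4 * A 1 5 * A 2 1 * A 3 2 * A 4 0 * A 5 3 - A 0 4 * A 1 5 * A 2 1 * A 3 2 * A 4 3 * A 5 0 - A 0 4 * A 1 5 * A 2 1 * A 3 3 * A 4 0 * A 5 2 + A 0 4 * A 1 5 * A 2 1 * A 3 3 * A 4 2 * A 5 0 + A 0 4 * A 1 5 * A 2 2 * A 3 0 * A 4 1 * A 5 3 - A 0 4 * A 1 5 * A 2 2 * A 3 0 * A 4 3 * A 5 1 - A 0 4 * A 1 5 * A 2 2 * A 3 1 * A 4 0 * A 5 3 + A 0 4 * A 1 5 * A 2 2 * A 3 1 * A 4 3 * A 5 0 + A 0 4 * A 1 5 * A 2 2 * A 3 3 * A 4 0 * A 5 1 - A 0 4 * A 1 5 * A 2 2 * A 3 3 * A 4 1 * A 5 0 - A 0 4 * A 1 5 * A 2 3 * A 3 0 * A 4 1 * A 5 2 + A 0 4 * A 1 5 * A 2 3 * A 3 0 * A 4 2 * A 5 1 + A 0 4 * A 1 5 * A 2 3 * A 3 1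 * A 4 0 * A 5 2 - A 0 4 * A 1 5 * A 2 3 * A 3 1 * A 4 2 * A 5 0 - A 0 4 * A 1 5 * A 2 3 * A 3 2 * A 4 0 * A 5 1 + A 0 4 * A 1 5 * A 2 3 * A 3 2 * A 4 1 * A 5 0 - A 0 5 * A 1 0 * A 2 1 * A 3 2 * A 4 3 * A 5 4 + A 0 5 * A 1 0 * A 2 1 * A 3 2 * A 4 4 * A 5 3 + A 0 5 * A 1 0 * A 2 1 * A 3 3 * A 4 2 * A 5 4 - A 0 5 * A 1 0 * A 2 1 * A 3 3 * A 4 4 * A 5 2 - A 0 5 * A 1 0 * A 2 1 * A 3 4 * A 4 2 * A 5 3 + A 0 5 * A 1 0 * A 2 1 * A 3 4 * A 4 3 * A 5 2 + A 0 5 * A 1 0 * A 2 2 * A 3 1 * A 4 3 * A 5 4 - A 0 5 * A 1 0 * A 2 2 * A 3 1 * A 4 4 * A 5 3 - A 0 5 * A 1 0 * A 2 2 * A 3 3 * A 4 1 * A 5 4 + A 0 5 * A 1 0 * A 2 2 * A 3 3 * A 4 4 * A 5 1 + A 0 5 * A 1 0 * A 2 2 * A 3 4 * A 4 1 * A 5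 3 - A 0 5 * A 1 0 * A 2 2 * A 3 4 * A 4 3 * A 5 1 - A 0 5 * A 1 0 * A 2 3 * A 3 1 * A 4 2 * A 5 4 + A 0 5 * A 1 0 * A 2 3 * A 3 1 * A 4 4 * A 5 2 + A 0 5 * A 1 0 * A 2 3 * A 3 2 * A 4 1 * A 5 4 - A 0 5 * A 1 0 * A 2 3 * A 3 2 * A 4 4 * A 5 1 - A 0 5 * A 1 0 * A 2 3 * A 3 4 * A 4 1 * A 5 2 + A 0 5 * A 1 0 * A 2 3 * A 3 4 * A 4 2 * A 5 1 + A 0 5 * A 1 0 * A 2 4 * A 3 1 * A 4 2 * A 5 3 - A 0 5 * A 1 0 * A 2 4 * A 3 1 * A 4 3 * A 5 2 - A 0 5 * A 1 0 * A 2 4 * A 3 2 * A 4 1 * A 5 3 + A 0 5 * A 1 0 * A 2 4 * A 3 2 * A 4 3 * A 5 1 + A 0 5 * A 1 0 * A 2 4 * A 3 3 * A 4 1 * A 5 2 - A 0 5 * A 1 0 * A 2 4 * A 3 3 * A 4 2 * A 5 1 + A 0 5 * A 1 1 * A 2 0 * A 3 2 * A 4 3 * A 5 4 - A 0 5 * A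 1 1 * A 2 0 * A 3 2 * A 4 4 * A 5 3 - A 0 5 * A 1 1 * A 2 0 * A 3 3 * A 4 2 * A 5 4 + A 0 5 * A 1 1 * A 2 0 * A 3 3 * A 4 4 * A 5 2 + A 0 5 * A 1 1 * A 2 0 * A 3 4 * A 4 2 * A 5 3 - A 0 5 * A 1 1 * A 2 0 * A 3 4 * A 4 3 * A 5 2 - A 0 5 * A 1 1 * A 2 2 * A 3 0 * A 4 3 * A 5 4 + A 0 5 * A 1 1 * A 2 2 * A 3 0 * A 4 4 * A 5 3 + A 0 5 * A 1 1 * A 2 2 * A 3 3 * A 4 0 * A 5 4 - A 0 5 * A 1 1 * A 2 2 * A 3 3 * A 4 4 * A 5 0 - A 0 5 * A 1 1 * A 2 2 * A 3 4 * A 4 0 * A 5 3 + A 0 5 * A 1 1 * A 2 2 * A 3 4 * A 4 3 * A 5 0 + A 0 5 * A 1 1 * A 2 3 * A 3 0 * A 4 2 * A 5 4 - A 0 5 * A 1 1 * A 2 3 * A 3 0 * A 4 4 * A 5 2 - A 0 5 * A 1 1 * A 2 3 * A 3 2 * A 4 0 * A 5 4 + A 0 5 * A 1 1 * A 2 3 *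 A 3 2 * A 4 4 * A 5 0 + A 0 5 * A 1 1 * A 2 3 * A 3 4 * A 4 0 * A 5 2 - A 0 5 * A 1 1 * A 2 3 * A 3 4 * A 4 2 * A 5 0 - A 0 5 * A 1 1 * A 2 4 * A 3 0 * A 4 2 * A 5 3 + A 0 5 * A 1 1 * A 2 4 * A 3 0 * A 4 3 * A 5 2 + A 0 5 * A 1 1 * A 2 4 * A 3 2 * A 4 0 * A 5 3 - A 0 5 * A 1 1 * A 2 4 * A 3 2 * A 4 3 * A 5 0 - A 0 5 * A 1 1 * A 2 4 * A 3 3 * A 4 0 * A 5 2 + A 0 5 * A 1 1 * A 2 4 * A 3 3 * A 4 2 * A 5 0 - A 0 5 * A 1 2 * A 2 0 * A 3 1 * A 4 3 * A 5 4 + A 0 5 * A 1 2 * A 2 0 * A 3 1 * A 4 4 * A 5 3 + A 0 5 * A 1 2 * A 2 0 * A 3 3 * A 4 1 * A 5 4 - A 0 5 * A 1 2 * A 2 0 * A 3 3 * A 4 4 * A 5 1 - A 0 5 * A 1 2 * A 2 0 * A 3 4 * A 4 1 * A 5 3 + A 0 5 * A 1 2 * A 2 0 * A 3 4 * A 4 3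 * A 5 1 + A 0 5 * A 1 2 * A 2 1 * A 3 0 * A 4 3 * A 5 4 - A 0 5 * A 1 2 * A 2 1 * A 3 0 * A 4 4 * A 5 3 - A 0 5 * A 1 2 * A 2 1 * A 3 3 * A 4 0 * A 5 4 + A 0 5 * A 1 2 * A 2 1 * A 3 3 * A 4 4 * A 5 0 + A 0 5 * A 1 2 * A 2 1 * A 3 4 * A 4 0 * A 5 3 - A 0 5 * A 1 2 * A 2 1 * A 3 4 * A 4 3 * A 5 0 - A 0 5 * A 1 2 * A 2 3 * A 3 0 * A 4 1 * A 5 4 + A 0 5 * A 1 2 * A 2 3 * A 3 0 * A 4 4 * A 5 1 + A 0 5 * A 1 2 * A 2 3 * A 3 1 * A 4 0 * A 5 4 - A 0 5 * A 1 2 * A 2 3 * A 3 1 * A 4 4 * A 5 0 - A 0 5 * A 1 2 * A 2 3 * A 3 4 * A 4 0 * A 5 1 + A 0 5 * A 1 2 * A 2 3 * A 3 4 * A 4 1 * A 5 0 + A 0 5 * A 1 2 * A 2 4 * A 3 0 * A 4 1 * A 5 3 - A 0 5 * A 1 2 * A 2 4 * A 3 0 * A 4 3 * A 5 1 - A 0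 5 * A 1 2 * A 2 4 * A 3 1 * A 4 0 * A 5 3 + A 0 5 * A 1 2 * A 2 4 * A 3 1 * A 4 3 * A 5 0 + A 0 5 * A 1 2 * A 2 4 * A 3 3 * A 4 0 * A 5 1 - A 0 5 * A 1 2 * A 2 4 * A 3 3 * A 4 1 * A 5 0 + A 0 5 * A 1 3 * A 2 0 * A 3 1 * A 4 2 * A 5 4 - A 0 5 * A 1 3 * A 2 0 * A 3 1 * A 4 4 * A 5 2 - A 0 5 * A 1 3 * A 2 0 * A 3 2 * A 4 1 * A 5 4 + A 0 5 * A 1 3 * A 2 0 * A 3 2 * A 4 4 * A 5 1 + A 0 5 * A 1 3 * A 2 0 * A 3 4 * A 4 1 * A 5 2 - A 0 5 * A 1 3 * A 2 0 * A 3 4 * A 4 2 * A 5 1 - A 0 5 * A 1 3 * A 2 1 * A 3 0 * A 4 2 * A 5 4 + A 0 5 * A 1 3 * A 2 1 * A 3 0 * A 4 4 * A 5 2 + A 0 5 * A 1 3 * A 2 1 * A 3 2 * A 4 0 * A 5 4 - A 0 5 * A 1 3 * A 2 1 * A 3 2 * A 4 4 * A 5 0 - A 0 5 * A 1 3 * A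 2 1 * A 3 4 * A 4 0 * A 5 2 + A 0 5 * A 1 3 * A 2 1 * A 3 4 * A 4 2 * A 5 0 + A 0 5 * A 1 3 * A 2 2 * A 3 0 * A 4 1 * A 5 4 - A 0 5 * A 1 3 * A 2 2 * A 3 0 * A 4 4 * A 5 1 - A 0 5 * A 1 3 * A 2 2 * A 3 1 * A 4 0 * A 5 4 + A 0 5 * A 1 3 * A 2 2 * A 3 1 * A 4 4 * A 5 0 + A 0 5 * A 1 3 * A 2 2 * A 3 4 * A 4 0 * A 5 1 - A 0 5 * A 1 3 * A 2 2 * A 3 4 * A 4 1 * A 5 0 - A 0 5 * A 1 3 * A 2 4 * A 3 0 * A 4 1 * A 5 2 + A 0 5 * A 1 3 * A 2 4 * A 3 0 * A 4 2 * A 5 1 + A 0 5 * A 1 3 * A 2 4 * A 3 1 * A 4 0 * A 5 2 - A 0 5 * A 1 3 * A 2 4 * A 3 1 * A 4 2 * A 5 0 - A 0 5 * A 1 3 * A 2 4 * A 3 2 * A 4 0 * A 5 1 + A 0 5 * A 1 3 * A 2 4 * A 3 2 * A 4 1 * A 5 0 - A 0 5 * A 1 4 * A 2 0 * A 3 1 *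 A 4 2 * A 5 3 + A 0 5 * A 1 4 * A 2 0 * A 3 1 * A 4 3 * A 5 2 + A 0 5 * A 1 4 * A 2 0 * A 3 2 * A 4 1 * A 5 3 - A 0 5 * A 1 4 * A 2 0 * A 3 2 * A 4 3 * A 5 1 - A 0 5 * A 1 4 * A 2 0 * A 3 3 * A 4 1 * A 5 2 + A 0 5 * A 1 4 * A 2 0 * A 3 3 * A 4 2 * A 5 1 + A 0 5 * A 1 4 * A 2 1 * A 3 0 * A 4 2 * A 5 3 - A 0 5 * A 1 4 * A 2 1 * A 3 0 * A 4 3 * A 5 2 - A 0 5 * A 1 4 * A 2 1 * A 3 2 * A 4 0 * A 5 3 + A 0 5 * A 1 4 * A 2 1 * A 3 2 * A 4 3 * A 5 0 + A 0 5 * A 1 4 * A 2 1 * A 3 3 * A 4 0 * A 5 2 - A 0 5 * A 1 4 * A 2 1 * A 3 3 * A 4 2 * A 5 0 - A 0 5 * A 1 4 * A 2 2 * A 3 0 * A 4 1 * A 5 3 + A 0 5 * A 1 4 * A 2 2 * A 3 0 * A 4 3 * A 5 1 + A 0 5 * A 1 4 * A 2 2 * A 3 1 * A 4 0 * A 5 3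 - A 0 5 * A 1 4 * A 2 2 * A 3 1 * A 4 3 * A 5 0 - A 0 5 * A 1 4 * A 2 2 * A 3 3 * A 4 0 * A 5 1 + A 0 5 * A 1 4 * A 2 2 * A 3 3 * A 4 1 * A 5 0 + A 0 5 * A 1 4 * A 2 3 * A 3 0 * A 4 1 * A 5 2 - A 0 5 * A 1 4 * A 2 3 * A 3 0 * A 4 2 * A 5 1 - A 0 5 * A 1 4 * A 2 3 * A 3 1 * A 4 0 * A 5 2 + A 0 5 * A 1 4 * A 2 3 * A 3 1 * A 4 2 * A 5 0 + A 0 5 * A 1 4 * A 2 3 * A 3 2 * A 4 0 * A 5 1 - A 0 5 * A 1 4 * A 2 3 * A 3 2 * A 4 1 * A 5 0 := by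
  rw [Matrix.det_succ_row_zero]
  simp only [Fin.sum_univ_succ, Fin.sum_univ_zero, my_det_fin_5, Matrix.submatrix_apply,
    Fin.succAbove, Fin.castSucc, Fin.castAdd, Fin.castLE, Fin.lt_def, Fin.val_zero,
    Fin.val_succ, Fin.succ]
  norm_num [finmk2, finmk3, finmk4, finmk5, Fin.lt_def, finv2, finv3, finv4, finv5]
  ring

private lemma cons_val_five' {α : Type*} (x : α) (u : Fin 5 → α) :
    Matrix.vecCons x u 5 = u 4 := rfl

set_option maxHeartbeats 2000000 in
private lemma aux_mu_identity {R : Type*} [CommRing R]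
    (m01 m02 m03 m12 m13 m23 : R)
    (hP : m01 * m23 - m02 * m13 + m03 * m12 = 0)
    (s₀ s₁ s₂ s₃ t₀ t₁ t₂ : R)
    (hs₀ : s₀ = (2 * m03 - m12) * m03 ^ 2 + (m02 ^ 2 - 3 * m01 * m03) * m23)
    (hs₁ : s₁ = 3 * m13 * m03 ^ 2 - m01 * m13 * m23 - 2 * m02 * (m13 ^ 2 - m12 * m23))
    (hs₂ : s₂ = -m12 * m13 ^ 2 - 4 * m01 * m23 ^ 2 + (3 * m03 ^ 2 + m12 ^ 2 + m02 * m13) * m23)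
    (hs₃ : s₃ = -m13 ^ 3 + m23 * (m12 - 3 * (-m03)) * m13 - 2 * m02 * m23 ^ 2)
    (ht₀ : t₀ = -m03) (ht₁ : t₁ = -m13) (ht₂ : t₂ = -m23) :
    Matrix.det
      !![s₃, s₂, s₁, s₀, 0;
         0, s₃, s₂, s₁, s₀;
         t₂, t₁, t₀, 0, 0;
         0, t₂, t₁, t₀, 0;
         0, 0, t₂, t₁, t₀]
      = -m23 ^ 3 *
        (m01 * ((m03 + m12) * m23 - m13 ^ 2) - m02 * (m02 * m23 - m13 * m03)
          + m03 * (m02 * m13 - (m03 + m12) * m03)) ^ 2 := by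
  rw [my_det_fin_5]
  simp only [Matrix.cons_val', Matrix.cons_val_zero, Matrix.cons_val_one, Matrix.head_cons,
    Matrix.cons_val_two, Matrix.cons_val_three, Matrix.cons_val_four, Matrix.tail_cons,
    Matrix.empty_val', Matrix.cons_val_fin_one, Matrix.of_apply, Matrix.head_fin_const]
  subst hs₀ hs₁ hs₂ hs₃ ht₀ ht₁ ht₂
  linear_combination (2*m03*m13^6 - 5*m03*m12*m13^4*m23 + 4*m03*m12^2*m13^2*m23^2 - m03*m12^3*m23^3 - 9*m03^2*m13^4*m23 + 8*m03^2*m12*m13^2*m23^2 - 2*m03^2*m12^2*m23^3 + 8*m03^3*m13^2*m23^2 - 2*m03^3*m12*m23^3 + m02*m13^5*m23 - 2*m02*m12*m13^3*m23^2 + m02*m12^2*m13*m23^3 + 4*m02*m03*m13^3*m23^2 - 4*m02*m03*m12*m13*m23^3 + 5*m02^2*m13^2*m23^3 - 2*m02^2*m12*m23^4 - 4*m02^2*m03*m23^4 + m01*m13^4*m23^2 - 2*m01*m12*m13^2*m23^3 + m01*m12^2*m23^4 - 8*m01*m03*m13^2*m23^3 + 2*m01*m03*m12*m23^4) * hP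

set_option maxHeartbeats 4000000 in
private lemma aux_sylvester_bezout {R : Type*} [CommRing R]
    (a₀ a₁ a₂ a₃ b₀ b₁ b₂ b₃ : R) :
    Matrix.det
      !![a₃, a₂, a₁, a₀, 0, 0;
         0, a₃, a₂, a₁, a₀, 0;
         0, 0, a₃, a₂, a₁, a₀;
         b₃, b₂, b₁, b₀, 0, 0;
         0, b₃, b₂, b₁, b₀, 0;
         0, 0, b₃, b₂, b₁, b₀]
    = ((a₀*b₁-a₁*b₀) * (((a₀*b₃-a₃*b₀) + (a₁*b₂-a₂*b₁)) * (a₂*b₃-a₃*b₂) - (a₁*b₃-a₃*b₁) ^ 2)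
      - (a₀*b₂-a₂*b₀) * ((a₀*b₂-a₂*b₀) * (a₂*b₃-a₃*b₂) - (a₁*b₃-a₃*b₁) * (a₀*b₃-a₃*b₀))
      + (a₀*b₃-a₃*b₀) * ((a₀*b₂-a₂*b₀) * (a₁*b₃-a₃*b₁)
          - ((a₀*b₃-a₃*b₀) + (a₁*b₂-a₂*b₁)) * (a₀*b₃-a₃*b₀))) := by
  rw [my_det_fin_6]
  simp only [Matrix.cons_val', Matrix.cons_val_zero, Matrix.cons_val_one, Matrix.head_cons,
    Matrix.cons_val_two, Matrix.cons_val_three, Matrix.cons_val_four, Matrix.tail_cons,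
    Matrix.empty_val', Matrix.cons_val_fin_one, Matrix.of_apply, Matrix.head_fin_const,
    cons_val_five']
  ring

/-- **Identity (3.2) in the proof of Proposition 3.4**:
`Res_x(S̃(x), T(x)) = −μ₂₃³ · Res_x(P(x), Q(x))²`, where the resultants are the
determinants of the corresponding Sylvester matrices (degrees `(3,2)` and `(3,3)`
respectively). Stated for all commutative rings, which is equivalent to the
identity in `ℤ[a₀,…,a₃,b₀,…,b₃]`. -/
theorem resultant_S_T_identity
    (R : Type*) [CommRing R] (a₀ a₁ a₂ a₃ b₀ b₁ b₂ b₃ : R)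
    (μ : Fin 4 → Fin 4 → R)
    (hμ : ∀ i j, μ i j = ![a₀, a₁, a₂, a₃] i * ![b₀, b₁, b₂, b₃] j
      - ![a₀, a₁, a₂, a₃] j * ![b₀, b₁, b₂, b₃] i)
    (s₀ s₁ s₂ s₃ : R)
    (hs₀ : s₀ = (2 * μ 0 3 - μ 1 2) * μ 0 3 ^ 2
      + (μ 0 2 ^ 2 - 3 * μ 0 1 * μ 0 3) * μ 2 3)
    (hs₁ : s₁ = 3 * μ 1 3 * μ 0 3 ^ 2 - μ 0 1 * μ 1 3 * μ 2 3
      - 2 * μ 0 2 * (μ 1 3 ^ 2 - μ 1 2 * μ 2 3))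
    (hs₂ : s₂ = -μ 1 2 * μ 1 3 ^ 2 - 4 * μ 0 1 * μ 2 3 ^ 2
      + (3 * μ 0 3 ^ 2 + μ 1 2 ^ 2 + μ 0 2 * μ 1 3) * μ 2 3)
    (hs₃ : s₃ = -μ 1 3 ^ 3 + μ 2 3 * (μ 1 2 - 3 * μ 3 0) * μ 1 3
      - 2 * μ 0 2 * μ 2 3 ^ 2)
    -- coefficients of `T(x) = −μ₀₃ − μ₁₃x − μ₂₃x²`:
    (t₀ t₁ t₂ : R) (ht₀ : t₀ = -μ 0 3) (ht₁ : t₁ = -μ 1 3) (ht₂ : t₂ = -μ 2 3) :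
    Matrix.det
      !![s₃, s₂, s₁, s₀, 0;
         0, s₃, s₂, s₁, s₀;
         t₂, t₁, t₀, 0, 0;
         0, t₂, t₁, t₀, 0;
         0, 0, t₂, t₁, t₀]
      = -μ 2 3 ^ 3 *
        (Matrix.det
          !![a₃, a₂, a₁, a₀, 0, 0;
             0, a₃, a₂, a₁, a₀, 0;
             0, 0, a₃, a₂, a₁, a₀;
             b₃, b₂, b₁, b₀, 0, 0;
             0, b₃, b₂, b₁, b₀, 0;
             0, 0, b₃, b₂, b₁, b₀]) ^ 2 := by
  have h01 := hμ 0 1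
  have h02 := hμ 0 2
  have h03 := hμ 0 3
  have h12 := hμ 1 2
  have h13 := hμ 1 3
  have h23 := hμ 2 3
  have h30 := hμ 3 0
  simp only [Matrix.cons_val_zero, Matrix.cons_val_one, Matrix.head_cons,
    Matrix.cons_val_two, Matrix.cons_val_three, Matrix.tail_cons] at h01 h02 h03 h12 h13 h23 h30
  have hP : μ 0 1 * μ 2 3 - μ 0 2 * μ 1 3 + μ 0 3 * μ 1 2 = 0 := by
    rw [h01, h02, h03, h12, h13, h23]; ring
  have h30' : μ 3 0 = -(μ 0 3) := by rw [h30, h03]; ring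
  rw [aux_sylvester_bezout, ← h01, ← h02, ← h03, ← h12, ← h13, ← h23]
  exact aux_mu_identity (μ 0 1) (μ 0 2) (μ 0 3) (μ 1 2) (μ 1 3) (μ 2 3) hP
    s₀ s₁ s₂ s₃ t₀ t₁ t₂ hs₀ hs₁ hs₂ (by rw [hs₃, h30']) ht₀ ht₁ ht₂
end

section
/- Let X be a finite set, let τ₁, τ₂ : X → X be commuting involutions, set τ₃ = τ₁ ∘ τ₂, and let G = {id, τ₁, τ₂, τ₃} be the Klein four-group they generate, acting on X. Let σ : X → X be a bijection commuting with τ₁ and τ₂, and for i = 1, 2, 3 let σ_i denote the induced map on the quotient set X/⟨τ_i⟩ and σ₄ the induced map on X/G. Then #{x ∈ X : σ(x) = x} + 2·#{c ∈ X/G : σ₄(c) = c} = #{c ∈ X/⟨τ₁⟩ : σ₁(c) = c} + #{c ∈ X/⟨τ₂⟩ : σ₂(c) = c} + #{c ∈ X/⟨τ₃⟩ : σ₃(c) = c}. (The counting identity underlying Proposition 3.10 of the paper, which applies it to the set of F̄_q-points of the curve C̄ with its three involutions and the Frobenius map, yielding #C̄(𝔽_q) + 2#C₄(𝔽_q) =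 #C₁(𝔽_q) + #C₂(𝔽_q) + #C₃(𝔽_q).) -/
/-- The number of fixed classes of the map induced by `σ` on the quotient of `X`
by (the orbit equivalence relation of) a subgroup `H` of permutations: a class `c`
is fixed iff `σ` sends (any, here: the chosen) representative of `c` back into `c`. -/
noncomputable def fixedClassCount {X : Type*} (s : Setoid X) (σ : X → X) : ℕ :=
  Nat.card {c : Quotient s // Quotient.mk s (σ (Quotient.out c)) = c}




open MulAction Finset in
lemma burnside_core {K X : Type*} [Group K] [Fintype K] [Finite X] [MulAction K X]
    (σ : X → X) (hσ : ∀ (k : K) (x : X), σ (k • x) = k • σ x) :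
    Fintype.card K * fixedClassCount (MulAction.orbitRel K X) σ
      = ∑ k : K, Nat.card {x : X // σ x = k • x} := by
  classical
  have : Fintype X := Fintype.ofFinite X
  set s := MulAction.orbitRel K X with hs
  -- swap the double count
  have swap : ∑ k : K, Nat.card {x : X // σ x = k • x}
      = ∑ x : X, Nat.card {k : K // σ x = k • x} := by
    simp_rw [Nat.card_eq_fintype_card, Fintype.card_subtype, Finset.card_filter]
    exact Finset.sum_comm
  -- per-point value
  have key : ∀ x : X, Nat.card {k : K // σ x = k • x}
      = if Quotient.mk s (σ x) = Quotient.mk s x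
        then Nat.card (MulAction.stabilizer K x) else 0 := by
    intro x
    by_cases h : Quotient.mk s (σ x) = Quotient.mk s x
    · rw [if_pos h]
      rw [Quotient.eq] at h
      rw [hs, MulAction.orbitRel_apply, MulAction.mem_orbit_iff] at h
      obtain ⟨k₀, hk₀⟩ := h
      refine Nat.card_congr ⟨fun k => ⟨k₀⁻¹ * k.1, ?_⟩, fun k => ⟨k₀ * k.1, ?_⟩, ?_, ?_⟩
      · have := k.2
        rw [MulAction.mem_stabilizer_iff, mul_smul, ← this, ← hk₀, inv_smul_smul]
      · rw [mul_smul, k.2, hk₀]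
      · intro k; ext; simp
      · intro k; ext; simp
    · rw [if_neg h]
      have : IsEmpty {k : K // σ x = k • x} := by
        refine ⟨fun k => h ?_⟩
        rw [Quotient.eq, hs, MulAction.orbitRel_apply, MulAction.mem_orbit_iff]
        exact ⟨k.1, k.2.symm⟩
      exact Nat.card_of_isEmpty
  rw [swap]
  simp_rw [key]
  rw [← Fintype.sum_fiberwise (Quotient.mk s)
    (fun x => if Quotient.mk s (σ x) = Quotient.mk s x
        then Nat.card (MulAction.stabilizer K x) else 0)]
  -- relation preserved by σ
  have hrel : ∀ x y : X, Quotient.mk s x = Quotient.mk s y →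
      Quotient.mk s (σ x) = Quotient.mk s (σ y) := by
    intro x y hxy
    rw [Quotient.eq, hs, MulAction.orbitRel_apply, MulAction.mem_orbit_iff] at hxy ⊢
    obtain ⟨k, hk⟩ := hxy
    exact ⟨k, by rw [← hσ, hk]⟩
  have inner : ∀ c : Quotient s,
      (∑ x : {x : X // Quotient.mk s x = c},
        if Quotient.mk s (σ x.1) = Quotient.mk s x.1
        then Nat.card (MulAction.stabilizer K x.1) else 0)
      = if Quotient.mk s (σ (Quotient.out c)) = c then Fintype.card K else 0 := by
    intro c
    have hout : Quotient.mk s (Quotient.out c) = c := Quotient.out_eq c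
    have hterm : ∀ x : {x : X // Quotient.mk s x = c},
        (if Quotient.mk s (σ x.1) = Quotient.mk s x.1
          then Nat.card (MulAction.stabilizer K x.1) else 0)
        = if Quotient.mk s (σ (Quotient.out c)) = c
          then Nat.card (MulAction.stabilizer K (Quotient.out c)) else 0 := by
      intro x
      have hx : Quotient.mk s x.1 = Quotient.mk s (Quotient.out c) := by rw [x.2, hout]
      have hcond : (Quotient.mk s (σ x.1) = Quotient.mk s x.1)
          ↔ (Quotient.mk s (σ (Quotient.out c)) = c) := by
        rw [hrel _ _ hx, hx, hout]
      have hstab : Nat.card (MulAction.stabilizer K x.1)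
          = Nat.card (MulAction.stabilizer K (Quotient.out c)) := by
        have hxy : (MulAction.orbitRel K X) x.1 (Quotient.out c) := Quotient.exact hx
        exact Nat.card_congr (MulAction.stabilizerEquivStabilizerOfOrbitRel hxy).toEquiv
      by_cases h : Quotient.mk s (σ (Quotient.out c)) = c
      · rw [if_pos h, if_pos (hcond.mpr h), hstab]
      · rw [if_neg h, if_neg (fun hh => h (hcond.mp hh))]
    rw [Finset.sum_congr rfl (fun x _ => hterm x), Finset.sum_const, smul_eq_mul]
    by_cases h : Quotient.mk s (σ (Quotient.out c)) = c
    · rw [if_pos h, if_pos h]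
      -- card of class * card of stabilizer = card K
      have horb : {x : X // Quotient.mk s x = c} ≃ MulAction.orbit K (Quotient.out c) := by
        refine Equiv.subtypeEquivRight fun x => ⟨fun hxc => ?_, fun hxo => ?_⟩
        · exact Quotient.exact (hxc.trans hout.symm)
        · exact (Quotient.sound (a := x) (b := Quotient.out c) hxo).trans hout
      rw [Finset.card_univ, Fintype.card_congr horb]
      have := Subgroup.card_eq_card_quotient_mul_card_subgroup
        (MulAction.stabilizer K (Quotient.out c))
      rw [← Nat.card_eq_fintype_card, ← Nat.card_eq_fintype_card,
        Nat.card_congr (MulAction.orbitEquivQuotientStabilizer K (Quotient.out c)), this]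
    · rw [if_neg h, if_neg h, mul_zero]
  rw [Finset.sum_congr rfl (fun c _ => inner c)]
  unfold fixedClassCount
  rw [Nat.card_eq_fintype_card, Fintype.card_subtype, Finset.card_filter, Finset.mul_sum]
  exact Finset.sum_congr rfl fun c _ => by
    by_cases h : Quotient.mk s (σ (Quotient.out c)) = c <;> simp [h]

section Helpers

variable {G : Type*} [Group G]

private lemma pow_mod_two' {a : G} (ha : a * a = 1) (n : ℕ) : a ^ (n % 2) = a ^ n := by
  conv_rhs => rw [← Nat.div_add_mod n 2]
  rw [pow_add, pow_mul, pow_two, ha, one_pow, one_mul]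

private lemma zpow_two_cases {a : G} (ha : a * a = 1) (n : ℤ) :
    a ^ n = 1 ∨ a ^ n = a := by
  have h2 : a ^ (2 : ℤ) = 1 := by rw [zpow_two, ha]
  rcases Int.even_or_odd n with ⟨m, hm⟩ | ⟨m, hm⟩
  · left; rw [hm, ← two_mul, zpow_mul, h2, one_zpow]
  · right; rw [hm, zpow_add, zpow_mul, h2, one_zpow, one_mul, zpow_one]

/-- The Klein four group homomorphism into `G` determined by two commuting involutions. -/
private def kleinHom (a b : G) (ha : a * a = 1) (hb : b * b = 1) (hab : a * b = b * a) :
    Multiplicative (ZMod 2 × ZMod 2) →* G where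
  toFun k := a ^ (k.toAdd.1.val) * b ^ (k.toAdd.2.val)
  map_one' := by simp
  map_mul' := by
    intro x y
    have hc : Commute a b := hab
    have key : ∀ (u v : ZMod 2) (c : G), c * c = 1 →
        c ^ ((u + v).val) = c ^ u.val * c ^ v.val := by
      intro u v c hcc
      rw [← pow_add, ← pow_mod_two' hcc (u.val + v.val), ZMod.val_add]
    show a ^ ((x.toAdd.1 + y.toAdd.1).val) * b ^ ((x.toAdd.2 + y.toAdd.2).val) = _
    rw [key _ _ _ ha, key _ _ _ hb]
    rw [mul_assoc, mul_assoc]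
    congr 1
    rw [← mul_assoc, ← mul_assoc]
    congr 1
    exact hc.pow_pow _ _

end Helpers

open MulAction Finset in
lemma burnside {K X : Type*} [Group K] [Fintype K] [Finite X]
    (f : K →* Equiv.Perm X) (s : Setoid X)
    (hs : ∀ x y : X, s x y ↔ ∃ k : K, f k y = x)
    (σ : X → X) (hσ : ∀ (k : K) (x : X), σ (f k x) = f k (σ x)) :
    Fintype.card K * fixedClassCount s σ
      = ∑ k : K, Nat.card {x : X // σ x = f k x} := by
  letI : MulAction K X := MulAction.compHom X f
  have hseq : s = MulAction.orbitRel K X := by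
    apply Setoid.ext
    intro x y
    rw [hs]
    change _ ↔ x ∈ MulAction.orbit K y
    rw [MulAction.mem_orbit_iff]
    rfl
  rw [hseq]
  exact burnside_core σ hσ

open Equiv in
lemma klein_count {X : Type*} [Finite X] (a b σ : Equiv.Perm X)
    (ha : a * a = 1) (hb : b * b = 1) (hab : a * b = b * a)
    (hsa : σ * a = a * σ) (hsb : σ * b = b * σ) (s : Setoid X)
    (hs : ∀ x y : X, s x y ↔
      ∃ k : Multiplicative (ZMod 2 × ZMod 2), kleinHom a b ha hb hab k y = x) :
    4 * fixedClassCount s σ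
      = Nat.card {x : X // σ x = x} + Nat.card {x : X // σ x = a x}
        + Nat.card {x : X // σ x = b x} + Nat.card {x : X // σ x = (a * b) x} := by
  have hσ : ∀ (k : Multiplicative (ZMod 2 × ZMod 2)) (x : X),
      σ (kleinHom a b ha hb hab k x) = kleinHom a b ha hb hab k (σ x) := by
    intro k x
    have hca : Commute σ a := hsa
    have hcb : Commute σ b := hsb
    have : Commute σ (kleinHom a b ha hb hab k) :=
      (hca.pow_right _).mul_right (hcb.pow_right _)
    calc σ (kleinHom a b ha hb hab k x) = (σ * kleinHom a b ha hb hab k) x := rfl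
      _ = (kleinHom a b ha hb hab k * σ) x := by rw [this]
      _ = _ := rfl
  have hmain := burnside (kleinHom a b ha hb hab) s hs σ hσ
  have hcard : Fintype.card (Multiplicative (ZMod 2 × ZMod 2)) = 4 := by
    simp [Fintype.card_multiplicative]
  rw [hcard] at hmain
  rw [hmain]
  -- evaluate the sum over the Klein four group
  rw [← Equiv.sum_comp (Multiplicative.ofAdd (α := ZMod 2 × ZMod 2))
    (fun k => Nat.card {x : X // σ x = kleinHom a b ha hb hab k x})]
  rw [Fintype.sum_prod_type]
  rw [show (Finset.univ : Finset (ZMod 2)) = {0, 1} from by decide]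
  rw [Finset.sum_pair (by decide : (0 : ZMod 2) ≠ 1)]
  rw [Finset.sum_pair (by decide : (0 : ZMod 2) ≠ 1)]
  rw [Finset.sum_pair (by decide : (0 : ZMod 2) ≠ 1)]
  have e00 : kleinHom a b ha hb hab (Multiplicative.ofAdd ((0 : ZMod 2), (0 : ZMod 2))) = 1 := by
    show a ^ ((0 : ZMod 2)).val * b ^ ((0 : ZMod 2)).val = 1
    norm_num [ZMod.val_zero]
  have e10 : kleinHom a b ha hb hab (Multiplicative.ofAdd ((1 : ZMod 2), (0 : ZMod 2))) = a := by
    show a ^ ((1 : ZMod 2)).val * b ^ ((0 : ZMod 2)).val = a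
    norm_num [ZMod.val_zero, ZMod.val_one]
  have e01 : kleinHom a b ha hb hab (Multiplicative.ofAdd ((0 : ZMod 2), (1 : ZMod 2))) = b := by
    show a ^ ((0 : ZMod 2)).val * b ^ ((1 : ZMod 2)).val = b
    norm_num [ZMod.val_zero, ZMod.val_one]
  have e11 : kleinHom a b ha hb hab (Multiplicative.ofAdd ((1 : ZMod 2), (1 : ZMod 2))) = a * b := by
    show a ^ ((1 : ZMod 2)).val * b ^ ((1 : ZMod 2)).val = a * b
    norm_num [ZMod.val_one]
  rw [e00, e10, e01, e11]
  simp only [Equiv.Perm.one_apply]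
  ring

open MulAction in
private lemma hs_zpowers {X : Type*} [Finite X] (τ : Equiv.Perm X) (hτ : τ * τ = 1)
    (hb : (1 : Equiv.Perm X) * 1 = 1) (hab : τ * 1 = 1 * τ) :
    ∀ x y : X, (MulAction.orbitRel (Subgroup.zpowers τ) X) x y ↔
      ∃ k : Multiplicative (ZMod 2 × ZMod 2), kleinHom τ 1 hτ hb hab k y = x := by
  intro x y
  rw [MulAction.orbitRel_apply, MulAction.mem_orbit_iff]
  constructor
  · rintro ⟨⟨g, hg⟩, rfl⟩
    rw [Subgroup.mem_zpowers_iff] at hg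
    obtain ⟨n, hn⟩ := hg
    have hval : (⟨g, by rw [Subgroup.mem_zpowers_iff]; exact ⟨n, hn⟩⟩ :
        Subgroup.zpowers τ) • y = g y := rfl
    rcases zpow_two_cases hτ n with h | h
    · refine ⟨Multiplicative.ofAdd ((0 : ZMod 2), (0 : ZMod 2)), ?_⟩
      have hk : kleinHom τ 1 hτ hb hab (Multiplicative.ofAdd ((0 : ZMod 2), (0 : ZMod 2)))
          = 1 := by
        show τ ^ ((0 : ZMod 2)).val * (1 : Equiv.Perm X) ^ ((0 : ZMod 2)).val = 1
        norm_num
      rw [hk, hval, ← hn, h]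
    · refine ⟨Multiplicative.ofAdd ((1 : ZMod 2), (0 : ZMod 2)), ?_⟩
      have hk : kleinHom τ 1 hτ hb hab (Multiplicative.ofAdd ((1 : ZMod 2), (0 : ZMod 2)))
          = τ := by
        show τ ^ ((1 : ZMod 2)).val * (1 : Equiv.Perm X) ^ ((0 : ZMod 2)).val = τ
        norm_num [ZMod.val_one]
      rw [hk, hval, ← hn, h]
  · rintro ⟨k, rfl⟩
    refine ⟨⟨kleinHom τ 1 hτ hb hab k, ?_⟩, rfl⟩
    show τ ^ (k.toAdd.1.val) * (1 : Equiv.Perm X) ^ (k.toAdd.2.val) ∈ Subgroup.zpowers τ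
    rw [one_pow, mul_one, Subgroup.mem_zpowers_iff]
    exact ⟨(k.toAdd.1.val : ℤ), zpow_natCast τ _⟩

open MulAction in
private lemma hs_closure {X : Type*} [Finite X] (τ₁ τ₂ : Equiv.Perm X) (h₁ : τ₁ * τ₁ = 1)
    (h₂ : τ₂ * τ₂ = 1) (hcomm : τ₁ * τ₂ = τ₂ * τ₁) :
    ∀ x y : X, (MulAction.orbitRel (Subgroup.closure {τ₁, τ₂} : Subgroup (Equiv.Perm X)) X) x y ↔
      ∃ k : Multiplicative (ZMod 2 × ZMod 2), kleinHom τ₁ τ₂ h₁ h₂ hcomm k y = x := by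
  set f := kleinHom τ₁ τ₂ h₁ h₂ hcomm with hf
  intro x y
  rw [MulAction.orbitRel_apply, MulAction.mem_orbit_iff]
  constructor
  · rintro ⟨⟨g, hg⟩, rfl⟩
    have hval : (⟨g, hg⟩ : (Subgroup.closure {τ₁, τ₂} : Subgroup (Equiv.Perm X))) • y
        = g y := rfl
    have hrep : ∃ k : Multiplicative (ZMod 2 × ZMod 2), f k = g := by
      refine Subgroup.closure_induction ?_ ?_ ?_ ?_ hg
      · intro z hz
        rcases hz with hz | hz
        · refine ⟨Multiplicative.ofAdd ((1 : ZMod 2), (0 : ZMod 2)), ?_⟩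
          show τ₁ ^ ((1 : ZMod 2)).val * τ₂ ^ ((0 : ZMod 2)).val = z
          rw [hz]; norm_num [ZMod.val_one]
        · refine ⟨Multiplicative.ofAdd ((0 : ZMod 2), (1 : ZMod 2)), ?_⟩
          show τ₁ ^ ((0 : ZMod 2)).val * τ₂ ^ ((1 : ZMod 2)).val = z
          rw [Set.mem_singleton_iff] at hz
          rw [hz]; norm_num [ZMod.val_one]
      · exact ⟨1, map_one f⟩
      · rintro u v hu hv ⟨ku, hku⟩ ⟨kv, hkv⟩
        exact ⟨ku * kv, by rw [map_mul, hku, hkv]⟩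
      · rintro u hu ⟨ku, hku⟩
        exact ⟨ku⁻¹, by rw [map_inv, hku]⟩
    obtain ⟨k, hk⟩ := hrep
    exact ⟨k, by rw [hk, hval]⟩
  · rintro ⟨k, rfl⟩
    have hmem : f k ∈ (Subgroup.closure {τ₁, τ₂} : Subgroup (Equiv.Perm X)) := by
      show τ₁ ^ (k.toAdd.1.val) * τ₂ ^ (k.toAdd.2.val) ∈ _
      exact mul_mem
        (pow_mem (Subgroup.subset_closure (by simp)) _)
        (pow_mem (Subgroup.subset_closure (by simp)) _)
    exact ⟨⟨f k, hmem⟩, rfl⟩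

/-- **The counting identity underlying Proposition 3.10.** Let `X` be a finite set,
`τ₁, τ₂` commuting involutions of `X`, `τ₃ = τ₁ ∘ τ₂`, and `G` the (Klein four)
group generated by `τ₁, τ₂`. If `σ` is a bijection of `X` commuting with `τ₁` and
`τ₂`, then `#Fix(σ) + 2·#Fix(σ₄ on X/G) = Σᵢ #Fix(σᵢ on X/⟨τᵢ⟩)`. -/
theorem fixed_point_count_quotients
    {X : Type*} [Finite X] (τ₁ τ₂ σ : Equiv.Perm X)
    (h₁ : τ₁ * τ₁ = 1) (h₂ : τ₂ * τ₂ = 1)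
    (hcomm : τ₁ * τ₂ = τ₂ * τ₁)
    (hστ₁ : σ * τ₁ = τ₁ * σ) (hστ₂ : σ * τ₂ = τ₂ * σ) :
    Nat.card {x : X // σ x = x}
      + 2 * fixedClassCount
          (MulAction.orbitRel (Subgroup.closure {τ₁, τ₂} : Subgroup (Equiv.Perm X)) X) σ
    = fixedClassCount (MulAction.orbitRel (Subgroup.zpowers τ₁) X) σ
      + fixedClassCount (MulAction.orbitRel (Subgroup.zpowers τ₂) X) σ
      + fixedClassCount (MulAction.orbitRel (Subgroup.zpowers (τ₁ * τ₂)) X) σ := by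
  have h₃ : (τ₁ * τ₂) * (τ₁ * τ₂) = 1 := by
    rw [mul_assoc, ← mul_assoc τ₂ τ₁ τ₂, ← hcomm, mul_assoc τ₁ τ₂ τ₂, h₂, mul_one, h₁]
  have hστ₃ : σ * (τ₁ * τ₂) = (τ₁ * τ₂) * σ := by
    rw [← mul_assoc, hστ₁, mul_assoc, hστ₂, ← mul_assoc]
  have hA := klein_count τ₁ 1 σ h₁ (one_mul 1) (by rw [mul_one, one_mul]) hστ₁
    (by rw [mul_one, one_mul]) _ (hs_zpowers τ₁ h₁ _ _)
  have hB := klein_count τ₂ 1 σ h₂ (one_mul 1) (by rw [mul_one, one_mul]) hστ₂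
    (by rw [mul_one, one_mul]) _ (hs_zpowers τ₂ h₂ _ _)
  have hC := klein_count (τ₁ * τ₂) 1 σ h₃ (one_mul 1) (by rw [mul_one, one_mul]) hστ₃
    (by rw [mul_one, one_mul]) _ (hs_zpowers (τ₁ * τ₂) h₃ _ _)
  have hD := klein_count τ₁ τ₂ σ h₁ h₂ hcomm hστ₁ hστ₂ _ (hs_closure τ₁ τ₂ h₁ h₂ hcomm)
  simp only [Equiv.Perm.one_apply, mul_one] at hA hB hC hD
  set n0 := Nat.card {x : X // σ x = x} with hn0
  set n1 := Nat.card {x : X // σ x = τ₁ x} with hn1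
  set n2 := Nat.card {x : X // σ x = τ₂ x} with hn2
  set n3 := Nat.card {x : X // σ x = (τ₁ * τ₂) x} with hn3
  omega
end
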